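/- arXiv:2211.12463 — 6 statements merged into one kernel-verified Lean document; each statement's English description precedes it below -/
import Mathlib

section
/- Let F be the free ℂ-vector space with basis the Maya sets, with the operators ψ_m, ψ*_m (m ∈ ℤ) defined by ψ_m(S) = 0 if m ∈ S, ψ_m(S) = (−1)^{|{s ∈ S : s > m}|}(S ∪ {m}) if m ∉ S, ψ*_m(S) = 0 if m ∉ S, ψ*_m(S) = (−1)^{|{s ∈ S : s > m}|}(S \ {m}) if m ∈ S. Then F is irreducible under these operators: every ℂ-subspace W ⊆ F that is invariant under ψ_m and ψ*_m for all m ∈ ℤ and contains a nonzero vector equals F. -/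
/-- A Maya set: a subset of ℤ whose symmetric difference with ℤ_{<0} is finite. -/
def IsMayaSet (S : Set ℤ) : Prop := (symmDiff S {m : ℤ | m < 0}).Finite

/-- The type of Maya sets. -/
def Maya : Type := {S : Set ℤ // IsMayaSet S}

/-- The free ℂ-vector space with basis the Maya sets. -/
abbrev FockF : Type := Maya →₀ ℂ

lemma IsMayaSet.insert (m : ℤ) (S : Maya) : IsMayaSet (insert m S.1) := by
  have h := S.2
  apply Set.Finite.subset (h.union (Set.finite_singleton m))
  intro x hx
  simp only [Set.mem_union, Set.mem_singleton_iff, Set.mem_symmDiff, Set.mem_insert_iff,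
    Set.mem_setOf_eq] at *
  tauto

lemma IsMayaSet.diff (m : ℤ) (S : Maya) : IsMayaSet (S.1 \ {m}) := by
  have h := S.2
  apply Set.Finite.subset (h.union (Set.finite_singleton m))
  intro x hx
  simp only [Set.mem_union, Set.mem_singleton_iff, Set.mem_symmDiff, Set.mem_diff,
    Set.mem_setOf_eq] at *
  tauto

open Classical in
/-- The fermionic creation operator ψ_m. -/
noncomputable def psi (m : ℤ) : FockF →ₗ[ℂ] FockF :=
  Finsupp.lift FockF ℂ Maya fun S =>
    if m ∈ S.1 then 0
    else ((-1 : ℂ) ^ (S.1 ∩ {s : ℤ | m < s}).ncard) •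
      Finsupp.single (⟨insert m S.1, IsMayaSet.insert m S⟩ : Maya) (1 : ℂ)

open Classical in
/-- The fermionic annihilation operator ψ*_m. -/
noncomputable def psiStar (m : ℤ) : FockF →ₗ[ℂ] FockF :=
  Finsupp.lift FockF ℂ Maya fun S =>
    if m ∈ S.1 then
      ((-1 : ℂ) ^ (S.1 ∩ {s : ℤ | m < s}).ncard) •
        Finsupp.single (⟨S.1 \ {m}, IsMayaSet.diff m S⟩ : Maya) (1 : ℂ)
    else 0

open Classical

lemma psi_single (m : ℤ) (T : Maya) (c : ℂ) :
    psi m (Finsupp.single T c) =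
      if m ∈ T.1 then 0
      else (c * (-1 : ℂ) ^ (T.1 ∩ {s : ℤ | m < s}).ncard) •
        (Finsupp.single (⟨insert m T.1, IsMayaSet.insert m T⟩ : Maya) (1 : ℂ) : FockF) := by
  rw [psi, Finsupp.lift_apply, Finsupp.sum_single_index (by simp)]
  split_ifs with h
  · erw [if_pos h, smul_zero]
  · erw [if_neg h, smul_smul]
    rfl

lemma psiStar_single (m : ℤ) (T : Maya) (c : ℂ) :
    psiStar m (Finsupp.single T c) =
      if m ∈ T.1 then
        (c * (-1 : ℂ) ^ (T.1 ∩ {s : ℤ | m < s}).ncard) •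
          (Finsupp.single (⟨T.1 \ {m}, IsMayaSet.diff m T⟩ : Maya) (1 : ℂ) : FockF)
      else 0 := by
  rw [psiStar, Finsupp.lift_apply, Finsupp.sum_single_index (by simp)]
  split_ifs with h
  · erw [if_pos h, smul_smul]
    rfl
  · erw [if_neg h, smul_zero]

lemma inter_insert_eq (m : ℤ) (A : Set ℤ) :
    (insert m A) ∩ {s : ℤ | m < s} = A ∩ {s : ℤ | m < s} := by
  ext x
  simp only [Set.mem_inter_iff, Set.mem_insert_iff, Set.mem_setOf_eq]
  constructor
  · rintro ⟨h1 | h1, h2⟩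
    · exact absurd h2 (by omega)
    · exact ⟨h1, h2⟩
  · tauto

lemma inter_diff_eq (m : ℤ) (A : Set ℤ) :
    (A \ {m}) ∩ {s : ℤ | m < s} = A ∩ {s : ℤ | m < s} := by
  ext x
  simp only [Set.mem_inter_iff, Set.mem_diff, Set.mem_singleton_iff, Set.mem_setOf_eq]
  constructor
  · tauto
  · rintro ⟨h1, h2⟩; exact ⟨⟨h1, by omega⟩, h2⟩

lemma neg_one_pow_sq (k : ℕ) : ((-1 : ℂ) ^ k) * ((-1 : ℂ) ^ k) = 1 := by
  rw [← mul_pow]; norm_num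

lemma P_single (m : ℤ) (T : Maya) :
    psi m (psiStar m (Finsupp.single T (1 : ℂ))) =
      if m ∈ T.1 then Finsupp.single T (1 : ℂ) else 0 := by
  rw [psiStar_single]
  split_ifs with h
  · erw [map_smul, psi_single, if_neg (by simp)]
    have key : (⟨insert m ((⟨T.1 \ {m}, IsMayaSet.diff m T⟩ : Maya).1),
        IsMayaSet.insert m ⟨T.1 \ {m}, IsMayaSet.diff m T⟩⟩ : Maya) = T := by
      apply Subtype.ext
      show insert m (T.1 \ {m}) = T.1
      rw [Set.insert_diff_singleton]
      exact Set.insert_eq_self.mpr h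
    rw [key]
    have key2 : ((⟨T.1 \ {m}, IsMayaSet.diff m T⟩ : Maya).1 ∩ {s : ℤ | m < s}).ncard
        = (T.1 ∩ {s : ℤ | m < s}).ncard := by
      show ((T.1 \ {m}) ∩ {s : ℤ | m < s}).ncard = _
      rw [inter_diff_eq]
    rw [key2, smul_smul]
    simp [neg_one_pow_sq]
  · simp

lemma Q_single (m : ℤ) (T : Maya) :
    psiStar m (psi m (Finsupp.single T (1 : ℂ))) =
      if m ∈ T.1 then 0 else Finsupp.single T (1 : ℂ) := by
  rw [psi_single]
  split_ifs with h
  · simp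
  · erw [map_smul, psiStar_single, if_pos (by exact Set.mem_insert m T.1)]
    have key : (⟨((⟨insert m T.1, IsMayaSet.insert m T⟩ : Maya).1) \ {m},
        IsMayaSet.diff m ⟨insert m T.1, IsMayaSet.insert m T⟩⟩ : Maya) = T := by
      apply Subtype.ext
      show (insert m T.1) \ {m} = T.1
      rw [Set.insert_sdiff_self_of_notMem h]
    rw [key]
    have key2 : ((⟨insert m T.1, IsMayaSet.insert m T⟩ : Maya).1 ∩ {s : ℤ | m < s}).ncard
        = (T.1 ∩ {s : ℤ | m < s}).ncard := by
      show ((insert m T.1) ∩ {s : ℤ | m < s}).ncard = _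
      rw [inter_insert_eq]
    rw [key2, smul_smul]
    simp [neg_one_pow_sq]

/-- The projection-type operator tailored to a reference Maya set `S`. -/
noncomputable def opSM (S : Maya) (m : ℤ) : FockF →ₗ[ℂ] FockF :=
  if m ∈ S.1 then (psi m).comp (psiStar m) else (psiStar m).comp (psi m)

lemma opSM_mem (W : Submodule ℂ FockF)
    (hpsi : ∀ (m : ℤ) (v : FockF), v ∈ W → psi m v ∈ W)
    (hpsiStar : ∀ (m : ℤ) (v : FockF), v ∈ W → psiStar m v ∈ W)
    (S : Maya) (m : ℤ) (v : FockF) (hv : v ∈ W) : opSM S m v ∈ W := by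
  unfold opSM
  split_ifs
  · exact hpsi m _ (hpsiStar m v hv)
  · exact hpsiStar m _ (hpsi m v hv)

lemma opSM_single (S : Maya) (m : ℤ) (T : Maya) :
    opSM S m (Finsupp.single T (1 : ℂ)) =
      if (m ∈ S.1 ↔ m ∈ T.1) then Finsupp.single T (1 : ℂ) else 0 := by
  unfold opSM
  split_ifs with h1 h2 h2
  · rw [LinearMap.comp_apply, P_single, if_pos (h2.mp h1)]
  · rw [LinearMap.comp_apply, P_single, if_neg (fun hm => h2 ⟨fun _ => hm, fun _ => h1⟩)]
  · rw [LinearMap.comp_apply, Q_single, if_neg (fun hm => h1 (h2.mpr hm))]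
  · rw [LinearMap.comp_apply, Q_single,
      if_pos (by by_contra hm; exact h2 ⟨fun hs => absurd hs h1, fun ht => absurd ht hm⟩)]

lemma opSM_apply (S : Maya) (m : ℤ) (v : FockF) (T : Maya) :
    (opSM S m v) T = if (m ∈ S.1 ↔ m ∈ T.1) then v T else 0 := by
  conv_lhs => rw [← Finsupp.sum_single v, map_finsuppSum]
  rw [Finsupp.sum_apply]
  have hterm : ∀ (a : Maya) (b : ℂ), (opSM S m (Finsupp.single a b)) T =
      if (m ∈ S.1 ↔ m ∈ T.1) then (Finsupp.single a b) T else 0 := by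
    intro a b
    rw [show Finsupp.single a b = b • Finsupp.single a (1:ℂ) by
      rw [Finsupp.smul_single, smul_eq_mul, mul_one], map_smul, opSM_single]
    by_cases hab : a = T
    · subst hab; split_ifs <;> simp
    · have h0 : (Finsupp.single a (1:ℂ)) T = 0 := Finsupp.single_eq_of_ne' hab
      have h0' : (Finsupp.single a b) T = 0 := Finsupp.single_eq_of_ne' hab
      split_ifs <;> simp [h0, h0']
  have hcongr : (Finsupp.sum v fun a b => ((opSM S m) (Finsupp.single a b)) T) =
      Finsupp.sum v (fun a b => if (m ∈ S.1 ↔ m ∈ T.1) then (Finsupp.single a b) T else 0) :=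
    Finsupp.sum_congr (fun a _ => hterm a (v a))
  rw [hcongr]
  by_cases h : (m ∈ S.1 ↔ m ∈ T.1)
  · simp only [if_pos h]
    rw [← Finsupp.sum_apply, Finsupp.sum_single]
  · simp only [if_neg h]
    exact Finset.sum_const_zero

lemma single_of_erase_empty (v : FockF) (S : Maya) (h : v.support.erase S = ∅) :
    v = Finsupp.single S (v S) := by
  ext T
  by_cases hT : T = S
  · subst hT; simp
  · have hT2 : v T = 0 := by
      by_contra h0
      have : T ∈ v.support.erase S := Finset.mem_erase.mpr ⟨hT, Finsupp.mem_support_iff.mpr h0⟩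
      rw [h] at this
      exact absurd this (Finset.notMem_empty T)
    rw [hT2, Finsupp.single_eq_of_ne' (Ne.symm hT)]

lemma extract (W : Submodule ℂ FockF)
    (hpsi : ∀ (m : ℤ) (v : FockF), v ∈ W → psi m v ∈ W)
    (hpsiStar : ∀ (m : ℤ) (v : FockF), v ∈ W → psiStar m v ∈ W) :
    ∀ (n : ℕ) (v : FockF), v ∈ W → ∀ S : Maya, (v.support.erase S).card ≤ n →
      Finsupp.single S (v S) ∈ W := by
  intro n
  induction n with
  | zero =>
    intro v hv S hcard
    rw [← single_of_erase_empty v S (Finset.card_eq_zero.mp (Nat.le_zero.mp hcard))]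
    exact hv
  | succ n ih =>
    intro v hv S hcard
    by_cases hE : v.support.erase S = ∅
    · rw [← single_of_erase_empty v S hE]; exact hv
    · obtain ⟨T, hT⟩ := Finset.nonempty_iff_ne_empty.mpr hE
      have hTne : T ≠ S := (Finset.mem_erase.mp hT).1
      have hST : S.1 ≠ T.1 := fun h => hTne (Subtype.ext h.symm)
      obtain ⟨m, hm⟩ : ∃ m, ¬ (m ∈ S.1 ↔ m ∈ T.1) := by
        by_contra hC; push_neg at hC
        exact hST (Set.ext fun x => hC x)
      set w := opSM S m v with hw
      have hwW : w ∈ W := opSM_mem W hpsi hpsiStar S m v hv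
      have hwS : w S = v S := by rw [hw, opSM_apply, if_pos Iff.rfl]
      have hsub : w.support.erase S ⊆ (v.support.erase S).erase T := by
        intro a ha
        obtain ⟨haS, haSupp⟩ := Finset.mem_erase.mp ha
        have hwa : w a ≠ 0 := Finsupp.mem_support_iff.mp haSupp
        rw [hw, opSM_apply] at hwa
        refine Finset.mem_erase.mpr ⟨?_, Finset.mem_erase.mpr ⟨haS, ?_⟩⟩
        · rintro rfl
          rw [if_neg hm] at hwa
          exact hwa rfl
        · by_contra hns
          rw [Finsupp.notMem_support_iff.mp hns] at hwa
          simp at hwa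
      have hcard2 : (w.support.erase S).card ≤ n := by
        have h1 := Finset.card_le_card hsub
        have h2 : ((v.support.erase S).erase T).card = (v.support.erase S).card - 1 :=
          Finset.card_erase_of_mem hT
        have h3 : 0 < (v.support.erase S).card := Finset.card_pos.mpr ⟨T, hT⟩
        omega
      have := ih w hwW S hcard2
      rwa [hwS] at this

lemma reach (W : Submodule ℂ FockF)
    (hpsi : ∀ (m : ℤ) (v : FockF), v ∈ W → psi m v ∈ W)
    (hpsiStar : ∀ (m : ℤ) (v : FockF), v ∈ W → psiStar m v ∈ W) :
    ∀ (n : ℕ) (S : Maya), Finsupp.single S (1:ℂ) ∈ W →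
      ∀ T : Maya, (hfin : (symmDiff S.1 T.1).Finite) → (symmDiff S.1 T.1).ncard ≤ n →
        Finsupp.single T (1:ℂ) ∈ W := by
  intro n
  induction n with
  | zero =>
    intro S hS T hfin hcard
    have h0 : symmDiff S.1 T.1 = ∅ := (Set.ncard_eq_zero hfin).mp (Nat.le_zero.mp hcard)
    rwa [← Subtype.ext (symmDiff_eq_bot.mp h0 : S.1 = T.1)]
  | succ n ih =>
    intro S hS T hfin hcard
    by_cases hE : symmDiff S.1 T.1 = ∅
    · rwa [← Subtype.ext (symmDiff_eq_bot.mp hE : S.1 = T.1)]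
    · obtain ⟨m, hm⟩ := Set.nonempty_iff_ne_empty.mpr hE
      have hmem : m ∈ symmDiff S.1 T.1 := hm
      rw [Set.mem_symmDiff] at hm
      have hpos : 0 < (symmDiff S.1 T.1).ncard := (Set.ncard_pos hfin).mpr ⟨m, hmem⟩
      have hsc : ((-1:ℂ) ^ (S.1 ∩ {s : ℤ | m < s}).ncard) ≠ 0 := by
        apply pow_ne_zero; norm_num
      rcases hm with ⟨hmS, hmT⟩ | ⟨hmT, hmS⟩
      · -- m ∈ S, m ∉ T : remove m from S
        have h1 := hpsiStar m _ hS
        rw [psiStar_single, if_pos hmS] at h1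
        set S' : Maya := ⟨S.1 \ {m}, IsMayaSet.diff m S⟩ with hS'def
        have hS'W : Finsupp.single S' (1:ℂ) ∈ W := by
          have h2 := W.smul_mem (((-1:ℂ) ^ (S.1 ∩ {s : ℤ | m < s}).ncard))⁻¹ h1
          rwa [smul_smul, one_mul, inv_mul_cancel₀ hsc, one_smul] at h2
        have hsd : symmDiff S'.1 T.1 = symmDiff S.1 T.1 \ {m} := by
          show symmDiff (S.1 \ {m}) T.1 = _
          ext x
          by_cases hx : x = m
          · subst hx
            simp [Set.mem_symmDiff, hmS, hmT]
          · simp only [Set.mem_symmDiff, Set.mem_diff, Set.mem_singleton_iff, hx,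
              not_false_iff, and_true] <;> tauto
        have hfin' : (symmDiff S'.1 T.1).Finite := by
          rw [hsd]; exact hfin.subset Set.diff_subset
        apply ih S' hS'W T hfin'
        rw [hsd, Set.ncard_diff_singleton_of_mem hmem]
        omega
      · -- m ∈ T, m ∉ S : insert m into S
        have h1 := hpsi m _ hS
        rw [psi_single, if_neg hmS] at h1
        set S' : Maya := ⟨insert m S.1, IsMayaSet.insert m S⟩ with hS'def
        have hS'W : Finsupp.single S' (1:ℂ) ∈ W := by
          have h2 := W.smul_mem ((1 : ℂ) * ((-1:ℂ) ^ (S.1 ∩ {s : ℤ | m < s}).ncard))⁻¹ h1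
          rwa [smul_smul, inv_mul_cancel₀ (by simpa using hsc), one_smul] at h2
        have hsd : symmDiff S'.1 T.1 = symmDiff S.1 T.1 \ {m} := by
          show symmDiff (insert m S.1) T.1 = _
          ext x
          by_cases hx : x = m
          · subst hx
            simp [Set.mem_symmDiff, hmS, hmT]
          · simp only [Set.mem_symmDiff, Set.mem_diff, Set.mem_singleton_iff, hx,
              Set.mem_insert_iff, not_false_iff, and_true, false_or] <;> tauto
        have hfin' : (symmDiff S'.1 T.1).Finite := by
          rw [hsd]; exact hfin.subset Set.diff_subset
        apply ih S' hS'W T hfin'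
        rw [hsd, Set.ncard_diff_singleton_of_mem hmem]
        omega

open Classical in
theorem stmt3 (W : Submodule ℂ FockF)
    (hpsi : ∀ (m : ℤ) (v : FockF), v ∈ W → psi m v ∈ W)
    (hpsiStar : ∀ (m : ℤ) (v : FockF), v ∈ W → psiStar m v ∈ W)
    (hne : ∃ v ∈ W, v ≠ 0) :
    W = ⊤ := by
  obtain ⟨v, hvW, hv0⟩ := hne
  obtain ⟨S, hS⟩ : ∃ S, v S ≠ 0 := by
    by_contra h; push_neg at h
    exact hv0 (Finsupp.ext h)
  have h1 : Finsupp.single S (v S) ∈ W :=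
    extract W hpsi hpsiStar (v.support.erase S).card v hvW S le_rfl
  have h2 : Finsupp.single S (1:ℂ) ∈ W := by
    have h3 := W.smul_mem (v S)⁻¹ h1
    rwa [Finsupp.smul_single, smul_eq_mul, inv_mul_cancel₀ hS] at h3
  have hall : ∀ T : Maya, Finsupp.single T (1:ℂ) ∈ W := by
    intro T
    have hfin : (symmDiff S.1 T.1).Finite := by
      apply Set.Finite.subset (S.2.union T.2)
      intro x hx
      simp only [Set.mem_union, Set.mem_symmDiff, Set.mem_setOf_eq] at *
      tauto
    exact reach W hpsi hpsiStar _ S h2 T hfin le_rfl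
  rw [Submodule.eq_top_iff']
  intro v'
  refine Finsupp.induction v' W.zero_mem (fun a b f _ _ ih => ?_)
  refine W.add_mem ?_ ih
  have h4 := W.smul_mem b (hall a)
  rwa [Finsupp.smul_single, smul_eq_mul, mul_one] at h4
end

section
/- The family of character polynomials {χ_λ}, indexed by all partitions λ, is a ℂ-basis of the polynomial ring ℂ[x_1, x_2, x_3, …]: the χ_λ are linearly independent over ℂ and every polynomial in ℂ[x_1, x_2, …] is a finite ℂ-linear combination of character polynomials. -/
/-- A partition: a weakly decreasing sequence of natural numbers, eventually zero.
`part i` is the (i+1)-st part, i.e. λ_{i+1}. -/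
structure YPartition where
  part : ℕ → ℕ
  antitone : ∀ i j : ℕ, i ≤ j → part j ≤ part i
  eventually_zero : ∃ N : ℕ, ∀ i : ℕ, N ≤ i → part i = 0

/-- The boxes of the Young diagram of λ: `(i, j)` is the box in row i+1, column j+1. -/
def cells (lam : YPartition) : Set (ℕ × ℕ) := {b : ℕ × ℕ | b.2 < lam.part b.1}

/-- A column-strict filling of λ: positive integers assigned to boxes, weakly increasing
along rows and strictly increasing along columns (and normalized to 1 off the diagram). -/
structure CSFilling (lam : YPartition) where
  t : ℕ × ℕ → ℕ+
  t_default : ∀ b : ℕ × ℕ, b ∉ cells lam → t b = 1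
  row_weak : ∀ i j : ℕ, (i, j + 1) ∈ cells lam → t (i, j) ≤ t (i, j + 1)
  col_strict : ∀ i j : ℕ, (i + 1, j) ∈ cells lam → t (i, j) < t (i + 1, j)

/-- The Schur function s_λ, as a formal power series in variables y_1, y_2, …:
the coefficient of the monomial y^α is the number of column-strict fillings of λ
with content α. -/
noncomputable def schur (lam : YPartition) : MvPowerSeries ℕ+ ℂ :=
  fun α => (Nat.card
    {f : CSFilling lam // ∀ v : ℕ+, (cells lam ∩ {b : ℕ × ℕ | f.t b = v}).ncard = α v} : ℂ)

open Classical in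
/-- The power sum p_k = y_1^k + y_2^k + ⋯ as a formal power series. -/
noncomputable def powerSum (k : ℕ) : MvPowerSeries ℕ+ ℂ :=
  fun α => if ∃ i : ℕ+, α = Finsupp.single i k then 1 else 0

namespace Aux

noncomputable def nb (lam : YPartition) : ℕ := lam.eventually_zero.choose

lemma nb_spec (lam : YPartition) : ∀ i, nb lam ≤ i → lam.part i = 0 :=
  lam.eventually_zero.choose_spec

lemma part_ne_lt (lam : YPartition) {i : ℕ} (h : lam.part i ≠ 0) : i < nb lam := by
  by_contra hc
  exact h (nb_spec lam i (le_of_not_gt hc))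

lemma partition_ext {lam mu : YPartition} (h : lam.part = mu.part) : lam = mu := by
  cases lam; cases mu; simp_all

lemma cells_finite (lam : YPartition) : (cells lam).Finite := by
  apply Set.Finite.subset (Set.finite_Iio (nb lam) |>.prod (Set.finite_Iio (lam.part 0)))
  rintro ⟨i, j⟩ hb
  have hb' : j < lam.part i := hb
  exact ⟨part_ne_lt lam (i := i) (by omega), lt_of_lt_of_le hb' (lam.antitone 0 i (Nat.zero_le i))⟩

def rowsum (lam : YPartition) (r : ℕ) : ℕ := ∑ i ∈ Finset.range r, lam.part i

noncomputable def size (lam : YPartition) : ℕ := (cells lam).ncard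

/-- the set of cells in row i, as an ncard computation -/
lemma ncard_row (lam : YPartition) (i : ℕ) :
    (cells lam ∩ {b : ℕ × ℕ | b.1 = i}).ncard = lam.part i := by
  have : cells lam ∩ {b : ℕ × ℕ | b.1 = i}
      = ↑(({i} : Finset ℕ) ×ˢ Finset.range (lam.part i)) := by
    ext ⟨a, b⟩
    simp only [Set.mem_inter_iff, cells, Set.mem_setOf_eq, Finset.coe_product,
      Set.mem_prod, Finset.coe_singleton, Set.mem_singleton_iff, Finset.coe_range, Set.mem_Iio]
    constructor
    · rintro ⟨h1, rfl⟩; exact ⟨rfl, h1⟩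
    · rintro ⟨rfl, h⟩; exact ⟨h, rfl⟩
  rw [this, Set.ncard_coe_finset]
  simp

lemma ncard_rows_lt (lam : YPartition) (r : ℕ) :
    (cells lam ∩ {b : ℕ × ℕ | b.1 < r}).ncard = rowsum lam r := by
  induction r with
  | zero => simp [rowsum]
  | succ r ih =>
    have hsplit : cells lam ∩ {b : ℕ × ℕ | b.1 < r + 1}
        = (cells lam ∩ {b : ℕ × ℕ | b.1 < r}) ∪ (cells lam ∩ {b : ℕ × ℕ | b.1 = r}) := by
      ext b
      simp only [Set.mem_inter_iff, Set.mem_union, Set.mem_setOf_eq]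
      by_cases hb : b ∈ cells lam <;> simp [hb] <;> omega
    rw [hsplit, Set.ncard_union_eq ?hd ((cells_finite lam).subset Set.inter_subset_left)
      ((cells_finite lam).subset Set.inter_subset_left), ih, ncard_row, rowsum, rowsum,
      Finset.sum_range_succ]
    case hd =>
      rw [Set.disjoint_left]
      rintro b ⟨-, h1⟩ ⟨-, h2⟩
      simp only [Set.mem_setOf_eq] at h1 h2
      omega

lemma rows_lt_eq_cells (lam : YPartition) {r : ℕ} (hr : nb lam ≤ r) :
    cells lam ∩ {b : ℕ × ℕ | b.1 < r} = cells lam := by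
  apply Set.inter_eq_left.mpr
  intro b hb
  simp only [cells, Set.mem_setOf_eq] at *
  exact lt_of_lt_of_le (part_ne_lt lam (by omega)) hr

lemma rowsum_eq_size (lam : YPartition) {r : ℕ} (hr : nb lam ≤ r) :
    rowsum lam r = size lam := by
  rw [← ncard_rows_lt, rows_lt_eq_cells lam hr, size]

lemma row_lt_t {lam : YPartition} (f : CSFilling lam) :
    ∀ i j, (i, j) ∈ cells lam → i < (f.t (i, j) : ℕ) := by
  intro i
  induction i with
  | zero => intro j _; exact (f.t (0, j)).pos
  | succ i ih =>
    intro j hb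
    have hprev : (i, j) ∈ cells lam := by
      simp only [cells, Set.mem_setOf_eq] at *
      exact lt_of_lt_of_le hb (lam.antitone i (i+1) (by omega))
    have := f.col_strict i j hb
    have := ih j hprev
    have : (f.t (i, j) : ℕ) < (f.t (i+1, j) : ℕ) := by exact_mod_cast f.col_strict i j hb
    omega

end Aux

namespace Aux

def pk (i : ℕ) : ℕ+ := ⟨i + 1, i.succ_pos⟩

lemma pk_coe (i : ℕ) : (pk i : ℕ) = i + 1 := rfl

lemma pk_inj : Function.Injective pk := by
  intro a b h
  have := congrArg (fun v : ℕ+ => (v : ℕ)) h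
  simpa [pk_coe] using this

lemma pk_sub_one (v : ℕ+) : pk ((v : ℕ) - 1) = v := by
  have := v.pos
  apply PNat.coe_injective
  rw [pk_coe]
  omega

noncomputable def content (lam : YPartition) : ℕ+ →₀ ℕ :=
  Finsupp.onFinset ((Finset.range (nb lam)).image pk)
    (fun v => lam.part ((v : ℕ) - 1))
    (by
      intro v hv
      rw [Finset.mem_image]
      refine ⟨(v : ℕ) - 1, ?_, pk_sub_one v⟩
      rw [Finset.mem_range]
      exact part_ne_lt lam hv)

lemma content_apply (lam : YPartition) (v : ℕ+) : content lam v = lam.part ((v : ℕ) - 1) := rfl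

lemma content_pk (lam : YPartition) (i : ℕ) : content lam (pk i) = lam.part i := by
  simp [content_apply, pk_coe]

/-- fibers of the filling values, counted up to value r -/
lemma ncard_le_val {mu : YPartition} (f : CSFilling mu) (α : ℕ+ →₀ ℕ)
    (hf : ∀ v : ℕ+, (cells mu ∩ {b : ℕ × ℕ | f.t b = v}).ncard = α v) (r : ℕ) :
    (cells mu ∩ {b : ℕ × ℕ | (f.t b : ℕ) ≤ r}).ncard = ∑ i ∈ Finset.range r, α (pk i) := by
  induction r with
  | zero =>
    have : cells mu ∩ {b : ℕ × ℕ | (f.t b : ℕ) ≤ 0} = ∅ := by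
      ext b
      simp only [Set.mem_inter_iff, Set.mem_setOf_eq, Set.mem_empty_iff_false, iff_false]
      rintro ⟨-, h⟩
      exact absurd h (by have := (f.t b).pos; omega)
    simp [this]
  | succ r ih =>
    have hsplit : cells mu ∩ {b : ℕ × ℕ | (f.t b : ℕ) ≤ r + 1}
        = (cells mu ∩ {b : ℕ × ℕ | (f.t b : ℕ) ≤ r})
          ∪ (cells mu ∩ {b : ℕ × ℕ | f.t b = pk r}) := by
      ext b
      simp only [Set.mem_inter_iff, Set.mem_union, Set.mem_setOf_eq]
      have : f.t b = pk r ↔ (f.t b : ℕ) = r + 1 := by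
        constructor
        · intro h; rw [h, pk_coe]
        · intro h; apply PNat.coe_injective; rw [pk_coe]; exact h
      rw [this]
      by_cases hb : b ∈ cells mu <;> simp [hb] <;> omega
    rw [hsplit, Set.ncard_union_eq ?hd ((cells_finite mu).subset Set.inter_subset_left)
        ((cells_finite mu).subset Set.inter_subset_left), ih, hf, Finset.sum_range_succ]
    case hd =>
      rw [Set.disjoint_left]
      rintro b ⟨-, h1⟩ ⟨-, h2⟩
      simp only [Set.mem_setOf_eq] at h1 h2
      rw [h2, pk_coe] at h1
      omega

/-- every value appearing in the filling has nonzero α -/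
lemma val_mem_support {mu : YPartition} (f : CSFilling mu) (α : ℕ+ →₀ ℕ)
    (hf : ∀ v : ℕ+, (cells mu ∩ {b : ℕ × ℕ | f.t b = v}).ncard = α v)
    {b : ℕ × ℕ} (hb : b ∈ cells mu) : α (f.t b) ≠ 0 := by
  rw [← hf (f.t b)]
  have hne : (cells mu ∩ {c : ℕ × ℕ | f.t c = f.t b}).Nonempty := ⟨b, hb, rfl⟩
  rw [← Set.ncard_pos ((cells_finite mu).subset Set.inter_subset_left)] at hne
  omega

/-- if all values are ≤ r then the cells of value ≤ r are everything -/
lemma le_val_eq_cells {mu : YPartition} (f : CSFilling mu) (α : ℕ+ →₀ ℕ)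
    (hf : ∀ v : ℕ+, (cells mu ∩ {b : ℕ × ℕ | f.t b = v}).ncard = α v)
    {r : ℕ} (hr : ∀ v ∈ α.support, (v : ℕ) ≤ r) :
    cells mu ∩ {b : ℕ × ℕ | (f.t b : ℕ) ≤ r} = cells mu := by
  apply Set.inter_eq_left.mpr
  intro b hb
  exact hr _ (Finsupp.mem_support_iff.mpr (val_mem_support f α hf hb))

/-- total count: the degree of α equals the size of mu -/
lemma deg_eq_size {mu : YPartition} (f : CSFilling mu) (α : ℕ+ →₀ ℕ)
    (hf : ∀ v : ℕ+, (cells mu ∩ {b : ℕ × ℕ | f.t b = v}).ncard = α v) :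
    (α.sum fun _ m => m) = size mu := by
  set M := α.support.sup (fun v : ℕ+ => (v : ℕ)) with hM
  have hsup : ∀ v ∈ α.support, (v : ℕ) ≤ M := fun v hv => Finset.le_sup hv
  have h1 : (cells mu ∩ {b : ℕ × ℕ | (f.t b : ℕ) ≤ M}).ncard = ∑ i ∈ Finset.range M, α (pk i) :=
    ncard_le_val f α hf M
  rw [le_val_eq_cells f α hf hsup] at h1
  rw [size, h1]
  rw [Finsupp.sum_of_support_subset α (s := (Finset.range M).image pk) ?hsub _ (fun _ _ => rfl)]
  · rw [Finset.sum_image (fun a _ b _ h => pk_inj h)]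
  case hsub =>
    intro v hv
    rw [Finset.mem_image]
    refine ⟨(v : ℕ) - 1, ?_, pk_sub_one v⟩
    rw [Finset.mem_range]
    have := hsup v hv
    have := v.pos
    omega

/-- Dominance: if a filling of mu with content lam exists -/
lemma dominance {mu lam : YPartition} (f : CSFilling mu)
    (hf : ∀ v : ℕ+, (cells mu ∩ {b : ℕ × ℕ | f.t b = v}).ncard = content lam v) :
    size mu = size lam ∧ ∀ r, rowsum lam r ≤ rowsum mu r := by
  have hcount : ∀ r, (cells mu ∩ {b : ℕ × ℕ | (f.t b : ℕ) ≤ r}).ncard = rowsum lam r := by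
    intro r
    rw [ncard_le_val f _ hf r]
    apply Finset.sum_congr rfl
    intro i _
    exact content_pk lam i
  constructor
  · have hsup : ∀ v ∈ (content lam).support, (v : ℕ) ≤ nb lam := by
      intro v hv
      have := part_ne_lt lam (Finsupp.mem_support_iff.mp hv)
      have := v.pos
      omega
    have h1 := hcount (nb lam)
    rw [le_val_eq_cells f _ hf hsup] at h1
    exact h1.trans (rowsum_eq_size lam le_rfl)
  · intro r
    rw [← hcount r, ← ncard_rows_lt mu r]
    apply Set.ncard_le_ncard ?_ ((cells_finite mu).subset Set.inter_subset_left)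
    rintro ⟨i, j⟩ ⟨hb, hv⟩
    refine ⟨hb, ?_⟩
    simp only [Set.mem_setOf_eq] at hv ⊢
    have := row_lt_t f i j hb
    omega

end Aux

namespace Aux

noncomputable def superstandard (lam : YPartition) : CSFilling lam where
  t := fun b => if b.2 < lam.part b.1 then pk b.1 else 1
  t_default := fun b hb => if_neg hb
  row_weak := by
    intro i j h
    have h' : j + 1 < lam.part i := h
    have h'' : j < lam.part i := by omega
    simp only [h', h'', if_pos]
    exact le_rfl
  col_strict := by
    intro i j h
    have h' : j < lam.part (i + 1) := h
    have h'' : j < lam.part i := lt_of_lt_of_le h' (lam.antitone i (i+1) (by omega))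
    simp only [h', h'', if_pos]
    have : (pk i : ℕ) < (pk (i+1) : ℕ) := by simp [pk_coe]
    exact_mod_cast this

lemma superstandard_t {lam : YPartition} {b : ℕ × ℕ} (hb : b ∈ cells lam) :
    (superstandard lam).t b = pk b.1 := if_pos hb

lemma superstandard_content (lam : YPartition) (v : ℕ+) :
    (cells lam ∩ {b : ℕ × ℕ | (superstandard lam).t b = v}).ncard = content lam v := by
  have : cells lam ∩ {b : ℕ × ℕ | (superstandard lam).t b = v}
      = cells lam ∩ {b : ℕ × ℕ | b.1 = (v : ℕ) - 1} := by
    ext b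
    simp only [Set.mem_inter_iff, Set.mem_setOf_eq, and_congr_right_iff]
    intro hb
    rw [superstandard_t hb]
    constructor
    · intro h; rw [← h, pk_coe]; omega
    · intro h; rw [h, pk_sub_one]
  rw [this, ncard_row, content_apply]

lemma filling_unique {lam : YPartition} (f : CSFilling lam)
    (hf : ∀ v : ℕ+, (cells lam ∩ {b : ℕ × ℕ | f.t b = v}).ncard = content lam v)
    {b : ℕ × ℕ} (hb : b ∈ cells lam) : f.t b = pk b.1 := by
  have hcount : ∀ r, (cells lam ∩ {b : ℕ × ℕ | (f.t b : ℕ) ≤ r}).ncard = rowsum lam r := by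
    intro r
    rw [ncard_le_val f _ hf r]
    exact Finset.sum_congr rfl fun i _ => content_pk lam i
  have key : ∀ r, cells lam ∩ {b : ℕ × ℕ | (f.t b : ℕ) ≤ r}
      = cells lam ∩ {b : ℕ × ℕ | b.1 < r} := by
    intro r
    apply Set.eq_of_subset_of_ncard_le
    · rintro ⟨i, j⟩ ⟨hc, hv⟩
      refine ⟨hc, ?_⟩
      simp only [Set.mem_setOf_eq] at hv ⊢
      have := row_lt_t f i j hc
      omega
    · rw [hcount, ncard_rows_lt]
    · exact (cells_finite lam).subset Set.inter_subset_left
  have hmem : b ∈ cells lam ∩ {c : ℕ × ℕ | c.1 < b.1 + 1} := ⟨hb, by simp⟩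
  rw [← key (b.1 + 1)] at hmem
  have h1 : (f.t b : ℕ) ≤ b.1 + 1 := hmem.2
  have h2 := row_lt_t f b.1 b.2 (by rwa [Prod.mk.eta])
  rw [Prod.mk.eta] at h2
  apply PNat.coe_injective
  rw [pk_coe]
  omega

lemma csfilling_ext {lam : YPartition} (f g : CSFilling lam) (h : f.t = g.t) : f = g := by
  cases f; cases g; simp_all

lemma schur_coeff_self (lam : YPartition) : schur lam (content lam) = 1 := by
  rw [schur]
  norm_cast
  rw [Nat.card_eq_one_iff_unique]
  constructor
  · constructor
    rintro ⟨f, hf⟩ ⟨g, hg⟩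
    refine Subtype.ext (csfilling_ext f g (funext fun b => ?_))
    by_cases hb : b ∈ cells lam
    · rw [filling_unique f hf hb, filling_unique g hg hb]
    · rw [f.t_default b hb, g.t_default b hb]
  · exact ⟨⟨superstandard lam, superstandard_content lam⟩⟩

lemma schur_coeff_dom {mu lam : YPartition} (h : schur mu (content lam) ≠ 0) :
    size mu = size lam ∧ ∀ r, rowsum lam r ≤ rowsum mu r := by
  rw [schur] at h
  norm_cast at h
  obtain ⟨⟨f, hf⟩⟩ := (Nat.card_ne_zero.mp h).1
  exact dominance f hf

lemma schur_homog (lam : YPartition) (α : ℕ+ →₀ ℕ) (h : schur lam α ≠ 0) :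
    (α.sum fun _ m => m) = size lam := by
  rw [schur] at h
  norm_cast at h
  obtain ⟨⟨f, hf⟩⟩ := (Nat.card_ne_zero.mp h).1
  exact deg_eq_size f α hf

lemma schur_linearIndependent : LinearIndependent ℂ schur := by
  rw [linearIndependent_iff]
  intro l hl
  by_contra hne
  have hsupp : l.support.Nonempty := Finsupp.support_nonempty_iff.mpr hne
  set R := l.support.sup nb with hR
  set score : YPartition → ℕ := fun nu => ∑ r ∈ Finset.range (R + 1), rowsum nu r with hscore
  obtain ⟨lam, hlam, hmax⟩ := Finset.exists_max_image l.support score hsupp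
  -- all other support elements have zero coefficient at content lam
  have hzero : ∀ mu ∈ l.support, mu ≠ lam → schur mu (content lam) = 0 := by
    intro mu hmu hne'
    by_contra hs
    obtain ⟨hsize, hdom⟩ := schur_coeff_dom hs
    -- find least differing index
    have hdiff : ∃ i, lam.part i ≠ mu.part i := by
      by_contra hc
      push_neg at hc
      exact hne' (partition_ext (funext fun i => hc i)).symm
    set i0 := Nat.find hdiff with hi0
    have hd0 : lam.part i0 ≠ mu.part i0 := Nat.find_spec hdiff
    have hbefore : ∀ i < i0, lam.part i = mu.part i := fun i hi => by
      have := Nat.find_min hdiff hi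
      omega
    have hreq : ∀ r ≤ i0, rowsum lam r = rowsum mu r := by
      intro r hr
      exact Finset.sum_congr rfl fun i hi => hbefore i (by
        rw [Finset.mem_range] at hi; omega)
    have hlt : lam.part i0 < mu.part i0 := by
      rcases Nat.lt_or_ge (lam.part i0) (mu.part i0) with h | h
      · exact h
      · exfalso
        have h1 := hdom (i0 + 1)
        rw [rowsum, rowsum, Finset.sum_range_succ, Finset.sum_range_succ,
          ← rowsum, ← rowsum, hreq i0 le_rfl] at h1
        omega
    have hstrict : rowsum lam (i0 + 1) < rowsum mu (i0 + 1) := by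
      rw [rowsum, rowsum, Finset.sum_range_succ, Finset.sum_range_succ,
        ← rowsum, ← rowsum, hreq i0 le_rfl]
      omega
    have hi0R : i0 + 1 < R + 1 := by
      have : i0 < nb lam ∨ i0 < nb mu := by
        rcases Nat.eq_zero_or_pos (lam.part i0) with h | h
        · right; exact part_ne_lt mu (by omega)
        · left; exact part_ne_lt lam (by omega)
      have h1 : nb lam ≤ R := Finset.le_sup hlam
      have h2 : nb mu ≤ R := Finset.le_sup hmu
      omega
    have : score lam < score mu := by
      apply Finset.sum_lt_sum
      · intro r _; exact hdom r
      · exact ⟨i0 + 1, Finset.mem_range.mpr hi0R, hstrict⟩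
    have := hmax mu hmu
    omega
  -- extract coefficient at content lam
  have hcoeff := congrArg (MvPowerSeries.coeff (content lam)) hl
  rw [map_zero, Finsupp.linearCombination_apply, map_finsuppSum] at hcoeff
  simp only [map_smul, smul_eq_mul] at hcoeff
  rw [Finsupp.sum] at hcoeff
  rw [Finset.sum_eq_single lam (fun mu hmu hne' => by
        rw [show (MvPowerSeries.coeff (content lam)) (schur mu) = schur mu (content lam)
            from rfl, hzero mu hmu hne', mul_zero])
      (fun h => by rw [Finsupp.notMem_support_iff.mp h, zero_mul])] at hcoeff
  rw [show (MvPowerSeries.coeff (content lam)) (schur lam) = schur lam (content lam) from rfl,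
    schur_coeff_self, mul_one] at hcoeff
  exact Finsupp.mem_support_iff.mp hlam hcoeff

end Aux

namespace Aux

open MvPolynomial

noncomputable def phi : MvPolynomial ℕ+ ℂ →ₐ[ℂ] MvPowerSeries ℕ+ ℂ :=
  aeval (fun k : ℕ+ => (((k : ℕ) : ℂ))⁻¹ • powerSum (k : ℕ))

def deg (α : ℕ+ →₀ ℕ) : ℕ := α.sum fun _ m => m

lemma deg_add (α β : ℕ+ →₀ ℕ) : deg (α + β) = deg α + deg β := by
  classical
  exact Finsupp.sum_add_index (fun _ _ => rfl) (fun _ _ _ _ => rfl)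

def IsHomog (n : ℕ) (F : MvPowerSeries ℕ+ ℂ) : Prop := ∀ α, F α ≠ 0 → deg α = n

lemma IsHomog.mul {m n : ℕ} {F G : MvPowerSeries ℕ+ ℂ} (hF : IsHomog m F) (hG : IsHomog n G) :
    IsHomog (m + n) (F * G) := by
  classical
  intro α h
  have h' : MvPowerSeries.coeff α (F * G) ≠ 0 := h
  rw [MvPowerSeries.coeff_mul] at h'
  obtain ⟨p, hp, hne⟩ := Finset.exists_ne_zero_of_sum_ne_zero h'
  have h1 : MvPowerSeries.coeff p.1 F ≠ 0 := fun hz => hne (by rw [hz, zero_mul])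
  have h2 : MvPowerSeries.coeff p.2 G ≠ 0 := fun hz => hne (by rw [hz, mul_zero])
  rw [← Finset.HasAntidiagonal.mem_antidiagonal.mp hp, deg_add, hF p.1 h1, hG p.2 h2]

lemma IsHomog.smul {n : ℕ} (c : ℂ) {F : MvPowerSeries ℕ+ ℂ} (hF : IsHomog n F) :
    IsHomog n (c • F) := by
  intro α h
  apply hF α
  intro hz
  exact h (by show c * F α = 0; rw [hz, mul_zero])

lemma isHomog_one : IsHomog 0 1 := by
  classical
  intro α h
  have : α = 0 := by
    by_contra hc
    exact h (by
      rw [show (1 : MvPowerSeries ℕ+ ℂ) α = MvPowerSeries.coeff α 1 from rfl,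
        MvPowerSeries.coeff_one, if_neg hc])
  rw [this]
  rfl

lemma isHomog_powerSum (k : ℕ) : IsHomog k (powerSum k) := by
  classical
  intro α h
  rw [powerSum] at h
  split at h
  · next hex =>
      obtain ⟨i, rfl⟩ := hex
      simp [deg, Finsupp.sum_single_index]
  · exact absurd rfl h

lemma IsHomog.pow {n : ℕ} {F : MvPowerSeries ℕ+ ℂ} (hF : IsHomog n F) (e : ℕ) :
    IsHomog (e * n) (F ^ e) := by
  induction e with
  | zero => simpa using isHomog_one
  | succ e ih =>
    have h1 := ih.mul hF
    have h2 : (e + 1) * n = e * n + n := by ring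
    rw [pow_succ, h2]
    exact h1

lemma isHomog_prod (s : Finset ℕ+) (g : ℕ+ → MvPowerSeries ℕ+ ℂ) (d : ℕ+ → ℕ)
    (h : ∀ k ∈ s, IsHomog (d k) (g k)) :
    IsHomog (∑ k ∈ s, d k) (∏ k ∈ s, g k) := by
  classical
  induction s using Finset.induction_on with
  | empty => simpa using isHomog_one
  | insert a s' hk ih =>
    next =>
      rw [Finset.sum_insert hk, Finset.prod_insert hk]
      exact (h a (Finset.mem_insert_self a s')).mul
        (ih fun k hks => h k (Finset.mem_insert_of_mem hks))

def w : ℕ+ → ℕ := fun k => (k : ℕ)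

lemma isHomog_phi_monomial (β : ℕ+ →₀ ℕ) (c : ℂ) :
    IsHomog (Finsupp.weight w β) (phi (monomial β c)) := by
  rw [phi, aeval_monomial]
  have halg : IsHomog 0 ((algebraMap ℂ (MvPowerSeries ℕ+ ℂ)) c) := by
    rw [Algebra.algebraMap_eq_smul_one]
    exact isHomog_one.smul c
  have hprod : IsHomog (Finsupp.weight w β)
      (β.prod fun k e => ((((k : ℕ) : ℂ))⁻¹ • powerSum (k : ℕ)) ^ e) := by
    rw [Finsupp.weight_apply, Finsupp.sum, Finsupp.prod]
    exact isHomog_prod _ _ _ fun k _ => ((isHomog_powerSum (k : ℕ)).smul _).pow (β k)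
  have := halg.mul hprod
  rwa [zero_add] at this

noncomputable def proj (n : ℕ) : MvPowerSeries ℕ+ ℂ →ₗ[ℂ] MvPowerSeries ℕ+ ℂ where
  toFun F := fun α => if deg α = n then F α else 0
  map_add' F G := funext fun α => by
    show (if deg α = n then (F + G) α else 0)
        = (if deg α = n then F α else 0) + (if deg α = n then G α else 0)
    by_cases h : deg α = n
    · rw [if_pos h, if_pos h, if_pos h]; rfl
    · rw [if_neg h, if_neg h, if_neg h, add_zero]
  map_smul' c F := funext fun α => by
    show (if deg α = n then (c • F) α else 0) = c • (if deg α = n then F α else 0)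
    by_cases h : deg α = n
    · rw [if_pos h, if_pos h]; rfl
    · rw [if_neg h, if_neg h, smul_zero]

lemma proj_apply (n : ℕ) (F : MvPowerSeries ℕ+ ℂ) (α : ℕ+ →₀ ℕ) :
    proj n F α = if deg α = n then F α else 0 := rfl

lemma proj_of_homog {n : ℕ} {F : MvPowerSeries ℕ+ ℂ} (h : IsHomog n F) : proj n F = F := by
  funext α
  rw [proj_apply]
  split
  · rfl
  · next hne =>
      by_contra hc
      exact hne (h α fun hz => hc hz.symm)

lemma proj_of_homog_ne {m n : ℕ} {F : MvPowerSeries ℕ+ ℂ} (h : IsHomog m F) (hne : m ≠ n) :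
    proj n F = 0 := by
  funext α
  rw [proj_apply]
  split
  · next heq =>
      by_contra hc
      exact hne ((h α fun hz => hc (by rw [hz]; rfl)).symm.trans heq)
  · rfl

lemma whc_monomial (n : ℕ) (β : ℕ+ →₀ ℕ) (c : ℂ) :
    weightedHomogeneousComponent w n (monomial β c)
      = if Finsupp.weight w β = n then monomial β c else 0 := by
  classical
  ext d
  rw [coeff_weightedHomogeneousComponent]
  by_cases hβd : β = d
  · subst hβd
    by_cases h : Finsupp.weight w β = n <;> simp [h, coeff_monomial]
  · by_cases h : Finsupp.weight w β = n <;>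
      by_cases h2 : Finsupp.weight w d = n <;>
      simp [h, h2, coeff_monomial, hβd]

lemma proj_phi (n : ℕ) (q : MvPolynomial ℕ+ ℂ) :
    proj n (phi q) = phi (weightedHomogeneousComponent w n q) := by
  conv_lhs => rw [q.as_sum]
  conv_rhs => rw [q.as_sum]
  rw [map_sum, map_sum, map_sum, map_sum]
  apply Finset.sum_congr rfl
  intro β _
  rw [whc_monomial]
  by_cases h : Finsupp.weight w β = n
  · rw [if_pos h, ← h, proj_of_homog (isHomog_phi_monomial β _)]
  · rw [if_neg h, map_zero, proj_of_homog_ne (isHomog_phi_monomial β _) h]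

end Aux

namespace Aux

lemma rowsum_eq_size' (lam : YPartition) {r : ℕ} (hr : ∀ i, r ≤ i → lam.part i = 0) :
    rowsum lam r = size lam := by
  have hc : cells lam ∩ {b : ℕ × ℕ | b.1 < r} = cells lam := by
    apply Set.inter_eq_left.mpr
    intro b hb
    have hb' : b.2 < lam.part b.1 := hb
    simp only [Set.mem_setOf_eq]
    by_contra hcc
    rw [hr b.1 (by omega)] at hb'
    omega
  rw [← ncard_rows_lt, hc, size]

noncomputable def toBeta (lam : YPartition) : ℕ+ →₀ ℕ :=
  Finsupp.onFinset ((Finset.range (nb lam)).image pk)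
    (fun k => lam.part ((k : ℕ) - 1) - lam.part (k : ℕ))
    (by
      intro k hk
      rw [Finset.mem_image]
      refine ⟨(k : ℕ) - 1, ?_, pk_sub_one k⟩
      rw [Finset.mem_range]
      have hk' : lam.part ((k : ℕ) - 1) - lam.part (k : ℕ) ≠ 0 := hk
      apply part_ne_lt lam
      omega)

lemma toBeta_apply (lam : YPartition) (k : ℕ+) :
    toBeta lam k = lam.part ((k : ℕ) - 1) - lam.part (k : ℕ) := rfl

noncomputable def fromBeta (β : ℕ+ →₀ ℕ) : YPartition where
  part := fun i => ∑ k ∈ β.support, if i < (k : ℕ) then β k else 0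
  antitone := by
    intro i j hij
    apply Finset.sum_le_sum
    intro k _
    by_cases h1 : j < (k : ℕ)
    · rw [if_pos h1, if_pos (by omega)]
    · rw [if_neg h1]
      split <;> omega
  eventually_zero := by
    refine ⟨β.support.sup (fun k => (k : ℕ)), fun i hi => ?_⟩
    apply Finset.sum_eq_zero
    intro k hk
    rw [if_neg]
    have h2 : (k : ℕ) ≤ β.support.sup (fun k => (k : ℕ)) :=
      Finset.le_sup (f := fun k : ℕ+ => (k : ℕ)) hk
    omega

lemma fromBeta_part (β : ℕ+ →₀ ℕ) {S : Finset ℕ+} (hS : β.support ⊆ S) (i : ℕ) :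
    (fromBeta β).part i = ∑ k ∈ S, if i < (k : ℕ) then β k else 0 := by
  apply Finset.sum_subset hS
  intro k _ hk
  rw [Finsupp.notMem_support_iff.mp hk]
  split <;> rfl

lemma fromBeta_zero (β : ℕ+ →₀ ℕ) {i : ℕ} (hi : β.support.sup (fun k => (k : ℕ)) ≤ i) :
    (fromBeta β).part i = 0 := by
  apply Finset.sum_eq_zero
  intro k hk
  rw [if_neg]
  have h2 : (k : ℕ) ≤ β.support.sup (fun k => (k : ℕ)) :=
    Finset.le_sup (f := fun k : ℕ+ => (k : ℕ)) hk
  omega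

lemma toBeta_fromBeta (β : ℕ+ →₀ ℕ) : toBeta (fromBeta β) = β := by
  ext k
  rw [toBeta_apply]
  have hstep : (fromBeta β).part ((k : ℕ) - 1) = β k + (fromBeta β).part (k : ℕ) := by
    classical
    have hS : β.support ⊆ insert k β.support := Finset.subset_insert k β.support
    rw [fromBeta_part β hS, fromBeta_part β hS]
    have hsplit : ∀ k' ∈ insert k β.support,
        (if (k : ℕ) - 1 < (k' : ℕ) then β k' else 0)
          = (if k' = k then β k' else 0) + (if (k : ℕ) < (k' : ℕ) then β k' else 0) := by
      intro k' _
      have hk1 := k.pos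
      have hk2 := k'.pos
      by_cases he : k' = k
      · subst he
        rw [if_pos (by omega), if_pos rfl, if_neg (by omega), add_zero]
      · have hne : (k' : ℕ) ≠ (k : ℕ) := fun h => he (PNat.coe_injective h)
        rw [if_neg he, zero_add]
        by_cases hlt : (k : ℕ) < (k' : ℕ)
        · rw [if_pos (by omega), if_pos hlt]
        · rw [if_neg (by omega), if_neg hlt]
    rw [Finset.sum_congr rfl hsplit, Finset.sum_add_distrib]
    congr 1
    rw [Finset.sum_ite_eq' (insert k β.support) k (fun k' => β k'),
      if_pos (Finset.mem_insert_self k β.support)]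
  omega

lemma fromBeta_toBeta (lam : YPartition) : fromBeta (toBeta lam) = lam := by
  apply partition_ext
  funext i
  set R := max (nb lam) (i + 1) with hR
  have hsub : (toBeta lam).support ⊆ (Finset.range R).image pk := by
    apply Finset.Subset.trans (Finsupp.support_onFinset_subset)
    apply Finset.image_subset_image
    apply Finset.range_subset_range.mpr
    omega
  rw [fromBeta_part _ hsub i]
  rw [Finset.sum_image (fun a _ b _ h => pk_inj h)]
  have hterm : ∀ m ∈ Finset.range R,
      (if i < (pk m : ℕ) then toBeta lam (pk m) else 0)
        = if i ≤ m then lam.part m - lam.part (m + 1) else 0 := by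
    intro m _
    rw [toBeta_apply, pk_coe]
    simp only [Nat.add_sub_cancel]
    by_cases h : i ≤ m
    · rw [if_pos (by omega), if_pos h]
    · rw [if_neg (by omega), if_neg h]
  rw [Finset.sum_congr rfl hterm, ← Finset.sum_filter]
  have hfil : (Finset.range R).filter (fun m => i ≤ m) = Finset.Ico i R := by
    ext m
    simp only [Finset.mem_filter, Finset.mem_range, Finset.mem_Ico]
    omega
  rw [hfil]
  have htele : ∀ T, i ≤ T → ∑ m ∈ Finset.Ico i T, (lam.part m - lam.part (m + 1))
      = lam.part i - lam.part T := by
    intro T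
    induction T with
    | zero => intro h; simp [show i = 0 by omega]
    | succ T ih =>
      intro h
      by_cases hT : i ≤ T
      · rw [Finset.sum_Ico_succ_top hT, ih hT]
        have h1 := lam.antitone i T hT
        have h2 := lam.antitone T (T + 1) (by omega)
        omega
      · have : i = T + 1 := by omega
        subst this
        simp
  rw [htele R (by omega)]
  rw [nb_spec lam R (by omega)]
  omega

lemma size_fromBeta (β : ℕ+ →₀ ℕ) : size (fromBeta β) = Finsupp.weight w β := by
  set R := β.support.sup (fun k => (k : ℕ)) with hR
  rw [← rowsum_eq_size' (fromBeta β) (fun i hi => fromBeta_zero β hi)]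
  rw [rowsum]
  have : ∀ i ∈ Finset.range R, (fromBeta β).part i
      = ∑ k ∈ β.support, if i < (k : ℕ) then β k else 0 := fun i _ => rfl
  rw [Finset.sum_congr rfl this, Finset.sum_comm]
  rw [Finsupp.weight_apply, Finsupp.sum]
  apply Finset.sum_congr rfl
  intro k hk
  have hkR : (k : ℕ) ≤ R := Finset.le_sup (f := fun k : ℕ+ => (k : ℕ)) hk
  rw [← Finset.sum_filter]
  have hfil : (Finset.range R).filter (fun i => i < (k : ℕ)) = Finset.range (k : ℕ) := by
    ext m
    simp only [Finset.mem_filter, Finset.mem_range]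
    omega
  rw [hfil, Finset.sum_const, Finset.card_range]
  simp [w, mul_comm]

noncomputable def sizeEquiv (n : ℕ) :
    {lam : YPartition // size lam = n} ≃ {β : ℕ+ →₀ ℕ // Finsupp.weight w β = n} where
  toFun lam := ⟨toBeta lam.1, by
    rw [← size_fromBeta, fromBeta_toBeta]
    exact lam.2⟩
  invFun β := ⟨fromBeta β.1, by rw [size_fromBeta]; exact β.2⟩
  left_inv lam := Subtype.ext (fromBeta_toBeta lam.1)
  right_inv β := Subtype.ext (toBeta_fromBeta β.1)

lemma weight_term_le (β : ℕ+ →₀ ℕ) (k : ℕ+) : β k * (k : ℕ) ≤ Finsupp.weight w β := by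
  by_cases hk : k ∈ β.support
  · rw [Finsupp.weight_apply, Finsupp.sum]
    have := Finset.single_le_sum (f := fun k : ℕ+ => β k • w k)
      (fun i _ => Nat.zero_le _) hk
    simpa [w, smul_eq_mul] using this
  · rw [Finsupp.notMem_support_iff.mp hk]
    simp

lemma bn_bound {n : ℕ} (βs : {β : ℕ+ →₀ ℕ // Finsupp.weight w β = n}) (k : ℕ+) :
    βs.1 k ≤ n := by
  have h1 := weight_term_le βs.1 k
  rw [βs.2] at h1
  have h2 := k.pos
  nlinarith

instance finiteBn (n : ℕ) : Finite {β : ℕ+ →₀ ℕ // Finsupp.weight w β = n} := by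
  apply Finite.of_injective (f := fun βs : {β : ℕ+ →₀ ℕ // Finsupp.weight w β = n} =>
    fun m : Fin n => (⟨βs.1 (pk m), by have := bn_bound βs (pk m); omega⟩ : Fin (n + 1)))
  intro β₁ β₂ h
  apply Subtype.ext
  ext k
  by_cases hk : (k : ℕ) ≤ n
  · have hk1 := k.pos
    have hm : (k : ℕ) - 1 < n := by omega
    have h2 := congrFun h ⟨(k : ℕ) - 1, hm⟩
    rw [Fin.mk.injEq] at h2
    rwa [pk_sub_one] at h2
  · have hz : ∀ β : ℕ+ →₀ ℕ, Finsupp.weight w β = n → β k = 0 := by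
      intro β hβ
      have h1 := weight_term_le β k
      rw [hβ] at h1
      have := k.pos
      by_contra hc
      have : 1 ≤ β k := by omega
      nlinarith
    rw [hz β₁.1 β₁.2, hz β₂.1 β₂.2]

instance finiteIn (n : ℕ) : Finite {lam : YPartition // size lam = n} :=
  Finite.of_equiv _ (sizeEquiv n).symm

def rowPartition (n : ℕ) : YPartition where
  part := fun i => if i = 0 then n else 0
  antitone := by
    intro i j hij
    by_cases hj : j = 0
    · have h0 : i = 0 := by omega
      show (if j = 0 then n else 0) ≤ (if i = 0 then n else 0)
      simp [h0, hj]
    · show (if j = 0 then n else 0) ≤ (if i = 0 then n else 0)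
      rw [if_neg hj]
      exact Nat.zero_le _
  eventually_zero := ⟨1, fun i hi => by
    show (if i = 0 then n else 0) = 0
    rw [if_neg (by omega)]⟩

lemma size_rowPartition (n : ℕ) : size (rowPartition n) = n := by
  rw [← rowsum_eq_size' (rowPartition n) (r := 1) (fun i hi => by
    show (if i = 0 then n else 0) = 0
    rw [if_neg (by omega)])]
  simp [rowsum, rowPartition]

instance nonemptyIn (n : ℕ) : Nonempty {lam : YPartition // size lam = n} :=
  ⟨⟨rowPartition n, size_rowPartition n⟩⟩

end Aux

namespace Aux

open MvPolynomial

section Main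

variable {chi : YPartition → MvPolynomial ℕ+ ℂ}
variable (hchi : ∀ lam, phi (chi lam) = schur lam)

/-- The span of weight-n monomials. -/
noncomputable def Pn (n : ℕ) : Submodule ℂ (MvPolynomial ℕ+ ℂ) :=
  Submodule.span ℂ (Set.range (fun β : {β : ℕ+ →₀ ℕ // Finsupp.weight w β = n} =>
    (monomial β.1 (1 : ℂ))))

/-- The span of images of weight-n monomials. -/
noncomputable def Vn (n : ℕ) : Submodule ℂ (MvPowerSeries ℕ+ ℂ) :=
  Submodule.span ℂ (Set.range (fun β : {β : ℕ+ →₀ ℕ // Finsupp.weight w β = n} =>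
    phi (monomial β.1 (1 : ℂ))))

lemma map_Pn (n : ℕ) : Submodule.map phi.toLinearMap (Pn n) = Vn n := by
  rw [Pn, Vn, Submodule.map_span, ← Set.range_comp]
  rfl

lemma homog_mem_Pn {n : ℕ} {q : MvPolynomial ℕ+ ℂ} (hq : IsWeightedHomogeneous w q n) :
    q ∈ Pn n := by
  rw [q.as_sum]
  apply Submodule.sum_mem
  intro β hβ
  have hw : Finsupp.weight w β = n := hq (mem_support_iff.mp hβ)
  have : (monomial β) (coeff β q) = (coeff β q) • (monomial β (1 : ℂ)) := by
    rw [smul_monomial, smul_eq_mul, mul_one]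
  rw [this]
  exact Submodule.smul_mem _ _ (Submodule.subset_span ⟨⟨β, hw⟩, rfl⟩)

include hchi in
lemma schur_mem_Vn {n : ℕ} {lam : YPartition} (hlam : size lam = n) : schur lam ∈ Vn n := by
  have h1 : IsHomog n (schur lam) := fun α h => by
    show (α.sum fun _ m => m) = n
    rw [schur_homog lam α h, hlam]
  have h2 : schur lam = phi (weightedHomogeneousComponent w n (chi lam)) := by
    rw [← proj_phi, hchi lam, proj_of_homog h1]
  rw [h2, ← map_Pn n]
  exact Submodule.mem_map_of_mem
    (homog_mem_Pn (weightedHomogeneousComponent_isWeightedHomogeneous n (chi lam)))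

include hchi in
lemma Vn_eq_span_schur (n : ℕ) :
    Vn n = Submodule.span ℂ
      (Set.range (fun lam : {lam : YPartition // size lam = n} => schur lam.1)) := by
  classical
  haveI : Fintype {β : ℕ+ →₀ ℕ // Finsupp.weight w β = n} := Fintype.ofFinite _
  haveI : Fintype {lam : YPartition // size lam = n} := Fintype.ofFinite _
  set g : {lam : YPartition // size lam = n} → MvPowerSeries ℕ+ ℂ :=
    fun lam => schur lam.1 with hg
  have hgli : LinearIndependent ℂ g :=
    schur_linearIndependent.comp Subtype.val Subtype.val_injective
  have hmem : ∀ lam : {lam : YPartition // size lam = n}, g lam ∈ Vn n :=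
    fun lam => schur_mem_Vn hchi lam.2
  set g' : {lam : YPartition // size lam = n} → (Vn n) := fun lam => ⟨g lam, hmem lam⟩ with hg'
  have hgli' : LinearIndependent ℂ g' := by
    apply LinearIndependent.of_comp (Vn n).subtype
    exact hgli
  haveI hfdP : FiniteDimensional ℂ (Pn n) :=
    FiniteDimensional.span_of_finite ℂ (Set.finite_range _)
  haveI hfdV : FiniteDimensional ℂ (Vn n) :=
    FiniteDimensional.span_of_finite ℂ (Set.finite_range _)
  have hmonoli : LinearIndependent ℂ (fun β : {β : ℕ+ →₀ ℕ // Finsupp.weight w β = n} =>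
      (monomial β.1 (1 : ℂ))) := by
    have hb := (basisMonomials ℕ+ ℂ).linearIndependent
    rw [coe_basisMonomials] at hb
    exact hb.comp Subtype.val Subtype.val_injective
  have hrankP : Module.finrank ℂ (Pn n) = Fintype.card {β : ℕ+ →₀ ℕ // Finsupp.weight w β = n} :=
    finrank_span_eq_card hmonoli
  have hcard : Fintype.card {lam : YPartition // size lam = n}
      = Fintype.card {β : ℕ+ →₀ ℕ // Finsupp.weight w β = n} :=
    Fintype.card_congr (sizeEquiv n)
  have hub : Module.finrank ℂ (Vn n) ≤ Fintype.card {lam : YPartition // size lam = n} := by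
    rw [hcard, ← hrankP, ← map_Pn n]
    exact Submodule.finrank_map_le phi.toLinearMap (Pn n)
  have hlb : Fintype.card {lam : YPartition // size lam = n} ≤ Module.finrank ℂ (Vn n) :=
    hgli'.fintype_card_le_finrank
  have heq : Fintype.card {lam : YPartition // size lam = n} = Module.finrank ℂ (Vn n) :=
    le_antisymm hlb hub
  have htop : Submodule.span ℂ (Set.range g') = ⊤ :=
    hgli'.span_eq_top_of_card_eq_finrank heq
  -- push down to the ambient space
  have := congrArg (Submodule.map (Vn n).subtype) htop
  rw [Submodule.map_span, Submodule.map_subtype_top, ← Set.range_comp] at this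
  rw [← this]
  rfl

include hchi in
lemma phi_injective : Function.Injective phi := by
  classical
  have hker : ∀ q : MvPolynomial ℕ+ ℂ, phi q = 0 → q = 0 := by
    intro q hq
    by_contra hne
    obtain ⟨β, hβ⟩ := ne_zero_iff.mp hne
    set n := Finsupp.weight w β with hn
    set qn := weightedHomogeneousComponent w n q with hqn
    have hqnne : qn ≠ 0 := by
      intro hz
      have : coeff β qn = coeff β q := by
        rw [hqn, coeff_weightedHomogeneousComponent, if_pos rfl]
      rw [hz, coeff_zero] at this
      exact hβ this.symm
    have hphiqn : phi qn = 0 := by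
      rw [hqn, ← proj_phi, hq, map_zero]
    -- dimension count: phi is injective on Pn
    haveI : Fintype {β : ℕ+ →₀ ℕ // Finsupp.weight w β = n} := Fintype.ofFinite _
    haveI : Fintype {lam : YPartition // size lam = n} := Fintype.ofFinite _
    haveI hfdP : FiniteDimensional ℂ (Pn n) :=
      FiniteDimensional.span_of_finite ℂ (Set.finite_range _)
    set ψ : (Pn n) →ₗ[ℂ] MvPowerSeries ℕ+ ℂ := phi.toLinearMap.comp (Pn n).subtype with hψ
    have hrange : LinearMap.range ψ = Vn n := by
      rw [hψ, LinearMap.range_comp, Submodule.range_subtype, map_Pn n]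
    have hmonoli : LinearIndependent ℂ (fun β : {β : ℕ+ →₀ ℕ // Finsupp.weight w β = n} =>
        (monomial β.1 (1 : ℂ))) := by
      have hb := (basisMonomials ℕ+ ℂ).linearIndependent
      rw [coe_basisMonomials] at hb
      exact hb.comp Subtype.val Subtype.val_injective
    have hrankP : Module.finrank ℂ (Pn n)
        = Fintype.card {β : ℕ+ →₀ ℕ // Finsupp.weight w β = n} :=
      finrank_span_eq_card hmonoli
    -- finrank of Vn is at least the number of partitions of n
    haveI hfdV : FiniteDimensional ℂ (Vn n) :=
      FiniteDimensional.span_of_finite ℂ (Set.finite_range _)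
    have hgli' : LinearIndependent ℂ (fun lam : {lam : YPartition // size lam = n} =>
        (⟨schur lam.1, schur_mem_Vn hchi lam.2⟩ : Vn n)) := by
      apply LinearIndependent.of_comp (Vn n).subtype
      exact schur_linearIndependent.comp Subtype.val Subtype.val_injective
    have hlb : Fintype.card {lam : YPartition // size lam = n} ≤ Module.finrank ℂ (Vn n) :=
      hgli'.fintype_card_le_finrank
    have hcard : Fintype.card {lam : YPartition // size lam = n}
        = Fintype.card {β : ℕ+ →₀ ℕ // Finsupp.weight w β = n} :=
      Fintype.card_congr (sizeEquiv n)
    have hrn := LinearMap.finrank_range_add_finrank_ker ψ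
    rw [hrange] at hrn
    have hkerzero : Module.finrank ℂ (LinearMap.ker ψ) = 0 := by omega
    have hkerbot : LinearMap.ker ψ = ⊥ := Submodule.finrank_eq_zero.mp hkerzero
    have hinj : Function.Injective ψ := LinearMap.ker_eq_bot.mp hkerbot
    have hqmem : qn ∈ Pn n :=
      homog_mem_Pn (weightedHomogeneousComponent_isWeightedHomogeneous n q)
    have : (⟨qn, hqmem⟩ : Pn n) = 0 := by
      apply hinj
      rw [map_zero]
      exact hphiqn
    exact hqnne (Subtype.ext_iff.mp this)
  intro a b hab
  have : phi (a - b) = 0 := by rw [map_sub, hab, sub_self]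
  exact sub_eq_zero.mp (hker _ this)

end Main

end Aux

theorem stmt8 (chi : YPartition → MvPolynomial ℕ+ ℂ)
    (hchi : ∀ lam : YPartition,
      MvPolynomial.aeval (fun k : ℕ+ => (((k : ℕ) : ℂ))⁻¹ • powerSum (k : ℕ)) (chi lam)
        = schur lam) :
    LinearIndependent ℂ chi ∧
      Submodule.span ℂ (Set.range chi) = (⊤ : Submodule ℂ (MvPolynomial ℕ+ ℂ)) := by

  have hchi' : ∀ lam, Aux.phi (chi lam) = schur lam := hchi
  constructor
  · apply LinearIndependent.of_comp Aux.phi.toLinearMap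
    have h : ⇑Aux.phi.toLinearMap ∘ chi = schur := funext fun lam => hchi' lam
    rw [h]
    exact Aux.schur_linearIndependent
  · rw [eq_top_iff]
    intro p _
    rw [p.as_sum]
    apply Submodule.sum_mem
    intro β hβ
    have hmono : (MvPolynomial.monomial β (1 : ℂ)) ∈ Submodule.span ℂ (Set.range chi) := by
      set n := Finsupp.weight Aux.w β with hn
      have hmem : Aux.phi (MvPolynomial.monomial β (1 : ℂ)) ∈ Aux.Vn n :=
        Submodule.subset_span ⟨⟨β, rfl⟩, rfl⟩
      rw [Aux.Vn_eq_span_schur hchi'] at hmem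
      have hsub : (Set.range (fun lam : {lam : YPartition // Aux.size lam = n} => schur lam.1))
          ⊆ ⇑Aux.phi '' (Set.range chi) := by
        rintro F ⟨lam, rfl⟩
        exact ⟨chi lam.1, ⟨lam.1, rfl⟩, hchi' lam.1⟩
      have hmem2 : Aux.phi (MvPolynomial.monomial β (1 : ℂ))
          ∈ Submodule.map Aux.phi.toLinearMap (Submodule.span ℂ (Set.range chi)) := by
        rw [Submodule.map_span]
        exact Submodule.span_mono hsub hmem
      obtain ⟨c, hc, hceq⟩ := Submodule.mem_map.mp hmem2
      have hce := Aux.phi_injective hchi' hceq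
      rwa [← hce]
    have hsm : (MvPolynomial.monomial β) (MvPolynomial.coeff β p)
        = (MvPolynomial.coeff β p) • (MvPolynomial.monomial β (1 : ℂ)) := by
      rw [MvPolynomial.smul_monomial, smul_eq_mul, mul_one]
    rw [hsm]
    exact Submodule.smul_mem _ _ hmono
end

section
/- Define a bilinear form ω on the space of finitely supported ℤ×ℤ matrices over ℂ by ω(X, Y) = Σ_{m < 0 ≤ n} X_{m,n} Y_{n,m} − Σ_{n < 0 ≤ m} X_{m,n} Y_{n,m}. Then ω is a Lie 2-cocycle for the Lie algebra of finitely supported matrices with bracket [X,Y] = XY − YX: for all finitely supported matrices X, Y, Z, ω([X,Y], Z) + ω([Y,Z], X) + ω([Z,X], Y) = 0. (Consequently the bracket on the central extension gl^c, given by [X̄, Ȳ] = \overline{[X,Y]} + ω(X,Y)c with c central, satisfies the Jacobi identity.) -/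
/-- A ℤ×ℤ matrix (over ℂ) is finitely supported if it has only finitely many
nonzero entries. -/
def FinSupported (X : ℤ → ℤ → ℂ) : Prop := {p : ℤ × ℤ | X p.1 p.2 ≠ 0}.Finite

/-- Matrix multiplication of ℤ×ℤ matrices. -/
noncomputable def matMul (X Y : ℤ → ℤ → ℂ) : ℤ → ℤ → ℂ :=
  fun m n => ∑ᶠ k : ℤ, X m k * Y k n

/-- The Lie bracket [X, Y] = XY − YX of ℤ×ℤ matrices. -/
noncomputable def matBracket (X Y : ℤ → ℤ → ℂ) : ℤ → ℤ → ℂ :=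
  fun m n => matMul X Y m n - matMul Y X m n

open Classical in
/-- The 2-cocycle ω(X, Y) = Σ_{m < 0 ≤ n} X_{m,n} Y_{n,m} − Σ_{n < 0 ≤ m} X_{m,n} Y_{n,m}. -/
noncomputable def omega (X Y : ℤ → ℤ → ℂ) : ℂ :=
  (∑ᶠ p : ℤ × ℤ, if p.1 < 0 ∧ 0 ≤ p.2 then X p.1 p.2 * Y p.2 p.1 else 0)
    - (∑ᶠ p : ℤ × ℤ, if p.2 < 0 ∧ 0 ≤ p.1 then X p.1 p.2 * Y p.2 p.1 else 0)

/-- Indicator of nonnegative integers. -/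
noncomputable def gg (m : ℤ) : ℂ := if 0 ≤ m then 1 else 0

lemma swap12 (s : Finset ℤ) (f : ℤ → ℤ → ℤ → ℂ) :
    (∑ a ∈ s, ∑ b ∈ s, ∑ c ∈ s, f a b c) = ∑ a ∈ s, ∑ b ∈ s, ∑ c ∈ s, f b a c :=
  Finset.sum_comm

lemma swap23 (s : Finset ℤ) (f : ℤ → ℤ → ℤ → ℂ) :
    (∑ a ∈ s, ∑ b ∈ s, ∑ c ∈ s, f a b c) = ∑ a ∈ s, ∑ b ∈ s, ∑ c ∈ s, f a c b :=
  Finset.sum_congr rfl fun _ _ => Finset.sum_comm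

lemma swap13 (s : Finset ℤ) (f : ℤ → ℤ → ℤ → ℂ) :
    (∑ a ∈ s, ∑ b ∈ s, ∑ c ∈ s, f a b c) = ∑ a ∈ s, ∑ b ∈ s, ∑ c ∈ s, f c b a := by
  rw [swap12 s f, swap23 s fun a b c => f b a c, swap12 s fun a b c => f c a b]

theorem stmt10 (X Y Z : ℤ → ℤ → ℂ)
    (hX : FinSupported X) (hY : FinSupported Y) (hZ : FinSupported Z) :
    omega (matBracket X Y) Z + omega (matBracket Y Z) X + omega (matBracket Z X) Y = 0 := by
  classical
  set u : Finset (ℤ × ℤ) := hX.toFinset ∪ hY.toFinset ∪ hZ.toFinset with hu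
  set s : Finset ℤ := u.image Prod.fst ∪ u.image Prod.snd with hs
  have hmem : ∀ p : ℤ × ℤ, p ∈ u → p.1 ∈ s ∧ p.2 ∈ s := by
    intro p hp
    exact ⟨Finset.mem_union_left _ (Finset.mem_image.mpr ⟨p, hp, rfl⟩),
      Finset.mem_union_right _ (Finset.mem_image.mpr ⟨p, hp, rfl⟩)⟩
  have hXs : ∀ m n : ℤ, X m n ≠ 0 → m ∈ s ∧ n ∈ s := by
    intro m n h
    exact hmem (m, n) (by simp [hu, Set.Finite.mem_toFinset, h]; exact Or.inl ((Set.Finite.mem_toFinset hX).mpr h))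
  have hYs : ∀ m n : ℤ, Y m n ≠ 0 → m ∈ s ∧ n ∈ s := by
    intro m n h
    exact hmem (m, n) (by simp [hu, Set.Finite.mem_toFinset, h]; exact Or.inr (Or.inl ((Set.Finite.mem_toFinset hY).mpr h)))
  have hZs : ∀ m n : ℤ, Z m n ≠ 0 → m ∈ s ∧ n ∈ s := by
    intro m n h
    exact hmem (m, n) (by simp [hu, Set.Finite.mem_toFinset, h]; exact Or.inr (Or.inr ((Set.Finite.mem_toFinset hZ).mpr h)))
  -- matMul as a finite sum
  have hmul : ∀ (A B : ℤ → ℤ → ℂ), (∀ m k, A m k ≠ 0 → k ∈ s) →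
      ∀ m n, matMul A B m n = ∑ k ∈ s, A m k * B k n := by
    intro A B hA m n
    refine finsum_eq_finset_sum_of_support_subset _ ?_
    intro k hk
    simp only [Function.mem_support, ne_eq] at hk
    have hA0 : A m k ≠ 0 := fun h0 => hk (by simp [h0])
    exact hA m k hA0
  -- bracket has support in s × s
  have hbr : ∀ (A B : ℤ → ℤ → ℂ), (∀ m n, A m n ≠ 0 → m ∈ s ∧ n ∈ s) →
      (∀ m n, B m n ≠ 0 → m ∈ s ∧ n ∈ s) →
      ∀ m n, matBracket A B m n ≠ 0 → m ∈ s ∧ n ∈ s := by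
    intro A B hA hB m n h
    by_contra hc
    apply h
    have hz : ∀ (C D : ℤ → ℤ → ℂ), (∀ a b, C a b ≠ 0 → a ∈ s ∧ b ∈ s) →
        (∀ a b, D a b ≠ 0 → a ∈ s ∧ b ∈ s) → matMul C D m n = 0 := by
      intro C D hC hD
      apply finsum_eq_zero_of_forall_eq_zero
      intro k
      rcases not_and_or.mp hc with hm | hn
      · have h0 : C m k = 0 := by
          by_contra hh; exact hm (hC m k hh).1
        simp [h0]
      · have h0 : D k n = 0 := by
          by_contra hh; exact hn (hD k n hh).2
        simp [h0]
    show matBracket A B m n = 0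
    unfold matBracket
    rw [hz A B hA hB, hz B A hB hA, sub_zero]
  -- omega as a finite double sum with weight gg
  have hom : ∀ (A B : ℤ → ℤ → ℂ), (∀ m n, A m n ≠ 0 → m ∈ s ∧ n ∈ s) →
      omega A B = ∑ m ∈ s, ∑ n ∈ s, A m n * B n m * (gg n - gg m) := by
    intro A B hA
    have hsub : ∀ (cond : ℤ × ℤ → Prop) [DecidablePred cond],
        (Function.support fun p : ℤ × ℤ =>
          if cond p then A p.1 p.2 * B p.2 p.1 else 0) ⊆ ↑(s ×ˢ s) := by
      intro cond _ p hp
      simp only [Function.mem_support, ne_eq] at hp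
      have hA0 : A p.1 p.2 ≠ 0 := by
        intro h0; apply hp; split <;> simp [h0]
      have := hA _ _ hA0
      simp [Finset.mem_product, this.1, this.2]
    unfold omega
    rw [finsum_eq_finset_sum_of_support_subset _ (hsub _),
        finsum_eq_finset_sum_of_support_subset _ (hsub _),
        ← Finset.sum_sub_distrib, Finset.sum_product]
    refine Finset.sum_congr rfl fun m _ => Finset.sum_congr rfl fun n _ => ?_
    by_cases h1 : 0 ≤ m <;> by_cases h2 : 0 ≤ n <;>
      simp [gg, h1, h2, not_lt.mpr, not_le.mp, lt_iff_not_ge]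
  -- bracket entries as finite sums
  have hb : ∀ (A B : ℤ → ℤ → ℂ), (∀ m k, A m k ≠ 0 → k ∈ s) → (∀ m k, B m k ≠ 0 → k ∈ s) →
      ∀ m n, matBracket A B m n = ∑ k ∈ s, (A m k * B k n - B m k * A k n) := by
    intro A B hA hB m n
    unfold matBracket
    rw [hmul A B hA m n, hmul B A hB m n, ← Finset.sum_sub_distrib]
  have hXc : ∀ m k, X m k ≠ 0 → k ∈ s := fun m k h => (hXs m k h).2
  have hYc : ∀ m k, Y m k ≠ 0 → k ∈ s := fun m k h => (hYs m k h).2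
  have hZc : ∀ m k, Z m k ≠ 0 → k ∈ s := fun m k h => (hZs m k h).2
  rw [hom _ Z (hbr X Y hXs hYs), hom _ X (hbr Y Z hYs hZs), hom _ Y (hbr Z X hZs hXs)]
  -- expand brackets into triple sums
  have expand : ∀ (A B C : ℤ → ℤ → ℂ), (∀ m k, A m k ≠ 0 → k ∈ s) → (∀ m k, B m k ≠ 0 → k ∈ s) →
      (∑ m ∈ s, ∑ n ∈ s, matBracket A B m n * C n m * (gg n - gg m))
        = ∑ m ∈ s, ∑ n ∈ s, ∑ k ∈ s,
            (A m k * B k n - B m k * A k n) * (C n m * (gg n - gg m)) := by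
    intro A B C hA hB
    refine Finset.sum_congr rfl fun m _ => Finset.sum_congr rfl fun n _ => ?_
    rw [hb A B hA hB m n, mul_assoc, Finset.sum_mul]
  rw [expand X Y Z hXc hYc, expand Y Z X hYc hZc, expand Z X Y hZc hXc]
  simp only [sub_mul, Finset.sum_sub_distrib]
  -- permute summation variables in each of the six triple sums
  have p1 : (∑ m ∈ s, ∑ n ∈ s, ∑ k ∈ s, X m k * Y k n * (Z n m * (gg n - gg m)))
      = ∑ a ∈ s, ∑ b ∈ s, ∑ c ∈ s, X a b * Y b c * (Z c a * (gg c - gg a)) :=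
    swap23 s _
  have q1 : (∑ m ∈ s, ∑ n ∈ s, ∑ k ∈ s, Y m k * X k n * (Z n m * (gg n - gg m)))
      = ∑ a ∈ s, ∑ b ∈ s, ∑ c ∈ s, Y c a * X a b * (Z b c * (gg b - gg c)) :=
    swap13 s _
  have p2 : (∑ m ∈ s, ∑ n ∈ s, ∑ k ∈ s, Y m k * Z k n * (X n m * (gg n - gg m)))
      = ∑ a ∈ s, ∑ b ∈ s, ∑ c ∈ s, Y b c * Z c a * (X a b * (gg a - gg b)) :=
    swap12 s _
  have q2 : (∑ m ∈ s, ∑ n ∈ s, ∑ k ∈ s, Z m k * Y k n * (X n m * (gg n - gg m)))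
      = ∑ a ∈ s, ∑ b ∈ s, ∑ c ∈ s, Z b c * Y c a * (X a b * (gg a - gg b)) :=
    swap12 s _
  have p3 : (∑ m ∈ s, ∑ n ∈ s, ∑ k ∈ s, Z m k * X k n * (Y n m * (gg n - gg m)))
      = ∑ a ∈ s, ∑ b ∈ s, ∑ c ∈ s, Z c a * X a b * (Y b c * (gg b - gg c)) :=
    swap13 s _
  have q3 : (∑ m ∈ s, ∑ n ∈ s, ∑ k ∈ s, X m k * Z k n * (Y n m * (gg n - gg m)))
      = ∑ a ∈ s, ∑ b ∈ s, ∑ c ∈ s, X a b * Z b c * (Y c a * (gg c - gg a)) :=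
    swap23 s _
  rw [p1, q1, p2, q2, p3, q3]
  simp only [← Finset.sum_sub_distrib, ← Finset.sum_add_distrib]
  refine Finset.sum_eq_zero fun a _ => Finset.sum_eq_zero fun b _ => Finset.sum_eq_zero fun c _ => ?_
  ring
end

section
/- Fix ℓ ≥ 1. For an ℓ×ℓ complex matrix X and m ∈ ℤ, define the ℤ×ℤ matrix T(X,m) by T(X,m)_{p,q} = X_{p̄,q̄} if ⌊q/ℓ⌋ − ⌊p/ℓ⌋ = m and 0 otherwise. Then for all ℓ×ℓ matrices X, Y and all m, n ∈ ℤ, the two sums Σ_{p < 0 ≤ q} T(X,m)_{p,q} T(Y,n)_{q,p} and Σ_{q < 0 ≤ p} T(X,m)_{p,q} T(Y,n)_{q,p} are finite, and their difference equals m·δ_{m+n,0}·tr(XY). (That is, the restriction of the 2-cocycle ω of a_∞ to the image of the loop algebra of gl_ℓ is the affine cocycle; combined with the bracket compatibility this embeds ĝl'_ℓ/(c−1) into a_∞.) -/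
/-- The residue of p mod ℓ, as an element of {0, …, ℓ−1}. -/
def res (ℓ : ℕ) [NeZero ℓ] (p : ℤ) : Fin ℓ :=
  ⟨(p % (ℓ : ℤ)).toNat, by
    have hℓ : (0 : ℤ) < (ℓ : ℤ) := by exact_mod_cast Nat.pos_of_ne_zero (NeZero.ne ℓ)
    have h1 : p % (ℓ : ℤ) < (ℓ : ℤ) := Int.emod_lt_of_pos p hℓ
    have h2 : 0 ≤ p % (ℓ : ℤ) := Int.emod_nonneg p (by omega)
    omega⟩

open Classical in
/-- The ℤ×ℤ matrix T(X, m) associated to X ⊗ t^m: T(X,m)_{p,q} = X_{p̄,q̄} if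
⌊q/ℓ⌋ − ⌊p/ℓ⌋ = m and 0 otherwise. -/
noncomputable def T (ℓ : ℕ) [NeZero ℓ] (X : Matrix (Fin ℓ) (Fin ℓ) ℂ) (m : ℤ) :
    ℤ → ℤ → ℂ :=
  fun p q => if q / (ℓ : ℤ) - p / (ℓ : ℤ) = m then X (res ℓ p) (res ℓ q) else 0

section Aux

variable (ℓ : ℕ) [NeZero ℓ]

lemma stmt15_hL : (0:ℤ) < (ℓ:ℤ) := by have := NeZero.ne ℓ; omega

lemma stmt15_div_block (a : ℤ) (i : Fin ℓ) : ((ℓ:ℤ)*a + i) / (ℓ:ℤ) = a := by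
  have h0 : (0:ℤ) ≤ (i:ℤ) := Int.ofNat_nonneg i.val
  have h1 : ((i:ℤ)) < (ℓ:ℤ) := by exact_mod_cast i.isLt
  rw [add_comm, Int.add_mul_ediv_left _ _ (by have := stmt15_hL ℓ; omega),
    Int.ediv_eq_zero_of_lt h0 h1]; ring

lemma stmt15_res_block (a : ℤ) (i : Fin ℓ) : res ℓ ((ℓ:ℤ)*a + i) = i := by
  have h0 : (0:ℤ) ≤ (i:ℤ) := Int.ofNat_nonneg i.val
  have h1 : ((i:ℤ)) < (ℓ:ℤ) := by exact_mod_cast i.isLt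
  have hm : ((ℓ:ℤ)*a + i) % (ℓ:ℤ) = (i:ℤ) := by
    rw [add_comm, Int.add_mul_emod_self_left, Int.emod_eq_of_lt h0 h1]
  ext
  simp [res, hm]

lemma stmt15_sum_block (u v : ℤ) (f : ℤ → ℂ) :
    ∑ p ∈ Finset.Ico ((ℓ:ℤ)*u) ((ℓ:ℤ)*v), f p
      = ∑ a ∈ Finset.Ico u v, ∑ i : Fin ℓ, f ((ℓ:ℤ)*a + i) := by
  have hℓ := stmt15_hL ℓ
  rw [← Finset.sum_product']
  refine Finset.sum_nbij' (fun p => (p / (ℓ:ℤ), ⟨(p % (ℓ:ℤ)).toNat, ?_⟩))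
    (fun x => (ℓ:ℤ)*x.1 + x.2) ?_ ?_ ?_ ?_ ?_
  · have h1 : p % (ℓ : ℤ) < (ℓ : ℤ) := Int.emod_lt_of_pos p hℓ
    have h2 : 0 ≤ p % (ℓ : ℤ) := Int.emod_nonneg p (by omega)
    omega
  · intro p hp
    simp only [Finset.mem_Ico] at hp
    simp only [Finset.mem_product, Finset.mem_Ico, Finset.mem_univ, and_true]
    constructor
    · rw [Int.le_ediv_iff_mul_le hℓ]; linarith [hp.1]
    · rw [Int.ediv_lt_iff_lt_mul hℓ]; rw [mul_comm]; exact hp.2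
  · intro x hx
    simp only [Finset.mem_product, Finset.mem_Ico] at hx
    obtain ⟨⟨h1, h2⟩, -⟩ := hx
    have hi0 : (0:ℤ) ≤ (x.2:ℤ) := Int.ofNat_nonneg x.2.val
    have hi1 : ((x.2:ℤ)) < (ℓ:ℤ) := by exact_mod_cast x.2.isLt
    simp only [Finset.mem_Ico]
    constructor
    · have := mul_le_mul_of_nonneg_left h1 hℓ.le
      linarith
    · have : x.1 + 1 ≤ v := h2
      have := mul_le_mul_of_nonneg_left this hℓ.le
      linarith [mul_one (ℓ:ℤ)]
  · intro p hp
    have h2 : 0 ≤ p % (ℓ : ℤ) := Int.emod_nonneg p (by omega)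
    simp only []
    rw [show (((p % (ℓ:ℤ)).toNat : ℤ)) = p % (ℓ:ℤ) from Int.toNat_of_nonneg h2]
    rw [mul_comm]; exact Int.ediv_mul_add_emod p ℓ
  · intro x hx
    have h0 : (0:ℤ) ≤ (x.2:ℤ) := Int.ofNat_nonneg x.2.val
    have h1 : ((x.2:ℤ)) < (ℓ:ℤ) := by exact_mod_cast x.2.isLt
    have hd := stmt15_div_block ℓ x.1 x.2
    have hm : ((ℓ:ℤ)*x.1 + x.2) % (ℓ:ℤ) = (x.2:ℤ) := by
      rw [add_comm, Int.add_mul_emod_self_left, Int.emod_eq_of_lt h0 h1]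
    ext
    · exact hd
    · simp [hm]
  · intro p hp
    have h2 : 0 ≤ p % (ℓ : ℤ) := Int.emod_nonneg p (by omega)
    congr 1
    simp only []
    rw [show (((p % (ℓ:ℤ)).toNat : ℤ)) = p % (ℓ:ℤ) from Int.toNat_of_nonneg h2]
    rw [mul_comm]; exact (Int.ediv_mul_add_emod p ℓ).symm

open Classical in
lemma stmt15_Tval (X : Matrix (Fin ℓ) (Fin ℓ) ℂ) (m : ℤ) (a b : ℤ) (i j : Fin ℓ) :
    T ℓ X m ((ℓ:ℤ)*a + i) ((ℓ:ℤ)*b + j) = if b - a = m then X i j else 0 := by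
  simp [T, stmt15_div_block, stmt15_res_block]

open Classical in
/-- Conditions for the product to be nonzero. -/
lemma stmt15_cond (X Y : Matrix (Fin ℓ) (Fin ℓ) ℂ) (m n p q : ℤ)
    (h : T ℓ X m p q * T ℓ Y n q p ≠ 0) :
    q / (ℓ:ℤ) - p / (ℓ:ℤ) = m ∧ p / (ℓ:ℤ) - q / (ℓ:ℤ) = n := by
  by_contra hc
  apply h
  unfold T
  split_ifs with h1 h2 <;> simp_all

open Classical in
/-- Support bound. -/
lemma stmt15_supp (X Y : Matrix (Fin ℓ) (Fin ℓ) ℂ) (m n p q : ℤ)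
    (hp : p < 0) (hq : 0 ≤ q) (h : T ℓ X m p q * T ℓ Y n q p ≠ 0) :
    (ℓ:ℤ) * (-(m.natAbs:ℤ)) ≤ p ∧ q < (ℓ:ℤ) * (m.natAbs:ℤ) := by
  have hℓ := stmt15_hL ℓ
  obtain ⟨h1, -⟩ := stmt15_cond ℓ X Y m n p q h
  set a := p / (ℓ:ℤ) with ha'
  set b := q / (ℓ:ℤ) with hb'
  have hpr : (ℓ:ℤ) * a + p % (ℓ:ℤ) = p := by rw [mul_comm]; exact Int.ediv_mul_add_emod p ℓ
  have hqr : (ℓ:ℤ) * b + q % (ℓ:ℤ) = q := by rw [mul_comm]; exact Int.ediv_mul_add_emod q ℓ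
  have hpr0 : 0 ≤ p % (ℓ:ℤ) := Int.emod_nonneg p (by omega)
  have hpr1 : p % (ℓ:ℤ) < (ℓ:ℤ) := Int.emod_lt_of_pos p hℓ
  have hqr0 : 0 ≤ q % (ℓ:ℤ) := Int.emod_nonneg q (by omega)
  have hqr1 : q % (ℓ:ℤ) < (ℓ:ℤ) := Int.emod_lt_of_pos q hℓ
  have hane : a < 0 := by
    by_contra hcon
    push_neg at hcon
    have : 0 ≤ (ℓ:ℤ) * a := mul_nonneg hℓ.le hcon
    linarith
  have hbne : 0 ≤ b := by
    by_contra hcon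
    push_neg at hcon
    have hb1 : b ≤ -1 := by omega
    have : (ℓ:ℤ) * b ≤ (ℓ:ℤ) * (-1) := mul_le_mul_of_nonneg_left hb1 hℓ.le
    linarith
  have hm1 : 1 ≤ m := by omega
  have hM : ((m.natAbs:ℤ)) = m := Int.natAbs_of_nonneg (by omega)
  rw [hM]
  constructor
  · have haa : -m ≤ a := by omega
    have : (ℓ:ℤ) * (-m) ≤ (ℓ:ℤ) * a := mul_le_mul_of_nonneg_left haa hℓ.le
    linarith
  · have hbb : b + 1 ≤ m := by omega
    have : (ℓ:ℤ) * (b + 1) ≤ (ℓ:ℤ) * m := mul_le_mul_of_nonneg_left hbb hℓ.le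
    have h2 : (ℓ:ℤ) * b + (ℓ:ℤ) ≤ (ℓ:ℤ) * m := by linarith [mul_add (ℓ:ℤ) b 1, mul_one (ℓ:ℤ)]
    linarith

end Aux

open Classical in
theorem stmt15 (ℓ : ℕ) [NeZero ℓ] (X Y : Matrix (Fin ℓ) (Fin ℓ) ℂ) (m n : ℤ) :
    {pq : ℤ × ℤ | pq.1 < 0 ∧ 0 ≤ pq.2 ∧ T ℓ X m pq.1 pq.2 * T ℓ Y n pq.2 pq.1 ≠ 0}.Finite ∧
    {pq : ℤ × ℤ | pq.2 < 0 ∧ 0 ≤ pq.1 ∧ T ℓ X m pq.1 pq.2 * T ℓ Y n pq.2 pq.1 ≠ 0}.Finite ∧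
    (∑ᶠ pq : ℤ × ℤ, if pq.1 < 0 ∧ 0 ≤ pq.2 then T ℓ X m pq.1 pq.2 * T ℓ Y n pq.2 pq.1 else 0)
      - (∑ᶠ pq : ℤ × ℤ, if pq.2 < 0 ∧ 0 ≤ pq.1 then T ℓ X m pq.1 pq.2 * T ℓ Y n pq.2 pq.1 else 0)
      = (m : ℂ) * (if m + n = 0 then 1 else 0) * Matrix.trace (X * Y) := by
  have hℓ := stmt15_hL ℓ
  by_cases hmn : m + n = 0
  swap
  · -- degenerate case: the product is identically zero
    have hzero : ∀ p q : ℤ, T ℓ X m p q * T ℓ Y n q p = 0 := by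
      intro p q
      by_contra h
      obtain ⟨h1, h2⟩ := stmt15_cond ℓ X Y m n p q h
      omega
    refine ⟨?_, ?_, ?_⟩
    · convert Set.finite_empty using 2
      ext pq; simp [hzero]
    · convert Set.finite_empty using 2
      ext pq; simp [hzero]
    · have e1 : ∀ pq : ℤ × ℤ,
          (if pq.1 < 0 ∧ 0 ≤ pq.2 then T ℓ X m pq.1 pq.2 * T ℓ Y n pq.2 pq.1 else 0) = 0 := by
        intro pq; simp [hzero]
      have e2 : ∀ pq : ℤ × ℤ,
          (if pq.2 < 0 ∧ 0 ≤ pq.1 then T ℓ X m pq.1 pq.2 * T ℓ Y n pq.2 pq.1 else 0) = 0 := by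
        intro pq; simp [hzero]
      simp only [e1, e2, finsum_zero, hmn, if_false, sub_zero, mul_zero, zero_mul]
  -- main case: n = -m
  have hn : n = -m := by omega
  set M : ℤ := (m.natAbs : ℤ) with hM
  have hMnn : 0 ≤ M := Int.ofNat_nonneg m.natAbs
  set B₁ : Finset (ℤ × ℤ) :=
    Finset.Ico ((ℓ:ℤ)*(-M)) ((ℓ:ℤ)*0) ×ˢ Finset.Ico ((ℓ:ℤ)*0) ((ℓ:ℤ)*M) with hB₁
  set B₂ : Finset (ℤ × ℤ) :=
    Finset.Ico ((ℓ:ℤ)*0) ((ℓ:ℤ)*M) ×ˢ Finset.Ico ((ℓ:ℤ)*(-M)) ((ℓ:ℤ)*0) with hB₂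
  have hsub1 : ∀ pq : ℤ × ℤ, pq.1 < 0 → 0 ≤ pq.2 →
      T ℓ X m pq.1 pq.2 * T ℓ Y n pq.2 pq.1 ≠ 0 → pq ∈ B₁ := by
    intro pq hp hq h
    obtain ⟨h1, h2⟩ := stmt15_supp ℓ X Y m n pq.1 pq.2 hp hq h
    simp only [hB₁, Finset.mem_product, Finset.mem_Ico, mul_zero]
    exact ⟨⟨h1, hp⟩, hq, h2⟩
  have hsub2 : ∀ pq : ℤ × ℤ, pq.2 < 0 → 0 ≤ pq.1 →
      T ℓ X m pq.1 pq.2 * T ℓ Y n pq.2 pq.1 ≠ 0 → pq ∈ B₂ := by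
    intro pq hp hq h
    have h' : T ℓ Y n pq.2 pq.1 * T ℓ X m pq.1 pq.2 ≠ 0 := by
      rwa [mul_comm]
    obtain ⟨h1, h2⟩ := stmt15_supp ℓ Y X n m pq.2 pq.1 hp hq h'
    have hNM : ((n.natAbs : ℤ)) = M := by simp only [hM]; omega
    rw [hNM] at h1 h2
    simp only [hB₂, Finset.mem_product, Finset.mem_Ico, mul_zero]
    exact ⟨⟨hq, h2⟩, h1, hp⟩
  refine ⟨?_, ?_, ?_⟩
  · exact Set.Finite.subset B₁.finite_toSet (fun pq hpq => hsub1 pq hpq.1 hpq.2.1 hpq.2.2)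
  · exact Set.Finite.subset B₂.finite_toSet (fun pq hpq => hsub2 pq hpq.1 hpq.2.1 hpq.2.2)
  -- the sums
  have hfs1 : (∑ᶠ pq : ℤ × ℤ, if pq.1 < 0 ∧ 0 ≤ pq.2 then
      T ℓ X m pq.1 pq.2 * T ℓ Y n pq.2 pq.1 else 0)
      = ∑ pq ∈ B₁, T ℓ X m pq.1 pq.2 * T ℓ Y n pq.2 pq.1 := by
    rw [finsum_eq_finset_sum_of_support_subset _ (s := B₁)]
    · refine Finset.sum_congr rfl fun pq hpq => ?_
      simp only [hB₁, Finset.mem_product, Finset.mem_Ico, mul_zero] at hpq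
      rw [if_pos ⟨hpq.1.2, hpq.2.1⟩]
    · intro pq hpq
      simp only [Function.mem_support, ne_eq] at hpq
      by_cases hc : pq.1 < 0 ∧ 0 ≤ pq.2
      · rw [if_pos hc] at hpq
        exact hsub1 pq hc.1 hc.2 hpq
      · rw [if_neg hc] at hpq; exact absurd rfl hpq
  have hfs2 : (∑ᶠ pq : ℤ × ℤ, if pq.2 < 0 ∧ 0 ≤ pq.1 then
      T ℓ X m pq.1 pq.2 * T ℓ Y n pq.2 pq.1 else 0)
      = ∑ pq ∈ B₂, T ℓ X m pq.1 pq.2 * T ℓ Y n pq.2 pq.1 := by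
    rw [finsum_eq_finset_sum_of_support_subset _ (s := B₂)]
    · refine Finset.sum_congr rfl fun pq hpq => ?_
      simp only [hB₂, Finset.mem_product, Finset.mem_Ico, mul_zero] at hpq
      rw [if_pos ⟨hpq.2.2, hpq.1.1⟩]
    · intro pq hpq
      simp only [Function.mem_support, ne_eq] at hpq
      by_cases hc : pq.2 < 0 ∧ 0 ≤ pq.1
      · rw [if_pos hc] at hpq
        exact hsub2 pq hc.1 hc.2 hpq
      · rw [if_neg hc] at hpq; exact absurd rfl hpq
  rw [hfs1, hfs2]
  -- key pointwise simplification
  have key : ∀ (a b : ℤ) (i j : Fin ℓ),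
      (if b - a = m then X i j else 0) * (if a - b = n then Y j i else 0)
        = (if b = a + m then (1:ℂ) else 0) * (X i j * Y j i) := by
    intro a b i j
    split_ifs <;> first | (exfalso; omega) | ring
  have htr : Matrix.trace (X * Y) = ∑ i : Fin ℓ, ∑ j : Fin ℓ, X i j * Y j i := by
    simp [Matrix.trace, Matrix.mul_apply, Matrix.diag]
  -- compute S₁
  have hS1 : ∑ pq ∈ B₁, T ℓ X m pq.1 pq.2 * T ℓ Y n pq.2 pq.1
      = (∑ a ∈ Finset.Ico (-M) 0, if a + m ∈ Finset.Ico 0 M then (1:ℂ) else 0)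
        * Matrix.trace (X * Y) := by
    rw [hB₁, Finset.sum_product, stmt15_sum_block]
    simp only [stmt15_sum_block ℓ 0 M]
    simp only [stmt15_Tval, key]
    rw [Finset.sum_mul]
    refine Finset.sum_congr rfl fun a _ => ?_
    rw [Finset.sum_comm]
    simp only [← Finset.mul_sum]
    rw [htr]
    simp only [ite_mul, one_mul, zero_mul]
    rw [Finset.sum_ite_eq']
  -- compute S₂
  have hS2 : ∑ pq ∈ B₂, T ℓ X m pq.1 pq.2 * T ℓ Y n pq.2 pq.1
      = (∑ a ∈ Finset.Ico 0 M, if a + m ∈ Finset.Ico (-M) 0 then (1:ℂ) else 0)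
        * Matrix.trace (X * Y) := by
    rw [hB₂, Finset.sum_product, stmt15_sum_block]
    simp only [stmt15_sum_block ℓ (-M) 0]
    simp only [stmt15_Tval, key]
    rw [Finset.sum_mul]
    refine Finset.sum_congr rfl fun a _ => ?_
    rw [Finset.sum_comm]
    simp only [← Finset.mul_sum]
    rw [htr]
    simp only [ite_mul, one_mul, zero_mul]
    rw [Finset.sum_ite_eq']
  rw [hS1, hS2, ← sub_mul]
  congr 1
  rw [if_pos hmn, mul_one]
  -- count the two index sets
  have hc1 : (∑ a ∈ Finset.Ico (-M) 0, if a + m ∈ Finset.Ico 0 M then (1:ℂ) else 0)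
      = (((max m 0 : ℤ)) : ℂ) := by
    by_cases hm : 0 < m
    · have hMm : M = m := by simp only [hM]; omega
      rw [Finset.sum_congr rfl (fun a ha => ?_), Finset.sum_const, Int.card_Ico,
        nsmul_eq_mul, mul_one]
      · rw [show ((0 - -M).toNat : ℂ) = ((((0 - -M).toNat : ℤ)) : ℂ) by push_cast; ring]
        congr 1
        omega
      · rw [if_pos]
        simp only [Finset.mem_Ico] at ha ⊢
        omega
    · rw [Finset.sum_congr rfl (fun a ha => ?_), Finset.sum_const, smul_zero]
      · rw [show ((max m 0 : ℤ) : ℂ) = (((0:ℤ)) : ℂ) by congr 1; omega]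
        simp
      · rw [if_neg]
        simp only [Finset.mem_Ico] at ha ⊢
        omega
  have hc2 : (∑ a ∈ Finset.Ico 0 M, if a + m ∈ Finset.Ico (-M) 0 then (1:ℂ) else 0)
      = (((max (-m) 0 : ℤ)) : ℂ) := by
    by_cases hm : m < 0
    · have hMm : M = -m := by simp only [hM]; omega
      rw [Finset.sum_congr rfl (fun a ha => ?_), Finset.sum_const, Int.card_Ico,
        nsmul_eq_mul, mul_one]
      · rw [show ((M - 0).toNat : ℂ) = ((((M - 0).toNat : ℤ)) : ℂ) by push_cast; ring]
        congr 1
        omega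
      · rw [if_pos]
        simp only [Finset.mem_Ico] at ha ⊢
        omega
    · rw [Finset.sum_congr rfl (fun a ha => ?_), Finset.sum_const, smul_zero]
      · rw [show ((max (-m) 0 : ℤ) : ℂ) = (((0:ℤ)) : ℂ) by congr 1; omega]
        simp
      · rw [if_neg]
        simp only [Finset.mem_Ico] at ha ⊢
        omega
  rw [hc1, hc2, ← Int.cast_sub]
  congr 1
  omega
end

section
/- Fix ℓ ≥ 2 and let F⁰ be the free ℂ-vector space with basis the set of all partitions. For a residue i ∈ ℤ/ℓℤ, say a box in row r, column c (r, c ≥ 1) has color i if c − r ≡ i (mod ℓ). Define linear operators on F⁰: E_i(λ) = Σ μ over all partitions μ ⊆ λ with λ \ μ a single box of color i, and F_i(λ) = Σ μ over all partitions μ ⊇ λ with μ \ λ a single box of color i. Then: (1) for residues i ≠ j, E_i F_j = F_j E_i; and (2) for each residue i, (E_i F_i − F_i E_i)(λ) = (a_i(λ) − r_i(λ))·λ for every partition λ, where a_i(λ) is the number of boxes of color i addable to λ and r_i(λ) is the number of boxes of color i removable from λ. -/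
/-- A partition: a weakly decreasing sequence of natural numbers, eventually zero.
`part i` is the (i+1)-st part, i.e. λ_{i+1}. -/
structure Partition' where
  part : ℕ → ℕ
  antitone : ∀ i j : ℕ, i ≤ j → part j ≤ part i
  eventually_zero : ∃ N : ℕ, ∀ i : ℕ, N ≤ i → part i = 0

/-- The free ℂ-vector space on the set of partitions. -/
abbrev F0 : Type := Partition' →₀ ℂ

/-- `IsBoxRemoval ℓ lam mu i` : μ ⊆ λ and λ \ μ is a single box of color i,
where the box in row r, column c (1-indexed) has color c − r mod ℓ. -/
def IsBoxRemoval (ℓ : ℕ) (lam mu : Partition') (i : ZMod ℓ) : Prop :=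
  ∃ r : ℕ, (∀ j : ℕ, j ≠ r → mu.part j = lam.part j) ∧ mu.part r + 1 = lam.part r ∧
    ((((lam.part r : ℤ) - 1 - (r : ℤ)) : ℤ) : ZMod ℓ) = i

open Classical in
/-- The operator E_i: sum of all ways to remove a single box of color i. -/
noncomputable def Eop (ℓ : ℕ) (i : ZMod ℓ) : F0 →ₗ[ℂ] F0 :=
  Finsupp.lift F0 ℂ Partition' fun lam =>
    ∑ᶠ mu : Partition', if IsBoxRemoval ℓ lam mu i then Finsupp.single mu (1 : ℂ) else 0

open Classical in
/-- The operator F_i: sum of all ways to add a single box of color i. -/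
noncomputable def Fop (ℓ : ℕ) (i : ZMod ℓ) : F0 →ₗ[ℂ] F0 :=
  Finsupp.lift F0 ℂ Partition' fun lam =>
    ∑ᶠ mu : Partition', if IsBoxRemoval ℓ mu lam i then Finsupp.single mu (1 : ℂ) else 0

/-! ### Auxiliary definitions -/

lemma Partition'.ext' {lam mu : Partition'} (h : lam.part = mu.part) : lam = mu := by
  cases lam; cases mu; simp_all

noncomputable def pbnd (lam : Partition') : ℕ := lam.eventually_zero.choose

lemma part_eq_zero (lam : Partition') {k : ℕ} (h : pbnd lam ≤ k) : lam.part k = 0 :=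
  lam.eventually_zero.choose_spec k h

def chgFun (lam : Partition') (r v : ℕ) : ℕ → ℕ := fun j => if j = r then v else lam.part j

open Classical in
noncomputable def chg (lam : Partition') (r v : ℕ) : Partition' :=
  if h : ∀ a b : ℕ, a ≤ b → chgFun lam r v b ≤ chgFun lam r v a then
    ⟨chgFun lam r v, h, ⟨max (pbnd lam) (r + 1), fun k hk => by
      have hk1 : pbnd lam ≤ k := le_trans (le_max_left _ _) hk
      have hk2 : r + 1 ≤ k := le_trans (le_max_right _ _) hk
      simp only [chgFun, if_neg (by omega : k ≠ r)]
      exact part_eq_zero lam hk1⟩⟩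
  else lam

def removable (lam : Partition') (r : ℕ) : Prop := lam.part (r + 1) < lam.part r

def addable (lam : Partition') (r : ℕ) : Prop := r = 0 ∨ lam.part r < lam.part (r - 1)

noncomputable def rmB (lam : Partition') (r : ℕ) : Partition' := chg lam r (lam.part r - 1)
noncomputable def adB (lam : Partition') (r : ℕ) : Partition' := chg lam r (lam.part r + 1)

lemma chg_antitone (lam : Partition') (r v : ℕ) (h1 : lam.part (r + 1) ≤ v)
    (h2 : r = 0 ∨ v ≤ lam.part (r - 1)) :
    ∀ a b : ℕ, a ≤ b → chgFun lam r v b ≤ chgFun lam r v a := by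
  intro a b hab
  unfold chgFun
  split_ifs with hb ha ha
  · exact le_rfl
  · rcases h2 with h2 | h2
    · omega
    · exact le_trans h2 (lam.antitone a (r - 1) (by omega))
  · exact le_trans (lam.antitone (r + 1) b (by omega)) h1
  · exact lam.antitone a b hab

lemma chg_part (lam : Partition') (r v : ℕ) (h1 : lam.part (r + 1) ≤ v)
    (h2 : r = 0 ∨ v ≤ lam.part (r - 1)) :
    (chg lam r v).part = chgFun lam r v := by
  unfold chg
  rw [dif_pos (chg_antitone lam r v h1 h2)]

lemma rm_part {lam : Partition'} {r : ℕ} (h : removable lam r) :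
    ∀ j, (rmB lam r).part j = if j = r then lam.part r - 1 else lam.part j := by
  intro j
  unfold rmB
  rw [chg_part lam r (lam.part r - 1) (by unfold removable at h; omega)
    (Or.imp_right (fun _ => le_trans (Nat.sub_le _ _) (lam.antitone (r-1) r (by omega)))
      (em (r = 0)))]
  rfl

lemma ad_part {lam : Partition'} {r : ℕ} (h : addable lam r) :
    ∀ j, (adB lam r).part j = if j = r then lam.part r + 1 else lam.part j := by
  intro j
  unfold adB
  rw [chg_part lam r (lam.part r + 1) (le_trans (lam.antitone r (r+1) (by omega)) (Nat.le_succ _))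
    (h.imp_right (fun h' => by omega))]
  rfl

/-! ### Characterizations -/

def rcol (ℓ : ℕ) (lam : Partition') (r : ℕ) : ZMod ℓ := ((((lam.part r : ℤ) - 1 - (r : ℤ)) : ℤ) : ZMod ℓ)
def acol (ℓ : ℕ) (lam : Partition') (r : ℕ) : ZMod ℓ := ((((lam.part r : ℤ) - (r : ℤ)) : ℤ) : ZMod ℓ)

lemma isBoxRemoval_iff (ℓ : ℕ) (lam mu : Partition') (i : ZMod ℓ) :
    IsBoxRemoval ℓ lam mu i ↔ ∃ r, removable lam r ∧ rcol ℓ lam r = i ∧ mu = rmB lam r := by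
  constructor
  · rintro ⟨r, hoff, hr, hc⟩
    have hrem : removable lam r := by
      have h1 := mu.antitone r (r + 1) (by omega)
      have h2 := hoff (r + 1) (by omega)
      unfold removable; omega
    refine ⟨r, hrem, hc, Partition'.ext' ?_⟩
    funext j
    rw [rm_part hrem j]
    split_ifs with hj
    · subst hj; omega
    · exact hoff j hj
  · rintro ⟨r, hrem, hc, rfl⟩
    have hge : 1 ≤ lam.part r := by unfold removable at hrem; omega
    refine ⟨r, fun j hj => by rw [rm_part hrem j, if_neg hj], ?_, hc⟩
    rw [rm_part hrem r, if_pos rfl]; omega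

lemma isBoxAddition_iff (ℓ : ℕ) (lam mu : Partition') (i : ZMod ℓ) :
    IsBoxRemoval ℓ mu lam i ↔ ∃ r, addable lam r ∧ acol ℓ lam r = i ∧ mu = adB lam r := by
  constructor
  · rintro ⟨r, hoff, hr, hc⟩
    have hadd : addable lam r := by
      rcases Nat.eq_zero_or_pos r with h0 | h0
      · exact Or.inl h0
      · refine Or.inr ?_
        have h1 := mu.antitone (r - 1) r (by omega)
        have h2 := hoff (r - 1) (by omega)
        omega
    have hmr : (mu.part r : ℤ) = (lam.part r : ℤ) + 1 := by exact_mod_cast hr.symm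
    refine ⟨r, hadd, ?_, Partition'.ext' ?_⟩
    · rw [← hc]; unfold acol; rw [hmr]; push_cast; ring_nf
    · funext j
      rw [ad_part hadd j]
      split_ifs with hj
      · subst hj; omega
      · exact (hoff j hj).symm
  · rintro ⟨r, hadd, hc, rfl⟩
    refine ⟨r, fun j hj => (by rw [ad_part hadd j, if_neg hj]), ?_, ?_⟩
    · rw [ad_part hadd r, if_pos rfl]
    · rw [← hc]; unfold acol; rw [ad_part hadd r, if_pos rfl]; push_cast; ring_nf

open Classical in
noncomputable def remF (ℓ : ℕ) (lam : Partition') (i : ZMod ℓ) : Finset ℕ :=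
  (Finset.range (pbnd lam + 2)).filter (fun r => removable lam r ∧ rcol ℓ lam r = i)

open Classical in
noncomputable def addF (ℓ : ℕ) (lam : Partition') (i : ZMod ℓ) : Finset ℕ :=
  (Finset.range (pbnd lam + 2)).filter (fun r => addable lam r ∧ acol ℓ lam r = i)

lemma mem_remF {ℓ : ℕ} {lam : Partition'} {i : ZMod ℓ} {r : ℕ} :
    r ∈ remF ℓ lam i ↔ removable lam r ∧ rcol ℓ lam r = i := by
  classical
  unfold remF
  simp only [Finset.mem_filter, Finset.mem_range, and_iff_right_iff_imp]
  rintro ⟨h1, -⟩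
  by_contra hlt
  have := part_eq_zero lam (k := r) (by omega)
  unfold removable at h1; omega

lemma mem_addF {ℓ : ℕ} {lam : Partition'} {i : ZMod ℓ} {r : ℕ} :
    r ∈ addF ℓ lam i ↔ addable lam r ∧ acol ℓ lam r = i := by
  classical
  unfold addF
  simp only [Finset.mem_filter, Finset.mem_range, and_iff_right_iff_imp]
  rintro ⟨h1, -⟩
  rcases h1 with h0 | h1
  · omega
  · by_contra hlt
    have := part_eq_zero lam (k := r - 1) (by omega)
    omega

lemma rmB_inj {lam : Partition'} {r r' : ℕ} (h : removable lam r) (h' : removable lam r')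
    (he : rmB lam r = rmB lam r') : r = r' := by
  by_contra hne
  have h1 := rm_part h r
  have h2 := rm_part h' r
  rw [he] at h1
  rw [if_pos rfl] at h1
  rw [if_neg hne] at h2
  unfold removable at h
  omega

lemma adB_inj {lam : Partition'} {r r' : ℕ} (h : addable lam r) (h' : addable lam r')
    (he : adB lam r = adB lam r') : r = r' := by
  by_contra hne
  have ha1 := ad_part h r
  have ha2 := ad_part h' r
  rw [he] at ha1
  rw [if_pos rfl] at ha1
  rw [if_neg hne] at ha2
  omega

/-! ### Operators on basis vectors -/

lemma Eop_single (ℓ : ℕ) (i : ZMod ℓ) (lam : Partition') :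
    Eop ℓ i (Finsupp.single lam 1) =
      ∑ r ∈ remF ℓ lam i, Finsupp.single (rmB lam r) (1 : ℂ) := by
  classical
  unfold Eop
  rw [Finsupp.lift_apply, Finsupp.sum_single_index (by simp)]
  rw [one_smul]
  have hsub : (Function.support fun mu =>
      if IsBoxRemoval ℓ lam mu i then Finsupp.single mu (1 : ℂ) else 0) ⊆
      ((remF ℓ lam i).image (fun r => rmB lam r) : Finset Partition') := by
    intro mu hmu
    simp only [Function.mem_support] at hmu
    by_cases h : IsBoxRemoval ℓ lam mu i
    · rcases (isBoxRemoval_iff ℓ lam mu i).mp h with ⟨r, hrem, hcol, rfl⟩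
      simp only [Finset.coe_image, Set.mem_image, Finset.mem_coe]
      exact ⟨r, mem_remF.mpr ⟨hrem, hcol⟩, rfl⟩
    · simp [h] at hmu
  rw [finsum_eq_sum_of_support_subset _ hsub]
  rw [Finset.sum_image (fun r hr r' hr' he =>
    rmB_inj (mem_remF.mp hr).1 (mem_remF.mp hr').1 he)]
  refine Finset.sum_congr rfl (fun r hr => ?_)
  rw [if_pos ((isBoxRemoval_iff ℓ lam _ i).mpr ⟨r, (mem_remF.mp hr).1, (mem_remF.mp hr).2, rfl⟩)]

lemma Fop_single (ℓ : ℕ) (i : ZMod ℓ) (lam : Partition') :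
    Fop ℓ i (Finsupp.single lam 1) =
      ∑ r ∈ addF ℓ lam i, Finsupp.single (adB lam r) (1 : ℂ) := by
  classical
  unfold Fop
  rw [Finsupp.lift_apply, Finsupp.sum_single_index (by simp)]
  rw [one_smul]
  have hsub : (Function.support fun mu =>
      if IsBoxRemoval ℓ mu lam i then Finsupp.single mu (1 : ℂ) else 0) ⊆
      ((addF ℓ lam i).image (fun r => adB lam r) : Finset Partition') := by
    intro mu hmu
    simp only [Function.mem_support] at hmu
    by_cases h : IsBoxRemoval ℓ mu lam i
    · rcases (isBoxAddition_iff ℓ lam mu i).mp h with ⟨r, hadd, hcol, rfl⟩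
      simp only [Finset.coe_image, Set.mem_image, Finset.mem_coe]
      exact ⟨r, mem_addF.mpr ⟨hadd, hcol⟩, rfl⟩
    · simp [h] at hmu
  rw [finsum_eq_sum_of_support_subset _ hsub]
  rw [Finset.sum_image (fun r hr r' hr' he =>
    adB_inj (mem_addF.mp hr).1 (mem_addF.mp hr').1 he)]
  refine Finset.sum_congr rfl (fun r hr => ?_)
  rw [if_pos ((isBoxAddition_iff ℓ lam _ i).mpr ⟨r, (mem_addF.mp hr).1, (mem_addF.mp hr).2, rfl⟩)]

/-! ### The exchange lemma -/

lemma key_fwd {lam : Partition'} {r s : ℕ} (hrs : r ≠ s) (h1 : addable lam r)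
    (h2 : removable (adB lam r) s) :
    removable lam s ∧ addable (rmB lam s) r := by
  have hA := ad_part h1
  unfold removable at h2
  rw [hA s, hA (s + 1), if_neg (Ne.symm hrs)] at h2
  have h2' : removable lam s := by
    unfold removable
    split_ifs at h2 with hc
    · have he : lam.part (s + 1) = lam.part r := by rw [hc]
      omega
    · exact h2
  refine ⟨h2', ?_⟩
  have hR := rm_part h2'
  rcases h1 with h0 | h0
  · exact Or.inl h0
  · refine Or.inr ?_
    rw [hR r, if_neg hrs, hR (r - 1)]
    split_ifs with hd
    · have hr0 : r ≠ 0 := by rintro rfl; exact hrs (by omega : (0:ℕ) = s)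
      rw [if_pos (by omega : s + 1 = r)] at h2
      omega
    · exact h0

lemma key_bwd {lam : Partition'} {r s : ℕ} (hrs : r ≠ s) (h1 : removable lam s)
    (h2 : addable (rmB lam s) r) :
    addable lam r ∧ removable (adB lam r) s := by
  have hR := rm_part h1
  have h1' := h1
  unfold removable at h1'
  have hadd : addable lam r := by
    rcases h2 with h0 | h0
    · exact Or.inl h0
    · refine Or.inr ?_
      rw [hR r, if_neg hrs, hR (r - 1)] at h0
      split_ifs at h0 with hd
      · have he : lam.part (r - 1) = lam.part s := by rw [hd]
        omega
      · exact h0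
  refine ⟨hadd, ?_⟩
  have hA := ad_part hadd
  unfold removable
  rw [hA s, hA (s + 1), if_neg (Ne.symm hrs)]
  split_ifs with hc
  · rcases h2 with h0 | h0
    · omega
    · rw [hR r, if_neg hrs, hR (r - 1), if_pos (by omega : r - 1 = s)] at h0
      omega
  · exact h1'

lemma key_eq {lam : Partition'} {r s : ℕ} (hrs : r ≠ s) (h1 : addable lam r)
    (h2 : removable (adB lam r) s) :
    rmB (adB lam r) s = adB (rmB lam s) r := by
  obtain ⟨h1', h2'⟩ := key_fwd hrs h1 h2
  apply Partition'.ext'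
  funext j
  have e1 := rm_part h2 j
  have e2 := ad_part h2' j
  have e3 := ad_part h1
  have e4 := rm_part h1'
  rw [e1, e2]
  by_cases hjs : j = s <;> by_cases hjr : j = r
  · exact absurd (hjr.symm.trans hjs) hrs
  · rw [if_pos hjs, if_neg hjr, e3 s, if_neg (hjs ▸ hjr), e4 j, if_pos hjs]
  · rw [if_neg hjs, if_pos hjr, e3 j, if_pos hjr, e4 r, if_neg (hjr ▸ hjs)]
  · rw [if_neg hjs, if_neg hjr, e3 j, if_neg hjr, e4 j, if_neg hjs]

lemma adB_part_ne {lam : Partition'} {r : ℕ} (h : addable lam r) {j : ℕ} (hj : j ≠ r) :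
    (adB lam r).part j = lam.part j := by rw [ad_part h j, if_neg hj]

lemma rmB_part_ne {lam : Partition'} {r : ℕ} (h : removable lam r) {j : ℕ} (hj : j ≠ r) :
    (rmB lam r).part j = lam.part j := by rw [rm_part h j, if_neg hj]

lemma diag_add {lam : Partition'} {r : ℕ} (h : addable lam r) :
    removable (adB lam r) r ∧ rmB (adB lam r) r = lam := by
  have hA := ad_part h
  have hrem : removable (adB lam r) r := by
    unfold removable
    rw [hA r, if_pos rfl, hA (r + 1), if_neg (by omega)]
    have := lam.antitone r (r + 1) (by omega)
    omega
  refine ⟨hrem, Partition'.ext' ?_⟩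
  funext j
  rw [rm_part hrem j]
  split_ifs with hj
  · subst hj; rw [hA j, if_pos rfl]; omega
  · rw [hA j, if_neg hj]

lemma diag_rm {lam : Partition'} {s : ℕ} (h : removable lam s) :
    addable (rmB lam s) s ∧ adB (rmB lam s) s = lam := by
  have hR := rm_part h
  have h' := h
  unfold removable at h'
  have hadd : addable (rmB lam s) s := by
    rcases Nat.eq_zero_or_pos s with h0 | h0
    · exact Or.inl h0
    · refine Or.inr ?_
      rw [hR s, if_pos rfl, hR (s - 1), if_neg (by omega)]
      have := lam.antitone (s - 1) s (by omega)
      omega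
  refine ⟨hadd, Partition'.ext' ?_⟩
  funext j
  rw [ad_part hadd j]
  split_ifs with hj
  · subst hj; rw [hR j, if_pos rfl]; omega
  · rw [hR j, if_neg hj]

/-! ### Membership transfer -/

lemma sigma_fwd {ℓ : ℕ} {i j : ZMod ℓ} {lam : Partition'} {r s : ℕ} (hrs : r ≠ s)
    (hr : r ∈ addF ℓ lam j) (hs : s ∈ remF ℓ (adB lam r) i) :
    s ∈ remF ℓ lam i ∧ r ∈ addF ℓ (rmB lam s) j := by
  obtain ⟨hadd, hcol⟩ := mem_addF.mp hr
  obtain ⟨hrem, hcol'⟩ := mem_remF.mp hs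
  obtain ⟨h1', h2'⟩ := key_fwd hrs hadd hrem
  refine ⟨mem_remF.mpr ⟨h1', ?_⟩, mem_addF.mpr ⟨h2', ?_⟩⟩
  · rw [← hcol']; unfold rcol; rw [adB_part_ne hadd (Ne.symm hrs)]
  · rw [← hcol]; unfold acol; rw [rmB_part_ne h1' hrs]

lemma sigma_bwd {ℓ : ℕ} {i j : ZMod ℓ} {lam : Partition'} {r s : ℕ} (hrs : r ≠ s)
    (hs : s ∈ remF ℓ lam i) (hr : r ∈ addF ℓ (rmB lam s) j) :
    r ∈ addF ℓ lam j ∧ s ∈ remF ℓ (adB lam r) i := by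
  obtain ⟨hrem, hcol⟩ := mem_remF.mp hs
  obtain ⟨hadd, hcol'⟩ := mem_addF.mp hr
  obtain ⟨h1', h2'⟩ := key_bwd hrs hrem hadd
  refine ⟨mem_addF.mpr ⟨h1', ?_⟩, mem_remF.mpr ⟨h2', ?_⟩⟩
  · rw [← hcol']; unfold acol; rw [rmB_part_ne hrem hrs]
  · rw [← hcol]; unfold rcol; rw [adB_part_ne h1' (Ne.symm hrs)]

/-! ### Off-diagonal sums agree -/

lemma offdiag (ℓ : ℕ) (i j : ZMod ℓ) (lam : Partition') :
    ∑ r ∈ addF ℓ lam j, ∑ s ∈ (remF ℓ (adB lam r) i).erase r,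
        Finsupp.single (rmB (adB lam r) s) (1 : ℂ)
      = ∑ s ∈ remF ℓ lam i, ∑ r ∈ (addF ℓ (rmB lam s) j).erase s,
        Finsupp.single (adB (rmB lam s) r) (1 : ℂ) := by
  rw [Finset.sum_sigma', Finset.sum_sigma']
  refine Finset.sum_bij' (fun p _ => ⟨p.2, p.1⟩) (fun p _ => ⟨p.2, p.1⟩) ?_ ?_ ?_ ?_ ?_
  · rintro ⟨r, s⟩ hp
    dsimp only
    rw [Finset.mem_sigma] at hp ⊢
    obtain ⟨h1, h2⟩ := hp
    rw [Finset.mem_erase] at h2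
    obtain ⟨hne, h2⟩ := h2
    obtain ⟨hs, hr⟩ := sigma_fwd (Ne.symm hne) h1 h2
    exact ⟨hs, Finset.mem_erase.mpr ⟨Ne.symm hne, hr⟩⟩
  · rintro ⟨s, r⟩ hp
    dsimp only
    rw [Finset.mem_sigma] at hp ⊢
    obtain ⟨h1, h2⟩ := hp
    rw [Finset.mem_erase] at h2
    obtain ⟨hne, h2⟩ := h2
    obtain ⟨hr, hs⟩ := sigma_bwd hne h1 h2
    exact ⟨hr, Finset.mem_erase.mpr ⟨Ne.symm hne, hs⟩⟩
  · rintro ⟨r, s⟩ _; rfl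
  · rintro ⟨s, r⟩ _; rfl
  · rintro ⟨r, s⟩ hp
    rw [Finset.mem_sigma] at hp
    obtain ⟨h1, h2⟩ := hp
    rw [Finset.mem_erase] at h2
    obtain ⟨hne, h2⟩ := h2
    rw [key_eq (Ne.symm hne) (mem_addF.mp h1).1 (mem_remF.mp h2).1]

/-! ### Colors on the diagonal -/

lemma rcol_adB {ℓ : ℕ} {lam : Partition'} {r : ℕ} (h : addable lam r) :
    rcol ℓ (adB lam r) r = acol ℓ lam r := by
  unfold rcol acol
  rw [ad_part h r, if_pos rfl]
  push_cast
  try ring_nf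

lemma acol_rmB {ℓ : ℕ} {lam : Partition'} {s : ℕ} (h : removable lam s) :
    acol ℓ (rmB lam s) s = rcol ℓ lam s := by
  have h' := h
  unfold removable at h'
  unfold rcol acol
  rw [rm_part h s, if_pos rfl]
  have : ((lam.part s - 1 : ℕ) : ℤ) = (lam.part s : ℤ) - 1 := by omega
  rw [this]
  try ring_nf

lemma mem_remF_diag {ℓ : ℕ} {i : ZMod ℓ} {lam : Partition'} {r : ℕ}
    (hr : r ∈ addF ℓ lam i) : r ∈ remF ℓ (adB lam r) i := by
  obtain ⟨hadd, hcol⟩ := mem_addF.mp hr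
  exact mem_remF.mpr ⟨(diag_add hadd).1, by rw [rcol_adB hadd]; exact hcol⟩

lemma mem_addF_diag {ℓ : ℕ} {i : ZMod ℓ} {lam : Partition'} {s : ℕ}
    (hs : s ∈ remF ℓ lam i) : s ∈ addF ℓ (rmB lam s) i := by
  obtain ⟨hrem, hcol⟩ := mem_remF.mp hs
  exact mem_addF.mpr ⟨(diag_rm hrem).1, by rw [acol_rmB hrem]; exact hcol⟩

lemma not_mem_remF_diag {ℓ : ℕ} {i j : ZMod ℓ} (hij : i ≠ j) {lam : Partition'} {r : ℕ}
    (hr : r ∈ addF ℓ lam j) : r ∉ remF ℓ (adB lam r) i := by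
  intro hmem
  obtain ⟨hadd, hcol⟩ := mem_addF.mp hr
  obtain ⟨-, hcol'⟩ := mem_remF.mp hmem
  rw [rcol_adB hadd, hcol] at hcol'
  exact hij hcol'.symm

lemma not_mem_addF_diag {ℓ : ℕ} {i j : ZMod ℓ} (hij : i ≠ j) {lam : Partition'} {s : ℕ}
    (hs : s ∈ remF ℓ lam i) : s ∉ addF ℓ (rmB lam s) j := by
  intro hmem
  obtain ⟨hrem, hcol⟩ := mem_remF.mp hs
  obtain ⟨-, hcol'⟩ := mem_addF.mp hmem
  rw [acol_rmB hrem, hcol] at hcol'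
  exact hij hcol'

/-! ### Compositions on basis vectors -/

lemma EF_single (ℓ : ℕ) (i j : ZMod ℓ) (lam : Partition') :
    Eop ℓ i (Fop ℓ j (Finsupp.single lam 1)) =
      ∑ r ∈ addF ℓ lam j, ∑ s ∈ remF ℓ (adB lam r) i,
        Finsupp.single (rmB (adB lam r) s) (1 : ℂ) := by
  rw [Fop_single, map_sum]
  exact Finset.sum_congr rfl fun r _ => Eop_single ℓ i (adB lam r)

lemma FE_single (ℓ : ℕ) (i j : ZMod ℓ) (lam : Partition') :
    Fop ℓ j (Eop ℓ i (Finsupp.single lam 1)) =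
      ∑ s ∈ remF ℓ lam i, ∑ r ∈ addF ℓ (rmB lam s) j,
        Finsupp.single (adB (rmB lam s) r) (1 : ℂ) := by
  rw [Eop_single, map_sum]
  exact Finset.sum_congr rfl fun s _ => Fop_single ℓ j (rmB lam s)

/-! ### Counting lemmas -/

lemma ncard_add (ℓ : ℕ) (i : ZMod ℓ) (lam : Partition') :
    {mu : Partition' | IsBoxRemoval ℓ mu lam i}.ncard = (addF ℓ lam i).card := by
  classical
  have hset : {mu : Partition' | IsBoxRemoval ℓ mu lam i}
      = ↑((addF ℓ lam i).image (adB lam)) := by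
    ext mu
    simp only [Set.mem_setOf_eq, Finset.coe_image, Set.mem_image, Finset.mem_coe]
    rw [isBoxAddition_iff]
    constructor
    · rintro ⟨r, h1, h2, rfl⟩; exact ⟨r, mem_addF.mpr ⟨h1, h2⟩, rfl⟩
    · rintro ⟨r, hr, rfl⟩; exact ⟨r, (mem_addF.mp hr).1, (mem_addF.mp hr).2, rfl⟩
  rw [hset, Set.ncard_coe_finset,
    Finset.card_image_of_injOn (fun r hr r' hr' =>
      adB_inj (mem_addF.mp hr).1 (mem_addF.mp hr').1)]

lemma ncard_rem (ℓ : ℕ) (i : ZMod ℓ) (lam : Partition') :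
    {mu : Partition' | IsBoxRemoval ℓ lam mu i}.ncard = (remF ℓ lam i).card := by
  classical
  have hset : {mu : Partition' | IsBoxRemoval ℓ lam mu i}
      = ↑((remF ℓ lam i).image (rmB lam)) := by
    ext mu
    simp only [Set.mem_setOf_eq, Finset.coe_image, Set.mem_image, Finset.mem_coe]
    rw [isBoxRemoval_iff]
    constructor
    · rintro ⟨r, h1, h2, rfl⟩; exact ⟨r, mem_remF.mpr ⟨h1, h2⟩, rfl⟩
    · rintro ⟨r, hr, rfl⟩; exact ⟨r, (mem_remF.mp hr).1, (mem_remF.mp hr).2, rfl⟩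
  rw [hset, Set.ncard_coe_finset,
    Finset.card_image_of_injOn (fun r hr r' hr' =>
      rmB_inj (mem_remF.mp hr).1 (mem_remF.mp hr').1)]


theorem stmt16 (ℓ : ℕ) (hℓ : 2 ≤ ℓ) :
    (∀ i j : ZMod ℓ, i ≠ j → Eop ℓ i ∘ₗ Fop ℓ j = Fop ℓ j ∘ₗ Eop ℓ i) ∧
    (∀ i : ZMod ℓ, ∀ lam : Partition',
      (Eop ℓ i ∘ₗ Fop ℓ i - Fop ℓ i ∘ₗ Eop ℓ i) (Finsupp.single lam (1 : ℂ))
        = ((({mu : Partition' | IsBoxRemoval ℓ mu lam i}.ncard : ℂ)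
            - ({mu : Partition' | IsBoxRemoval ℓ lam mu i}.ncard : ℂ)))
            • Finsupp.single lam (1 : ℂ)) := by
  constructor
  · intro i j hij
    apply Finsupp.lhom_ext
    intro lam c
    have hb : (Finsupp.single lam c : F0) = c • Finsupp.single lam 1 := by
      rw [Finsupp.smul_single, smul_eq_mul, mul_one]
    rw [LinearMap.comp_apply, LinearMap.comp_apply, hb, map_smul, map_smul, map_smul,
      map_smul]
    congr 1
    calc Eop ℓ i (Fop ℓ j (Finsupp.single lam 1))
        = ∑ r ∈ addF ℓ lam j, ∑ s ∈ remF ℓ (adB lam r) i,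
            Finsupp.single (rmB (adB lam r) s) (1 : ℂ) := EF_single ℓ i j lam
      _ = ∑ r ∈ addF ℓ lam j, ∑ s ∈ (remF ℓ (adB lam r) i).erase r,
            Finsupp.single (rmB (adB lam r) s) (1 : ℂ) := by
          refine Finset.sum_congr rfl fun r hr => ?_
          rw [Finset.erase_eq_of_notMem (not_mem_remF_diag hij hr)]
      _ = ∑ s ∈ remF ℓ lam i, ∑ r ∈ (addF ℓ (rmB lam s) j).erase s,
            Finsupp.single (adB (rmB lam s) r) (1 : ℂ) := offdiag ℓ i j lam
      _ = ∑ s ∈ remF ℓ lam i, ∑ r ∈ addF ℓ (rmB lam s) j,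
            Finsupp.single (adB (rmB lam s) r) (1 : ℂ) := by
          refine Finset.sum_congr rfl fun s hs => ?_
          rw [Finset.erase_eq_of_notMem (not_mem_addF_diag hij hs)]
      _ = Fop ℓ j (Eop ℓ i (Finsupp.single lam 1)) := (FE_single ℓ i j lam).symm
  · intro i lam
    have hEF : Eop ℓ i (Fop ℓ i (Finsupp.single lam 1)) =
        (addF ℓ lam i).card • (Finsupp.single lam 1 : F0) +
          ∑ r ∈ addF ℓ lam i, ∑ s ∈ (remF ℓ (adB lam r) i).erase r,
            Finsupp.single (rmB (adB lam r) s) (1 : ℂ) := by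
      rw [EF_single]
      have hsplit : ∀ r ∈ addF ℓ lam i,
          ∑ s ∈ remF ℓ (adB lam r) i, Finsupp.single (rmB (adB lam r) s) (1 : ℂ)
            = Finsupp.single lam (1 : ℂ) +
              ∑ s ∈ (remF ℓ (adB lam r) i).erase r,
                Finsupp.single (rmB (adB lam r) s) (1 : ℂ) := by
        intro r hr
        rw [← Finset.add_sum_erase _ _ (mem_remF_diag hr)]
        congr 2
        exact (diag_add (mem_addF.mp hr).1).2
      rw [Finset.sum_congr rfl hsplit, Finset.sum_add_distrib, Finset.sum_const]
    have hFE : Fop ℓ i (Eop ℓ i (Finsupp.single lam 1)) =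
        (remF ℓ lam i).card • (Finsupp.single lam 1 : F0) +
          ∑ s ∈ remF ℓ lam i, ∑ r ∈ (addF ℓ (rmB lam s) i).erase s,
            Finsupp.single (adB (rmB lam s) r) (1 : ℂ) := by
      rw [FE_single]
      have hsplit : ∀ s ∈ remF ℓ lam i,
          ∑ r ∈ addF ℓ (rmB lam s) i, Finsupp.single (adB (rmB lam s) r) (1 : ℂ)
            = Finsupp.single lam (1 : ℂ) +
              ∑ r ∈ (addF ℓ (rmB lam s) i).erase s,
                Finsupp.single (adB (rmB lam s) r) (1 : ℂ) := by
        intro s hs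
        rw [← Finset.add_sum_erase _ _ (mem_addF_diag hs)]
        congr 2
        exact (diag_rm (mem_remF.mp hs).1).2
      rw [Finset.sum_congr rfl hsplit, Finset.sum_add_distrib, Finset.sum_const]
    rw [LinearMap.sub_apply, LinearMap.comp_apply, LinearMap.comp_apply, hEF, hFE,
      offdiag ℓ i i lam, add_sub_add_right_eq_sub, ncard_add, ncard_rem, sub_smul]
    congr 1 <;> exact (Nat.cast_smul_eq_nsmul ℂ _ _).symm
end

section
/- Fix ℓ ≥ 2, let K = ℂ(q) be the field of rational functions in the variable q, and let F_q be the free K-vector space with basis the set of all partitions. For a residue i ∈ ℤ/ℓℤ, say a box in row r, column c has color i if c − r ≡ i (mod ℓ). For a box b of color i addable to or removable from λ, let N_i^a(λ, b) (resp. N_i^r(λ, b)) be the number of addable boxes of color i of λ whose column-minus-row value is strictly greater (resp. strictly smaller) than that of b, minus the number of removable boxes of color i of λ whose column-minus-row value is strictly greater (resp. strictly smaller) than that of b. Define K-linear operators on F_q: E_i(λ) = Σ q^{−N_i^r(μ, λ\μ)} μ over partitions μ ⊆ λ with λ\μ a single box of color i, and F_i(λ) = Σ q^{N_i^a(λ,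 μ\λ)} μ over partitions μ ⊇ λ with μ\λ a single box of color i, and let K_i be the diagonal operator K_i(λ) = q^{a_i(λ) − r_i(λ)}·λ where a_i(λ), r_i(λ) are the numbers of addable and removable boxes of color i of λ. Then for each residue i: E_i F_i − F_i E_i = (K_i − K_i^{−1})/(q − q^{−1}), and for residues i ≠ j: E_i F_j = F_j E_i. (These are the U_q(ŝl_ℓ) relations of the Misra–Miwa Fock space representation.) -/
/-- The field K = ℂ(q) of rational functions. -/
abbrev K : Type := RatFunc ℂ

/-- The variable q of K = ℂ(q). -/
noncomputable def qv : K := RatFunc.X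

/-- The free K-vector space on the set of partitions. -/
abbrev Fq : Type := Partition' →₀ K

/-- `AddableDiag lam d` : λ has an addable box with column-minus-row value d
(where rows and columns are 1-indexed). -/
def AddableDiag (lam : Partition') (d : ℤ) : Prop :=
  ∃ (mu : Partition') (r : ℕ), (∀ j : ℕ, j ≠ r → mu.part j = lam.part j) ∧
    mu.part r = lam.part r + 1 ∧ d = (lam.part r : ℤ) - (r : ℤ)

/-- `RemovableDiag lam d` : λ has a removable box with column-minus-row value d. -/
def RemovableDiag (lam : Partition') (d : ℤ) : Prop :=
  ∃ (mu : Partition') (r : ℕ), (∀ j : ℕ, j ≠ r → mu.part j = lam.part j) ∧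
    mu.part r + 1 = lam.part r ∧ d = (lam.part r : ℤ) - 1 - (r : ℤ)

/-- The number a_i(λ) of addable boxes of λ of color i. -/
noncomputable def ai (ℓ : ℕ) (i : ZMod ℓ) (lam : Partition') : ℕ :=
  {e : ℤ | AddableDiag lam e ∧ ((e : ZMod ℓ) = i)}.ncard

/-- The number r_i(λ) of removable boxes of λ of color i. -/
noncomputable def ri (ℓ : ℕ) (i : ZMod ℓ) (lam : Partition') : ℕ :=
  {e : ℤ | RemovableDiag lam e ∧ ((e : ZMod ℓ) = i)}.ncard

/-- N_i^a(λ, b) for a box b with column-minus-row value d: the number of addable boxes of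
color i of λ with column-minus-row value strictly greater than d, minus the number of
removable boxes of color i of λ with column-minus-row value strictly greater than d. -/
noncomputable def Na (ℓ : ℕ) (i : ZMod ℓ) (lam : Partition') (d : ℤ) : ℤ :=
  ({e : ℤ | AddableDiag lam e ∧ ((e : ZMod ℓ) = i) ∧ d < e}.ncard : ℤ)
    - ({e : ℤ | RemovableDiag lam e ∧ ((e : ZMod ℓ) = i) ∧ d < e}.ncard : ℤ)

/-- N_i^r(λ, b) for a box b with column-minus-row value d: as N_i^a but with
column-minus-row value strictly smaller than d. -/
noncomputable def Nr (ℓ : ℕ) (i : ZMod ℓ) (lam : Partition') (d : ℤ) : ℤ :=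
  ({e : ℤ | AddableDiag lam e ∧ ((e : ZMod ℓ) = i) ∧ e < d}.ncard : ℤ)
    - ({e : ℤ | RemovableDiag lam e ∧ ((e : ZMod ℓ) = i) ∧ e < d}.ncard : ℤ)

open Classical in
/-- The operator E_i(λ) = Σ q^{−N_i^r(μ, λ\μ)} μ over partitions μ ⊆ λ with λ\μ a single
box of color i. -/
noncomputable def EqOp (ℓ : ℕ) (i : ZMod ℓ) : Fq →ₗ[K] Fq :=
  Finsupp.lift Fq K Partition' fun lam =>
    ∑ᶠ mu : Partition', ∑ᶠ r : ℕ,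
      if (∀ j : ℕ, j ≠ r → mu.part j = lam.part j) ∧ mu.part r + 1 = lam.part r ∧
          ((((lam.part r : ℤ) - 1 - (r : ℤ)) : ℤ) : ZMod ℓ) = i
      then (qv ^ (-(Nr ℓ i mu ((lam.part r : ℤ) - 1 - (r : ℤ))))) • Finsupp.single mu (1 : K)
      else 0

open Classical in
/-- The operator F_i(λ) = Σ q^{N_i^a(λ, μ\λ)} μ over partitions μ ⊇ λ with μ\λ a single
box of color i. -/
noncomputable def FqOp (ℓ : ℕ) (i : ZMod ℓ) : Fq →ₗ[K] Fq :=
  Finsupp.lift Fq K Partition' fun lam =>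
    ∑ᶠ mu : Partition', ∑ᶠ r : ℕ,
      if (∀ j : ℕ, j ≠ r → mu.part j = lam.part j) ∧ mu.part r = lam.part r + 1 ∧
          ((((lam.part r : ℤ) - (r : ℤ)) : ℤ) : ZMod ℓ) = i
      then (qv ^ (Na ℓ i lam ((lam.part r : ℤ) - (r : ℤ)))) • Finsupp.single mu (1 : K)
      else 0

/-- The diagonal operator K_i(λ) = q^{a_i(λ) − r_i(λ)}·λ. -/
noncomputable def KqOp (ℓ : ℕ) (i : ZMod ℓ) : Fq →ₗ[K] Fq :=
  Finsupp.lift Fq K Partition' fun lam =>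
    (qv ^ ((ai ℓ i lam : ℤ) - (ri ℓ i lam : ℤ))) • Finsupp.single lam (1 : K)

/-- The inverse diagonal operator K_i⁻¹(λ) = q^{r_i(λ) − a_i(λ)}·λ. -/
noncomputable def KqInvOp (ℓ : ℕ) (i : ZMod ℓ) : Fq →ₗ[K] Fq :=
  Finsupp.lift Fq K Partition' fun lam =>
    (qv ^ ((ri ℓ i lam : ℤ) - (ai ℓ i lam : ℤ))) • Finsupp.single lam (1 : K)

namespace MM

theorem Partition'.ext' {mu nu : Partition'} (h : ∀ r, mu.part r = nu.part r) : mu = nu := by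
  cases mu; cases nu
  simp only [Partition'.mk.injEq]
  funext r; exact h r

/-- strict antitonicity of r ↦ λ_r - r -/
theorem diag_lt (lam : Partition') {r s : ℕ} (h : r < s) :
    (lam.part s : ℤ) - s < (lam.part r : ℤ) - r := by
  have := lam.antitone r s h.le
  omega

theorem diag_inj (lam : Partition') {r s : ℕ}
    (h : (lam.part r : ℤ) - r = (lam.part s : ℤ) - s) : r = s := by
  rcases lt_trichotomy r s with h' | h' | h'
  · exact absurd h (by have := diag_lt lam h'; omega)
  · exact h'
  · exact absurd h (by have := diag_lt lam h'; omega)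

def InS (lam : Partition') (d : ℤ) : Prop := ∃ r : ℕ, (lam.part r : ℤ) - r = d

/-- a bound for the partition -/
noncomputable def NB (lam : Partition') : ℕ := lam.eventually_zero.choose

theorem NB_spec (lam : Partition') {r : ℕ} (h : NB lam ≤ r) : lam.part r = 0 :=
  lam.eventually_zero.choose_spec r h

theorem InS_low (lam : Partition') {d : ℤ} (h : d ≤ -(NB lam : ℤ)) : InS lam d := by
  refine ⟨(-d).toNat, ?_⟩
  have h0 : (0:ℤ) ≤ -d := by omega
  have h1 : (NB lam : ℤ) ≤ (-d).toNat := by omega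
  have := NB_spec lam (r := (-d).toNat) (by exact_mod_cast h1)
  rw [this]
  omega

theorem not_InS_high (lam : Partition') {d : ℤ} (h : (lam.part 0 : ℤ) < d) : ¬ InS lam d := by
  rintro ⟨r, hr⟩
  have := lam.antitone 0 r (Nat.zero_le r)
  omega

theorem addable_iff (lam : Partition') (d : ℤ) :
    AddableDiag lam d ↔ InS lam d ∧ ¬ InS lam (d + 1) := by
  constructor
  · rintro ⟨mu, r, hoff, hr, hd⟩
    refine ⟨⟨r, hd.symm⟩, ?_⟩
    rintro ⟨k, hk⟩
    have hkr : k ≠ r := by intro h; subst h; omega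
    rcases lt_or_gt_of_ne hkr with hlt | hgt
    · -- k < r, so r ≥ 1
      have hr1 : 1 ≤ r := by omega
      have hk1 : k ≤ r - 1 := by omega
      have h1 : (lam.part (r-1) : ℤ) - (r-1 : ℕ) ≤ (lam.part k : ℤ) - k := by
        rcases eq_or_lt_of_le hk1 with h | h
        · rw [h]
        · exact (diag_lt lam h).le
      -- mu antitone gives lam.part (r-1) ≥ lam.part r + 1
      have h2 : mu.part r ≤ mu.part (r-1) := mu.antitone (r-1) r (by omega)
      rw [hr, hoff (r-1) (by omega)] at h2
      have hc : ((r - 1 : ℕ) : ℤ) = (r : ℤ) - 1 := by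
        rw [Nat.cast_sub hr1]; norm_num
      rw [hc] at h1
      omega
    · have := diag_lt lam hgt
      omega
  · rintro ⟨⟨r, hr⟩, hnot⟩
    have key : ∀ j, j < r → lam.part r < lam.part j := by
      intro j hj
      by_contra hle
      push_neg at hle
      have h1 : lam.part (r-1) ≤ lam.part j := by
        rcases eq_or_lt_of_le (Nat.le_sub_one_of_lt hj) with h | h
        · rw [h]
        · exact lam.antitone j (r-1) h.le
      have h2 : lam.part r ≤ lam.part (r-1) := lam.antitone (r-1) r (by omega)
      have h3 : lam.part (r-1) = lam.part r := by omega
      exact hnot ⟨r - 1, by rw [h3, Nat.cast_sub (by omega : 1 ≤ r)]; omega⟩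
    refine ⟨⟨fun j => if j = r then lam.part r + 1 else lam.part j, ?_, ?_⟩, r, ?_, ?_, ?_⟩
    · intro a b hab
      split_ifs with h1 h2 h2
      · exact le_refl _
      · -- b = r, a ≠ r : a < r
        have ha : a < r := by omega
        have := key a ha
        omega
      · -- a = r, b ≠ r : b > r
        have : lam.part b ≤ lam.part r := lam.antitone r b (by omega)
        omega
      · exact lam.antitone a b hab
    · exact ⟨NB lam + r + 1, fun j hj => by
        have : j ≠ r := by omega
        simp only [this, if_false]
        exact NB_spec lam (by omega)⟩
    · intro j hj; simp [hj]
    · simp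
    · omega

theorem removable_iff (lam : Partition') (d : ℤ) :
    RemovableDiag lam d ↔ ¬ InS lam d ∧ InS lam (d + 1) := by
  constructor
  · rintro ⟨mu, r, hoff, hr, hd⟩
    refine ⟨?_, ⟨r, by omega⟩⟩
    rintro ⟨k, hk⟩
    have hkr : k ≠ r := by intro h; subst h; omega
    rcases lt_or_gt_of_ne hkr with hlt | hgt
    · have := diag_lt lam hlt; omega
    · -- k > r : k ≥ r+1
      have h1 : (lam.part k : ℤ) - k ≤ (lam.part (r+1) : ℤ) - (r+1 : ℕ) := by
        rcases eq_or_lt_of_le (Nat.succ_le_of_lt hgt) with h | h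
        · rw [← h]
        · exact (diag_lt lam h).le
      have h2 : mu.part (r+1) ≤ mu.part r := mu.antitone r (r+1) (by omega)
      rw [hoff (r+1) (by omega)] at h2
      push_cast at h1
      omega
  · rintro ⟨hnot, ⟨r, hr⟩⟩
    have hpos : 1 ≤ lam.part r := by
      by_contra h
      have h0 : lam.part r = 0 := by omega
      have h1 : lam.part (r+1) = 0 :=
        Nat.le_zero.mp (h0 ▸ lam.antitone r (r+1) (by omega))
      exact hnot ⟨r + 1, by rw [h1]; push_cast; omega⟩
    have hstep : lam.part (r+1) < lam.part r := by
      rcases eq_or_lt_of_le (lam.antitone r (r+1) (by omega)) with h | h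
      · exact absurd ⟨r + 1, by rw [h]; push_cast; omega⟩ hnot
      · exact h
    refine ⟨⟨fun j => if j = r then lam.part r - 1 else lam.part j, ?_, ?_⟩, r, ?_, ?_, ?_⟩
    · intro a b hab
      split_ifs with h1 h2 h2
      · exact le_refl _
      · have ha : a < r := by omega
        have := lam.antitone a r ha.le
        omega
      · have hb : r + 1 ≤ b := by omega
        have := lam.antitone (r+1) b hb
        omega
      · exact lam.antitone a b hab
    · exact ⟨NB lam + r + 1, fun j hj => by
        have : j ≠ r := by omega
        simp only [this, if_false]
        exact NB_spec lam (by omega)⟩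
    · intro j hj; simp [hj]
    · simp; omega
    · omega

end MM
namespace MM

open Classical in
noncomputable def g (lam : Partition') (e : ℤ) : ℤ :=
  (if InS lam e then 1 else 0) - (if InS lam (e + 1) then 1 else 0)

open Classical in
theorem addable_iff_g (lam : Partition') (d : ℤ) : AddableDiag lam d ↔ g lam d = 1 := by
  rw [addable_iff, g]
  split_ifs with h1 h2 h2 <;> simp_all <;> omega

open Classical in
theorem removable_iff_g (lam : Partition') (d : ℤ) : RemovableDiag lam d ↔ g lam d = -1 := by
  rw [removable_iff, g]
  split_ifs with h1 h2 h2 <;> simp_all <;> omega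

open Classical in
theorem g_mem (lam : Partition') (e : ℤ) : g lam e = -1 ∨ g lam e = 0 ∨ g lam e = 1 := by
  rw [g]; split_ifs <;> omega

theorem g_supp (lam : Partition') {e : ℤ} (h : g lam e ≠ 0) :
    -(NB lam : ℤ) - 1 ≤ e ∧ e ≤ (lam.part 0 : ℤ) := by
  constructor
  · by_contra hc
    push_neg at hc
    have h1 : InS lam e := InS_low lam (by omega)
    have h2 : InS lam (e+1) := InS_low lam (by omega)
    rw [g] at h
    simp [h1, h2] at h
  · by_contra hc
    push_neg at hc
    have h1 : ¬ InS lam e := not_InS_high lam (by omega)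
    have h2 : ¬ InS lam (e+1) := not_InS_high lam (by omega)
    rw [g] at h
    simp [h1, h2] at h

/-- mu is lam with a box added in row r. -/
def IsAdd (lam mu : Partition') (r : ℕ) : Prop :=
  (∀ j : ℕ, j ≠ r → mu.part j = lam.part j) ∧ mu.part r = lam.part r + 1

theorem IsAdd.addable {lam mu : Partition'} {r : ℕ} (h : IsAdd lam mu r) :
    AddableDiag lam ((lam.part r : ℤ) - r) := ⟨mu, r, h.1, h.2, rfl⟩

theorem IsAdd.removable {lam mu : Partition'} {r : ℕ} (h : IsAdd lam mu r) :
    RemovableDiag mu ((lam.part r : ℤ) - r) := by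
  refine ⟨lam, r, fun j hj => (h.1 j hj).symm, h.2.symm, ?_⟩
  rw [h.2]; push_cast; ring

theorem IsAdd.inS_iff {lam mu : Partition'} {r : ℕ} (h : IsAdd lam mu r) (e : ℤ) :
    InS mu e ↔ (e = (lam.part r : ℤ) - r + 1 ∨ (InS lam e ∧ e ≠ (lam.part r : ℤ) - r)) := by
  constructor
  · rintro ⟨k, hk⟩
    by_cases hkr : k = r
    · subst hkr
      left; rw [h.2] at hk; push_cast at hk; omega
    · right
      rw [h.1 k hkr] at hk
      refine ⟨⟨k, hk⟩, fun he => hkr (diag_inj lam (by omega))⟩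
  · rintro (he | ⟨⟨k, hk⟩, hne⟩)
    · exact ⟨r, by rw [h.2]; push_cast; omega⟩
    · have hkr : k ≠ r := fun hc => hne (by rw [← hc]; omega)
      exact ⟨k, by rw [h.1 k hkr]; exact hk⟩

open Classical in
theorem IsAdd.g_eq {lam mu : Partition'} {r : ℕ} (h : IsAdd lam mu r) (e : ℤ) :
    g mu e = g lam e + (if e = (lam.part r : ℤ) - r - 1 then 1 else 0)
      + (if e = (lam.part r : ℤ) - r then -2 else 0)
      + (if e = (lam.part r : ℤ) - r + 1 then 1 else 0) := by
  set d := (lam.part r : ℤ) - r with hd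
  have hin : InS lam d := ⟨r, rfl⟩
  have hnot : ¬ InS lam (d + 1) := ((addable_iff lam d).mp h.addable).2
  have key : ∀ f : ℤ, (if InS mu f then (1:ℤ) else 0)
      = (if InS lam f then 1 else 0) + (if f = d + 1 then 1 else 0)
        - (if f = d then 1 else 0) := by
    intro f
    rw [if_congr (h.inS_iff f) (rfl) (rfl)]
    by_cases h1 : f = d
    · subst h1
      rw [if_neg (by rintro (hc | ⟨-, hc⟩) <;> omega), if_pos hin,
        if_neg (by omega : ¬ (d : ℤ) = d + 1), if_pos rfl]
      norm_num
    · by_cases h2 : f = d + 1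
      · subst h2
        rw [if_pos (Or.inl rfl), if_neg hnot, if_pos rfl, if_neg (by omega : ¬ (d+1 : ℤ) = d)]
        norm_num
      · by_cases h3 : InS lam f
        · rw [if_pos (Or.inr ⟨h3, h1⟩), if_pos h3, if_neg h2, if_neg h1]
          norm_num
        · rw [if_neg (by rintro (hc | ⟨hc, -⟩); exacts [h2 hc, h3 hc]),
            if_neg h3, if_neg h2, if_neg h1]
          norm_num

  rw [g, g, key e, key (e+1)]
  split_ifs <;> omega

open Classical in
noncomputable def addAt (lam : Partition') (d : ℤ) : Partition' :=
  if h : AddableDiag lam d then h.choose else lam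

open Classical in
noncomputable def remAt (lam : Partition') (d : ℤ) : Partition' :=
  if h : RemovableDiag lam d then h.choose else lam

theorem addAt_spec {lam : Partition'} {d : ℤ} (h : AddableDiag lam d) :
    ∃ r : ℕ, IsAdd lam (addAt lam d) r ∧ (lam.part r : ℤ) - r = d := by
  rw [addAt, dif_pos h]
  obtain ⟨r, h1, h2, h3⟩ := h.choose_spec
  exact ⟨r, ⟨h1, h2⟩, h3.symm⟩

theorem remAt_spec {lam : Partition'} {d : ℤ} (h : RemovableDiag lam d) :
    ∃ r : ℕ, IsAdd (remAt lam d) lam r ∧ ((remAt lam d).part r : ℤ) - r = d := by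
  rw [remAt, dif_pos h]
  obtain ⟨r, h1, h2, h3⟩ := h.choose_spec
  refine ⟨r, ⟨fun j hj => (h1 j hj).symm, h2.symm⟩, ?_⟩
  have : (h.choose.part r : ℤ) + 1 = (lam.part r : ℤ) := by exact_mod_cast congrArg (Nat.cast (R := ℤ)) h2
  omega

/-- row uniqueness: a partition can be obtained from lam by adding a box in at most one way
    for a given result -/
theorem IsAdd.row_unique {lam mu : Partition'} {r s : ℕ}
    (h1 : IsAdd lam mu r) (h2 : IsAdd lam mu s) : r = s := by
  by_contra hne
  have e1 : mu.part r = lam.part r + 1 := h1.2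
  have e2 : mu.part r = lam.part r := h2.1 r hne
  omega

/-- if two box-additions to lam are at the same diagonal, results are equal -/
theorem IsAdd.unique {lam mu nu : Partition'} {r s : ℕ}
    (h1 : IsAdd lam mu r) (h2 : IsAdd lam nu s)
    (hd : (lam.part r : ℤ) - r = (lam.part s : ℤ) - s) : mu = nu := by
  have hrs : r = s := diag_inj lam hd
  subst hrs
  apply Partition'.ext'
  intro j
  by_cases hj : j = r
  · subst hj; rw [h1.2, h2.2]
  · rw [h1.1 j hj, h2.1 j hj]

end MM
namespace MM

open Classical

theorem card_eq_sum (lam : Partition') (D : Finset ℤ)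
    (hD : ∀ e : ℤ, g lam e ≠ 0 → e ∈ D) (P : ℤ → Prop) (v : ℤ) (hv : v ≠ 0)
    (S : ℤ → Prop) (hS : ∀ e, S e ↔ g lam e = v) :
    ({e : ℤ | S e ∧ P e}.ncard : ℤ) = ∑ e ∈ D, if g lam e = v ∧ P e then (1:ℤ) else 0 := by
  have hset : {e : ℤ | S e ∧ P e} = ↑(D.filter (fun e => g lam e = v ∧ P e)) := by
    ext e
    simp only [Set.mem_setOf_eq, Finset.coe_filter, hS e]
    constructor
    · rintro ⟨h1, h2⟩
      exact ⟨hD e (by rw [h1]; exact hv), h1, h2⟩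
    · rintro ⟨-, h1, h2⟩
      exact ⟨h1, h2⟩
  rw [hset, Set.ncard_coe_finset, Finset.card_filter]
  push_cast
  rfl

theorem Na_eq_sum (ℓ : ℕ) (i : ZMod ℓ) (lam : Partition') (d : ℤ) (D : Finset ℤ)
    (hD : ∀ e : ℤ, g lam e ≠ 0 → e ∈ D) :
    Na ℓ i lam d = ∑ e ∈ D, if ((e : ZMod ℓ) = i ∧ d < e) then g lam e else 0 := by
  rw [Na, card_eq_sum lam D hD (fun e => (e : ZMod ℓ) = i ∧ d < e) 1 one_ne_zero
        (fun e => AddableDiag lam e) (addable_iff_g lam),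
      card_eq_sum lam D hD (fun e => (e : ZMod ℓ) = i ∧ d < e) (-1) (by norm_num)
        (fun e => RemovableDiag lam e) (removable_iff_g lam)]
  rw [← Finset.sum_sub_distrib]
  apply Finset.sum_congr rfl
  intro e _
  rcases g_mem lam e with h | h | h <;> rw [h] <;> split_ifs <;> simp_all <;> omega

theorem Nr_eq_sum (ℓ : ℕ) (i : ZMod ℓ) (lam : Partition') (d : ℤ) (D : Finset ℤ)
    (hD : ∀ e : ℤ, g lam e ≠ 0 → e ∈ D) :
    Nr ℓ i lam d = ∑ e ∈ D, if ((e : ZMod ℓ) = i ∧ e < d) then g lam e else 0 := by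
  rw [Nr, card_eq_sum lam D hD (fun e => (e : ZMod ℓ) = i ∧ e < d) 1 one_ne_zero
        (fun e => AddableDiag lam e) (addable_iff_g lam),
      card_eq_sum lam D hD (fun e => (e : ZMod ℓ) = i ∧ e < d) (-1) (by norm_num)
        (fun e => RemovableDiag lam e) (removable_iff_g lam)]
  rw [← Finset.sum_sub_distrib]
  apply Finset.sum_congr rfl
  intro e _
  rcases g_mem lam e with h | h | h <;> rw [h] <;> split_ifs <;> simp_all <;> omega

theorem airi_eq_sum (ℓ : ℕ) (i : ZMod ℓ) (lam : Partition') (D : Finset ℤ)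
    (hD : ∀ e : ℤ, g lam e ≠ 0 → e ∈ D) :
    (ai ℓ i lam : ℤ) - (ri ℓ i lam : ℤ)
      = ∑ e ∈ D, if ((e : ZMod ℓ) = i) then g lam e else 0 := by
  rw [ai, ri, card_eq_sum lam D hD (fun e => (e : ZMod ℓ) = i) 1 one_ne_zero
        (fun e => AddableDiag lam e) (addable_iff_g lam),
      card_eq_sum lam D hD (fun e => (e : ZMod ℓ) = i) (-1) (by norm_num)
        (fun e => RemovableDiag lam e) (removable_iff_g lam)]
  rw [← Finset.sum_sub_distrib]
  apply Finset.sum_congr rfl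
  intro e _
  rcases g_mem lam e with h | h | h <;> rw [h] <;> split_ifs <;> simp_all <;> omega

/-- delta-sum evaluation -/
theorem sum_delta (D : Finset ℤ) (P : ℤ → Prop) [DecidablePred P] (a : ℤ) (c : ℤ) :
    (∑ e ∈ D, if P e then (if e = a then c else 0) else 0)
      = if a ∈ D ∧ P a then c else 0 := by
  rw [Finset.sum_congr rfl (g := fun e => if e = a then (if P a then c else 0) else 0)]
  · rw [Finset.sum_ite_eq' D a (fun _ => if P a then c else 0)]
    split_ifs with h1 h2 h2 <;> simp_all
  · intro e _
    by_cases he : e = a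
    · subst he; simp
    · simp [he]

end MM
namespace MM

open Classical

/-- uniqueness of box removal at a given diagonal -/
theorem IsRem_unique {lam mu nu : Partition'} {r s : ℕ}
    (h1 : IsAdd mu lam r) (h2 : IsAdd nu lam s)
    (hd : (mu.part r : ℤ) - r = (nu.part s : ℤ) - s) : mu = nu := by
  have e1 : (lam.part r : ℤ) = (mu.part r : ℤ) + 1 := by exact_mod_cast congrArg (Nat.cast (R := ℤ)) h1.2
  have e2 : (lam.part s : ℤ) = (nu.part s : ℤ) + 1 := by exact_mod_cast congrArg (Nat.cast (R := ℤ)) h2.2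
  have hrs : r = s := diag_inj lam (by omega)
  subst hrs
  apply Partition'.ext'
  intro j
  by_cases hj : j = r
  · subst hj
    have := h1.2; have := h2.2; omega
  · rw [← h1.1 j hj, ← h2.1 j hj]

theorem FqOp_single (ℓ : ℕ) (i : ZMod ℓ) (lam : Partition') (D : Finset ℤ)
    (hD : ∀ e : ℤ, g lam e ≠ 0 → e ∈ D) :
    FqOp ℓ i (Finsupp.single lam 1)
      = ∑ d ∈ D, if (g lam d = 1 ∧ ((d : ZMod ℓ) = i))
          then (qv ^ (Na ℓ i lam d)) • Finsupp.single (addAt lam d) (1:K) else 0 := by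
  have h0 : FqOp ℓ i (Finsupp.single lam 1)
      = ∑ᶠ mu : Partition', ∑ᶠ r : ℕ,
          if (∀ j : ℕ, j ≠ r → mu.part j = lam.part j) ∧ mu.part r = lam.part r + 1 ∧
              ((((lam.part r : ℤ) - (r : ℤ)) : ℤ) : ZMod ℓ) = i
          then (qv ^ (Na ℓ i lam ((lam.part r : ℤ) - (r : ℤ)))) • Finsupp.single mu (1 : K)
          else 0 := by
    rw [FqOp, Finsupp.lift_apply, Finsupp.sum_single_index, one_smul]
    exact zero_smul K _
  rw [h0]
  set F : Partition' → ℕ → Fq := fun mu r =>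
    if (∀ j : ℕ, j ≠ r → mu.part j = lam.part j) ∧ mu.part r = lam.part r + 1 ∧
        ((((lam.part r : ℤ) - (r : ℤ)) : ℤ) : ZMod ℓ) = i
    then (qv ^ (Na ℓ i lam ((lam.part r : ℤ) - (r : ℤ)))) • Finsupp.single mu (1 : K)
    else 0 with hF
  have hcond : ∀ mu r, F mu r ≠ 0 →
      IsAdd lam mu r ∧ ((((lam.part r : ℤ) - (r : ℤ)) : ℤ) : ZMod ℓ) = i := by
    intro mu r h
    rw [hF] at h
    by_cases hc : (∀ j : ℕ, j ≠ r → mu.part j = lam.part j) ∧ mu.part r = lam.part r + 1 ∧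
        ((((lam.part r : ℤ) - (r : ℤ)) : ℤ) : ZMod ℓ) = i
    · exact ⟨⟨hc.1, hc.2.1⟩, hc.2.2⟩
    · simp only [if_neg hc] at h; exact absurd rfl h
  set P : ℤ → Prop := fun d => g lam d = 1 ∧ ((d : ZMod ℓ) = i) with hP
  set T : Finset Partition' := (D.filter P).image (addAt lam) with hT
  have step1 : (∑ᶠ mu : Partition', ∑ᶠ r : ℕ, F mu r) = ∑ mu ∈ T, ∑ᶠ r : ℕ, F mu r := by
    apply finsum_eq_finset_sum_of_support_subset
    intro mu hmu
    simp only [Function.mem_support] at hmu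
    have hex : ∃ r, F mu r ≠ 0 := by
      by_contra hno
      push_neg at hno
      exact hmu (finsum_eq_zero_of_forall_eq_zero hno)
    obtain ⟨r, hr⟩ := hex
    obtain ⟨hA, hcol⟩ := hcond mu r hr
    have hadd : AddableDiag lam ((lam.part r : ℤ) - r) := hA.addable
    have hg : g lam ((lam.part r : ℤ) - r) = 1 := (addable_iff_g lam _).mp hadd
    obtain ⟨r', hA', hd'⟩ := addAt_spec hadd
    have hmueq : addAt lam ((lam.part r : ℤ) - r) = mu :=
      IsAdd.unique hA' hA hd'
    simp only [hT, Finset.coe_image, Set.mem_image, Finset.mem_coe, Finset.mem_filter]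
    exact ⟨(lam.part r : ℤ) - r, ⟨hD _ (by rw [hg]; exact one_ne_zero), hg, hcol⟩, hmueq⟩
  have step2 : (∑ mu ∈ T, ∑ᶠ r : ℕ, F mu r)
      = ∑ d ∈ D.filter P, ∑ᶠ r : ℕ, F (addAt lam d) r := by
    rw [hT]
    apply Finset.sum_image
    intro d1 h1 d2 h2 heq
    rw [Finset.mem_coe, Finset.mem_filter] at h1 h2
    obtain ⟨r1, hA1, hd1⟩ := addAt_spec ((addable_iff_g lam d1).mpr h1.2.1)
    obtain ⟨r2, hA2, hd2⟩ := addAt_spec ((addable_iff_g lam d2).mpr h2.2.1)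
    rw [heq] at hA1
    have := IsAdd.row_unique hA1 hA2
    subst this
    omega
  have step3 : ∀ d ∈ D.filter P, (∑ᶠ r : ℕ, F (addAt lam d) r)
      = (qv ^ (Na ℓ i lam d)) • Finsupp.single (addAt lam d) (1:K) := by
    intro d hd
    rw [Finset.mem_filter] at hd
    obtain ⟨r0, hA0, hd0⟩ := addAt_spec ((addable_iff_g lam d).mpr hd.2.1)
    rw [finsum_eq_single _ r0]
    · have hcol0 : ((((lam.part r0 : ℤ) - (r0 : ℤ)) : ℤ) : ZMod ℓ) = i := by
        rw [hd0]; exact hd.2.2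
      simp only [hF]
      rw [if_pos ⟨hA0.1, hA0.2, hcol0⟩, hd0]
    · intro s hs
      by_contra hne
      obtain ⟨hAs, -⟩ := hcond _ s hne
      exact hs (IsAdd.row_unique hAs hA0)
  rw [step1, step2, Finset.sum_congr rfl step3, Finset.sum_filter]

theorem EqOp_single (ℓ : ℕ) (i : ZMod ℓ) (lam : Partition') (D : Finset ℤ)
    (hD : ∀ e : ℤ, g lam e ≠ 0 → e ∈ D) :
    EqOp ℓ i (Finsupp.single lam 1)
      = ∑ d ∈ D, if (g lam d = -1 ∧ ((d : ZMod ℓ) = i))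
          then (qv ^ (-(Nr ℓ i (remAt lam d) d))) • Finsupp.single (remAt lam d) (1:K) else 0 := by
  have h0 : EqOp ℓ i (Finsupp.single lam 1)
      = ∑ᶠ mu : Partition', ∑ᶠ r : ℕ,
          if (∀ j : ℕ, j ≠ r → mu.part j = lam.part j) ∧ mu.part r + 1 = lam.part r ∧
              ((((lam.part r : ℤ) - 1 - (r : ℤ)) : ℤ) : ZMod ℓ) = i
          then (qv ^ (-(Nr ℓ i mu ((lam.part r : ℤ) - 1 - (r : ℤ))))) • Finsupp.single mu (1 : K)
          else 0 := by
    rw [EqOp, Finsupp.lift_apply, Finsupp.sum_single_index, one_smul]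
    exact zero_smul K _
  rw [h0]
  set F : Partition' → ℕ → Fq := fun mu r =>
    if (∀ j : ℕ, j ≠ r → mu.part j = lam.part j) ∧ mu.part r + 1 = lam.part r ∧
        ((((lam.part r : ℤ) - 1 - (r : ℤ)) : ℤ) : ZMod ℓ) = i
    then (qv ^ (-(Nr ℓ i mu ((lam.part r : ℤ) - 1 - (r : ℤ))))) • Finsupp.single mu (1 : K)
    else 0 with hF
  have hcond : ∀ mu r, F mu r ≠ 0 →
      IsAdd mu lam r ∧ ((((lam.part r : ℤ) - 1 - (r : ℤ)) : ℤ) : ZMod ℓ) = i := by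
    intro mu r h
    rw [hF] at h
    by_cases hc : (∀ j : ℕ, j ≠ r → mu.part j = lam.part j) ∧ mu.part r + 1 = lam.part r ∧
        ((((lam.part r : ℤ) - 1 - (r : ℤ)) : ℤ) : ZMod ℓ) = i
    · exact ⟨⟨fun j hj => (hc.1 j hj).symm, hc.2.1.symm⟩, hc.2.2⟩
    · simp only [if_neg hc] at h; exact absurd rfl h
  set P : ℤ → Prop := fun d => g lam d = -1 ∧ ((d : ZMod ℓ) = i) with hP
  set T : Finset Partition' := (D.filter P).image (remAt lam) with hT
  have hdiag : ∀ (mu : Partition') (r : ℕ), IsAdd mu lam r →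
      (mu.part r : ℤ) - r = (lam.part r : ℤ) - 1 - r := by
    intro mu r hA
    have := hA.2
    have : (lam.part r : ℤ) = (mu.part r : ℤ) + 1 := by exact_mod_cast congrArg (Nat.cast (R := ℤ)) this
    omega
  have step1 : (∑ᶠ mu : Partition', ∑ᶠ r : ℕ, F mu r) = ∑ mu ∈ T, ∑ᶠ r : ℕ, F mu r := by
    apply finsum_eq_finset_sum_of_support_subset
    intro mu hmu
    simp only [Function.mem_support] at hmu
    have hex : ∃ r, F mu r ≠ 0 := by
      by_contra hno
      push_neg at hno
      exact hmu (finsum_eq_zero_of_forall_eq_zero hno)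
    obtain ⟨r, hr⟩ := hex
    obtain ⟨hA, hcol⟩ := hcond mu r hr
    have hrem : RemovableDiag lam ((lam.part r : ℤ) - 1 - r) := by
      have := hA.removable
      rwa [hdiag mu r hA] at this
    have hg : g lam ((lam.part r : ℤ) - 1 - r) = -1 := (removable_iff_g lam _).mp hrem
    obtain ⟨r', hA', hd'⟩ := remAt_spec hrem
    have hmueq : remAt lam ((lam.part r : ℤ) - 1 - r) = mu :=
      IsRem_unique hA' hA (by rw [hd', hdiag mu r hA])
    simp only [hT, Finset.coe_image, Set.mem_image, Finset.mem_coe, Finset.mem_filter]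
    exact ⟨(lam.part r : ℤ) - 1 - r, ⟨hD _ (by rw [hg]; norm_num), hg, hcol⟩, hmueq⟩
  have step2 : (∑ mu ∈ T, ∑ᶠ r : ℕ, F mu r)
      = ∑ d ∈ D.filter P, ∑ᶠ r : ℕ, F (remAt lam d) r := by
    rw [hT]
    apply Finset.sum_image
    intro d1 h1 d2 h2 heq
    rw [Finset.mem_coe, Finset.mem_filter] at h1 h2
    obtain ⟨r1, hA1, hd1⟩ := remAt_spec ((removable_iff_g lam d1).mpr h1.2.1)
    obtain ⟨r2, hA2, hd2⟩ := remAt_spec ((removable_iff_g lam d2).mpr h2.2.1)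
    rw [heq] at hA1 hd1
    have := IsAdd.row_unique hA1 hA2
    subst this
    omega
  have step3 : ∀ d ∈ D.filter P, (∑ᶠ r : ℕ, F (remAt lam d) r)
      = (qv ^ (-(Nr ℓ i (remAt lam d) d))) • Finsupp.single (remAt lam d) (1:K) := by
    intro d hd
    rw [Finset.mem_filter] at hd
    obtain ⟨r0, hA0, hd0⟩ := remAt_spec ((removable_iff_g lam d).mpr hd.2.1)
    have hd0' : (lam.part r0 : ℤ) - 1 - r0 = d := by rw [← hd0, ← hdiag _ r0 hA0]
    rw [finsum_eq_single _ r0]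
    · have hcol0 : ((((lam.part r0 : ℤ) - 1 - (r0 : ℤ)) : ℤ) : ZMod ℓ) = i := by
        rw [hd0']; exact hd.2.2
      simp only [hF]
      rw [if_pos ⟨fun j hj => (hA0.1 j hj).symm, hA0.2.symm, hcol0⟩, hd0']
    · intro s hs
      by_contra hne
      obtain ⟨hAs, -⟩ := hcond _ s hne
      exact hs (IsAdd.row_unique hAs hA0)
  rw [step1, step2, Finset.sum_congr rfl step3, Finset.sum_filter]

end MM
namespace MM

open Classical

theorem g_addAt {lam : Partition'} {d : ℤ} (h : AddableDiag lam d) (e : ℤ) :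
    g (addAt lam d) e = g lam e + (if e = d - 1 then 1 else 0)
      + (if e = d then -2 else 0) + (if e = d + 1 then 1 else 0) := by
  obtain ⟨r, hA, hd⟩ := addAt_spec h
  have := hA.g_eq e
  rw [hd] at this
  exact this

theorem g_remAt {lam : Partition'} {d : ℤ} (h : RemovableDiag lam d) (e : ℤ) :
    g (remAt lam d) e = g lam e - (if e = d - 1 then 1 else 0)
      + (if e = d then 2 else 0) - (if e = d + 1 then 1 else 0) := by
  obtain ⟨r, hA, hd⟩ := remAt_spec h
  have := hA.g_eq e
  rw [hd] at this
  omega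

theorem remAt_addAt {lam : Partition'} {d : ℤ} (h : AddableDiag lam d) :
    remAt (addAt lam d) d = lam := by
  obtain ⟨r, hA, hd⟩ := addAt_spec h
  have hrem : RemovableDiag (addAt lam d) d := by
    have := hA.removable; rwa [hd] at this
  obtain ⟨r0, hA0, hd0⟩ := remAt_spec hrem
  exact IsRem_unique hA0 hA (by omega)

theorem addAt_remAt {lam : Partition'} {d : ℤ} (h : RemovableDiag lam d) :
    addAt (remAt lam d) d = lam := by
  obtain ⟨s, hA, hd⟩ := remAt_spec h
  have hadd : AddableDiag (remAt lam d) d := by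
    have := hA.addable; rwa [hd] at this
  obtain ⟨r0, hA0, hd0⟩ := addAt_spec hadd
  exact IsAdd.unique hA0 hA (by omega)

theorem commute_boxes {lam : Partition'} {d d' : ℤ}
    (hgd : g lam d = 1) (hgd' : g lam d' = -1)
    (h1 : d' ≠ d - 1) (h2 : d' ≠ d) (h3 : d' ≠ d + 1) :
    remAt (addAt lam d) d' = addAt (remAt lam d') d := by
  have hadd : AddableDiag lam d := (addable_iff_g lam d).mpr hgd
  have hrem : RemovableDiag lam d' := (removable_iff_g lam d').mpr hgd'
  obtain ⟨r, hAr, hdr⟩ := addAt_spec hadd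
  obtain ⟨s, hAs, hds⟩ := remAt_spec hrem
  set mu := addAt lam d with hmu
  set nu := remAt lam d' with hnu
  have hcast_s : (lam.part s : ℤ) = (nu.part s : ℤ) + 1 := by
    exact_mod_cast congrArg (Nat.cast (R := ℤ)) hAs.2
  have grem' : g mu d' = -1 := by
    rw [g_addAt hadd d', if_neg h1, if_neg h2, if_neg h3, hgd']; ring
  have gadd : g nu d = 1 := by
    rw [g_remAt hrem d, if_neg (by omega : ¬ d = d' - 1), if_neg (by omega : ¬ d = d'),
      if_neg (by omega : ¬ d = d' + 1), hgd]; ring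
  obtain ⟨s1, hAs1, hds1⟩ := remAt_spec ((removable_iff_g mu d').mpr grem')
  obtain ⟨r2, hAr2, hdr2⟩ := addAt_spec ((addable_iff_g nu d).mpr gadd)
  -- r ≠ s
  have hrs : r ≠ s := by
    intro hc
    subst hc
    omega
  -- r2 = r
  have hr2 : r2 = r := by
    apply diag_inj nu
    rw [hdr2, ← hAs.1 r hrs]
    omega
  -- s1 = s
  have hcast_s1 : (mu.part s1 : ℤ) = ((remAt mu d').part s1 : ℤ) + 1 := by
    exact_mod_cast congrArg (Nat.cast (R := ℤ)) hAs1.2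
  have hs1 : s1 = s := by
    apply diag_inj mu
    rw [hAr.1 s (fun hc => hrs hc.symm)]
    omega
  apply Partition'.ext'
  intro j
  by_cases hjr : j = r
  · have l1 : mu.part j = (remAt mu d').part j := hAs1.1 j (by omega)
    have l2 : mu.part j = lam.part j + 1 := by rw [hjr]; exact hAr.2
    have l3 : (addAt nu d).part j = nu.part j + 1 := by rw [hjr, ← hr2]; exact hAr2.2
    have l4 : lam.part j = nu.part j := by
      rw [hjr]; exact hAs.1 r hrs
    omega
  · by_cases hjs : j = s
    · have e1 : mu.part j = (remAt mu d').part j + 1 := by rw [hjs, ← hs1]; exact hAs1.2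
      have e2 : mu.part j = lam.part j := hAr.1 j hjr
      have e3 : (addAt nu d).part j = nu.part j := hAr2.1 j (by omega)
      have e4 : lam.part j = nu.part j + 1 := by rw [hjs]; exact hAs.2
      omega
    · have a1 : mu.part j = (remAt mu d').part j := hAs1.1 j (by omega)
      have a2 : mu.part j = lam.part j := hAr.1 j hjr
      have a3 : lam.part j = nu.part j := hAs.1 j hjs
      have a4 : (addAt nu d).part j = nu.part j := hAr2.1 j (by omega)
      omega

theorem g_supp_addAt {lam : Partition'} {d : ℤ} (h : AddableDiag lam d) {e : ℤ}
    (he : g (addAt lam d) e ≠ 0) :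
    g lam e ≠ 0 ∨ e = d - 1 ∨ e = d ∨ e = d + 1 := by
  by_contra hc
  push_neg at hc
  obtain ⟨h0, h1, h2, h3⟩ := hc
  rw [g_addAt h e, h0, if_neg h1, if_neg h2, if_neg h3] at he
  exact he (by ring)

theorem g_supp_remAt {lam : Partition'} {d : ℤ} (h : RemovableDiag lam d) {e : ℤ}
    (he : g (remAt lam d) e ≠ 0) :
    g lam e ≠ 0 ∨ e = d - 1 ∨ e = d ∨ e = d + 1 := by
  by_contra hc
  push_neg at hc
  obtain ⟨h0, h1, h2, h3⟩ := hc
  rw [g_remAt h e, h0, if_neg h1, if_neg h2, if_neg h3] at he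
  exact he (by ring)

end MM
namespace MM

open Classical

theorem qv_ne_zero : qv ≠ 0 := RatFunc.X_ne_zero

theorem zp (a b : ℤ) : qv ^ a * qv ^ b = qv ^ (a + b) := (zpow_add₀ qv_ne_zero a b).symm

theorem qsub_ne_zero : qv - qv⁻¹ ≠ 0 := by
  intro h
  have h1 : qv = qv⁻¹ := by linear_combination h
  have h2 : qv * qv = 1 := by
    nth_rewrite 2 [h1]
    exact mul_inv_cancel₀ qv_ne_zero
  have h3 : (Polynomial.X * Polynomial.X : Polynomial ℂ) = 1 := by
    apply RatFunc.algebraMap_injective ℂ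
    rw [map_mul, map_one]
    exact h2
  rw [← sq] at h3
  have h4 := congrArg Polynomial.natDegree h3
  simp only [Polynomial.natDegree_X_pow, Polynomial.natDegree_one] at h4
  omega

theorem sum_tele (f : ℤ → K) (L H : ℤ) (h : L ≤ H + 1) :
    ∑ d ∈ Finset.Icc L H, (f d - f (d + 1)) = f L - f (H + 1) := by
  refine Int.le_induction (m := L - 1)
    (motive := fun H _ => ∑ d ∈ Finset.Icc L H, (f d - f (d + 1)) = f L - f (H + 1)) ?_ ?_ H (by omega)
  · show ∑ d ∈ Finset.Icc L (L-1), (f d - f (d + 1)) = f L - f (L - 1 + 1)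
    rw [show L - 1 + 1 = L by ring, Finset.Icc_eq_empty (by omega), Finset.sum_empty]
    ring
  · intro n hn ih
    show ∑ d ∈ Finset.Icc L (n+1), (f d - f (d + 1)) = f L - f (n + 1 + 1)
    have hins : Finset.Icc L (n + 1) = insert (n + 1) (Finset.Icc L n) := by
      ext x
      simp only [Finset.mem_Icc, Finset.mem_insert]
      omega
    rw [hins, Finset.sum_insert (by simp only [Finset.mem_Icc]; omega), ih]
    ring

end MM
namespace MM

open Classical

theorem condEF_iff (ℓ : ℕ) (i j : ZMod ℓ) (lam : Partition') {d d' : ℤ} (hne : d ≠ d') :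
    (g lam d = 1 ∧ ((d : ZMod ℓ) = j) ∧ g (addAt lam d) d' = -1 ∧ ((d' : ZMod ℓ) = i))
      ↔ (g lam d = 1 ∧ g lam d' = -1 ∧ ((d : ZMod ℓ) = j) ∧ ((d' : ZMod ℓ) = i)
          ∧ d' ≠ d - 1 ∧ d' ≠ d + 1) := by
  constructor
  · rintro ⟨h1, h2, h3, h4⟩
    have hf := g_addAt ((addable_iff_g lam d).mpr h1) d'
    have hm := g_mem lam d'
    by_cases c1 : d' = d - 1
    · rw [if_pos c1, if_neg (by omega), if_neg (by omega)] at hf; omega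
    · by_cases c3 : d' = d + 1
      · rw [if_neg c1, if_neg (by omega), if_pos c3] at hf; omega
      · rw [if_neg c1, if_neg (Ne.symm hne), if_neg c3] at hf
        exact ⟨h1, by omega, h2, h4, c1, c3⟩
  · rintro ⟨h1, h2, h3, h4, h5, h6⟩
    have hf := g_addAt ((addable_iff_g lam d).mpr h1) d'
    rw [if_neg h5, if_neg (Ne.symm hne), if_neg h6] at hf
    exact ⟨h1, h3, by omega, h4⟩

theorem condFE_iff (ℓ : ℕ) (i j : ZMod ℓ) (lam : Partition') {d d' : ℤ} (hne : d ≠ d') :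
    (g lam d' = -1 ∧ ((d' : ZMod ℓ) = i) ∧ g (remAt lam d') d = 1 ∧ ((d : ZMod ℓ) = j))
      ↔ (g lam d = 1 ∧ g lam d' = -1 ∧ ((d : ZMod ℓ) = j) ∧ ((d' : ZMod ℓ) = i)
          ∧ d' ≠ d - 1 ∧ d' ≠ d + 1) := by
  constructor
  · rintro ⟨h1, h2, h3, h4⟩
    have hf := g_remAt ((removable_iff_g lam d').mpr h1) d
    have hm := g_mem lam d
    by_cases c1 : d = d' - 1
    · rw [if_pos c1, if_neg (by omega), if_neg (by omega)] at hf; omega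
    · by_cases c3 : d = d' + 1
      · rw [if_neg c1, if_neg (by omega), if_pos c3] at hf; omega
      · rw [if_neg c1, if_neg hne, if_neg c3] at hf
        exact ⟨by omega, h1, h4, h2, by omega, by omega⟩
  · rintro ⟨h1, h2, h3, h4, h5, h6⟩
    have hf := g_remAt ((removable_iff_g lam d').mpr h2) d
    rw [if_neg (by omega), if_neg hne, if_neg (by omega)] at hf
    exact ⟨h2, h4, by omega, h3⟩

theorem expo_eq (ℓ : ℕ) (i j : ZMod ℓ) (lam : Partition') {d d' : ℤ} (D : Finset ℤ)
    (hD : ∀ e, g lam e ≠ 0 → e ∈ D)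
    (hDnu : ∀ e, g (remAt lam d') e ≠ 0 → e ∈ D)
    (hgd : g lam d = 1) (hgd' : g lam d' = -1)
    (hcj : (d : ZMod ℓ) = j) (hci : (d' : ZMod ℓ) = i)
    (hm1 : d - 1 ∈ D) (hp1 : d + 1 ∈ D) (hm1' : d' - 1 ∈ D) (hp1' : d' + 1 ∈ D)
    (h5 : d' ≠ d - 1) (h2 : d' ≠ d) (h6 : d' ≠ d + 1) :
    Na ℓ j lam d + (-(Nr ℓ i (remAt (addAt lam d) d') d'))
      = Na ℓ j (remAt lam d') d + (-(Nr ℓ i (remAt lam d') d')) := by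
  have hrem : RemovableDiag lam d' := (removable_iff_g lam d').mpr hgd'
  set nu := remAt lam d' with hnu
  have hgnud : g nu d = 1 := by
    rw [hnu, g_remAt hrem d, if_neg (by omega), if_neg (by omega), if_neg (by omega)]
    omega
  have haddnu : AddableDiag nu d := (addable_iff_g nu d).mpr hgnud
  have dmem : d ∈ D := hD d (by omega)
  have dmem' : d' ∈ D := hD d' (by omega)
  have hDy : ∀ e, g (addAt nu d) e ≠ 0 → e ∈ D := by
    intro e he
    rcases g_supp_addAt haddnu he with h | h | h | h
    · exact hDnu e h
    · rw [h]; exact hm1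
    · rw [h]; exact dmem
    · rw [h]; exact hp1
  rw [commute_boxes hgd hgd' h5 h2 h6]
  have eNa : Na ℓ j nu d - Na ℓ j lam d
      = (if (d' - 1 ∈ D ∧ ((((d' - 1 : ℤ) : ZMod ℓ) = j) ∧ d < d' - 1)) then (-1:ℤ) else 0)
        + ((if (d' ∈ D ∧ ((((d' : ℤ) : ZMod ℓ) = j) ∧ d < d')) then (2:ℤ) else 0)
        + (if (d' + 1 ∈ D ∧ ((((d' + 1 : ℤ) : ZMod ℓ) = j) ∧ d < d' + 1)) then (-1:ℤ) else 0)) := by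
    rw [Na_eq_sum ℓ j nu d D hDnu, Na_eq_sum ℓ j lam d D hD, ← Finset.sum_sub_distrib]
    have hterm : ∀ e ∈ D,
        ((if ((e : ZMod ℓ) = j ∧ d < e) then g nu e else 0)
          - (if ((e : ZMod ℓ) = j ∧ d < e) then g lam e else 0))
        = (if ((e : ZMod ℓ) = j ∧ d < e) then (if e = d' - 1 then (-1:ℤ) else 0) else 0)
          + ((if ((e : ZMod ℓ) = j ∧ d < e) then (if e = d' then (2:ℤ) else 0) else 0)
          + (if ((e : ZMod ℓ) = j ∧ d < e) then (if e = d' + 1 then (-1:ℤ) else 0) else 0)) := by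
      intro e _
      rw [g_remAt hrem e]
      split_ifs <;> ring
    rw [Finset.sum_congr rfl hterm, Finset.sum_add_distrib, Finset.sum_add_distrib,
      sum_delta D _ (d' - 1) (-1), sum_delta D _ d' 2, sum_delta D _ (d' + 1) (-1)]
  have eNr : Nr ℓ i (addAt nu d) d' - Nr ℓ i nu d'
      = (if (d - 1 ∈ D ∧ ((((d - 1 : ℤ) : ZMod ℓ) = i) ∧ d - 1 < d')) then (1:ℤ) else 0)
        + ((if (d ∈ D ∧ ((((d : ℤ) : ZMod ℓ) = i) ∧ d < d')) then (-2:ℤ) else 0)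
        + (if (d + 1 ∈ D ∧ ((((d + 1 : ℤ) : ZMod ℓ) = i) ∧ d + 1 < d')) then (1:ℤ) else 0)) := by
    rw [Nr_eq_sum ℓ i (addAt nu d) d' D hDy, Nr_eq_sum ℓ i nu d' D hDnu,
      ← Finset.sum_sub_distrib]
    have hterm : ∀ e ∈ D,
        ((if ((e : ZMod ℓ) = i ∧ e < d') then g (addAt nu d) e else 0)
          - (if ((e : ZMod ℓ) = i ∧ e < d') then g nu e else 0))
        = (if ((e : ZMod ℓ) = i ∧ e < d') then (if e = d - 1 then (1:ℤ) else 0) else 0)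
          + ((if ((e : ZMod ℓ) = i ∧ e < d') then (if e = d then (-2:ℤ) else 0) else 0)
          + (if ((e : ZMod ℓ) = i ∧ e < d') then (if e = d + 1 then (1:ℤ) else 0) else 0)) := by
      intro e _
      rw [g_addAt haddnu e]
      split_ifs <;> ring
    rw [Finset.sum_congr rfl hterm, Finset.sum_add_distrib, Finset.sum_add_distrib,
      sum_delta D _ (d - 1) 1, sum_delta D _ d (-2), sum_delta D _ (d + 1) 1]
  -- pairwise cancellations
  have pair2 : (if (d' ∈ D ∧ ((((d' : ℤ) : ZMod ℓ) = j) ∧ d < d')) then (2:ℤ) else 0)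
      + (if (d ∈ D ∧ ((((d : ℤ) : ZMod ℓ) = i) ∧ d < d')) then (-2:ℤ) else 0) = 0 := by
    have hiff : (d' ∈ D ∧ ((((d' : ℤ) : ZMod ℓ) = j) ∧ d < d'))
        ↔ (d ∈ D ∧ ((((d : ℤ) : ZMod ℓ) = i) ∧ d < d')) := by
      rw [hci, hcj]
      constructor
      · rintro ⟨-, hij, hlt⟩; exact ⟨dmem, hij.symm, hlt⟩
      · rintro ⟨-, hij, hlt⟩; exact ⟨dmem', hij.symm, hlt⟩
    rw [if_congr hiff rfl rfl]
    split_ifs <;> ring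
  have pair1 : (if (d' - 1 ∈ D ∧ ((((d' - 1 : ℤ) : ZMod ℓ) = j) ∧ d < d' - 1)) then (-1:ℤ) else 0)
      + (if (d + 1 ∈ D ∧ ((((d + 1 : ℤ) : ZMod ℓ) = i) ∧ d + 1 < d')) then (1:ℤ) else 0) = 0 := by
    have hiff : (d' - 1 ∈ D ∧ ((((d' - 1 : ℤ) : ZMod ℓ) = j) ∧ d < d' - 1))
        ↔ (d + 1 ∈ D ∧ ((((d + 1 : ℤ) : ZMod ℓ) = i) ∧ d + 1 < d')) := by
      constructor
      · rintro ⟨-, hc, hlt⟩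
        push_cast at hc
        rw [hci] at hc
        refine ⟨hp1, ?_, by omega⟩
        push_cast
        rw [hcj, ← hc]
        ring
      · rintro ⟨-, hc, hlt⟩
        push_cast at hc
        rw [hcj] at hc
        refine ⟨hm1', ?_, by omega⟩
        push_cast
        rw [hci, ← hc]
        ring
    rw [if_congr hiff rfl rfl]
    split_ifs <;> ring
  have pair3 : (if (d' + 1 ∈ D ∧ ((((d' + 1 : ℤ) : ZMod ℓ) = j) ∧ d < d' + 1)) then (-1:ℤ) else 0)
      + (if (d - 1 ∈ D ∧ ((((d - 1 : ℤ) : ZMod ℓ) = i) ∧ d - 1 < d')) then (1:ℤ) else 0) = 0 := by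
    have hiff : (d' + 1 ∈ D ∧ ((((d' + 1 : ℤ) : ZMod ℓ) = j) ∧ d < d' + 1))
        ↔ (d - 1 ∈ D ∧ ((((d - 1 : ℤ) : ZMod ℓ) = i) ∧ d - 1 < d')) := by
      constructor
      · rintro ⟨-, hc, hlt⟩
        push_cast at hc
        rw [hci] at hc
        refine ⟨hm1, ?_, by omega⟩
        push_cast
        rw [hcj, ← hc]
        ring
      · rintro ⟨-, hc, hlt⟩
        push_cast at hc
        rw [hcj] at hc
        refine ⟨hp1', ?_, by omega⟩
        push_cast
        rw [hci, ← hc]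
        ring
    rw [if_congr hiff rfl rfl]
    split_ifs <;> ring
  linarith [eNa, eNr, pair1, pair2, pair3]

end MM
namespace MM

open Classical

theorem EF_eq (ℓ : ℕ) (i j : ZMod ℓ) (lam : Partition') (D : Finset ℤ)
    (hD : ∀ e, g lam e ≠ 0 → e ∈ D)
    (hD2 : ∀ d, g lam d = 1 → ∀ e, g (addAt lam d) e ≠ 0 → e ∈ D) :
    EqOp ℓ i (FqOp ℓ j (Finsupp.single lam 1))
      = ∑ d ∈ D, ∑ d' ∈ D,
          (if (g lam d = 1 ∧ ((d : ZMod ℓ) = j) ∧ g (addAt lam d) d' = -1 ∧ ((d' : ZMod ℓ) = i))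
          then (qv ^ (Na ℓ j lam d) * qv ^ (-(Nr ℓ i (remAt (addAt lam d) d') d')))
            • Finsupp.single (remAt (addAt lam d) d') (1:K) else 0) := by
  rw [FqOp_single ℓ j lam D hD, map_sum]
  apply Finset.sum_congr rfl
  intro d _
  by_cases hP : g lam d = 1 ∧ ((d : ZMod ℓ) = j)
  · rw [if_pos hP, map_smul, EqOp_single ℓ i (addAt lam d) D (hD2 d hP.1), Finset.smul_sum]
    apply Finset.sum_congr rfl
    intro d' _
    by_cases hQ : g (addAt lam d) d' = -1 ∧ ((d' : ZMod ℓ) = i)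
    · rw [if_pos hQ, if_pos ⟨hP.1, hP.2, hQ.1, hQ.2⟩, smul_smul]
    · rw [if_neg hQ, smul_zero, if_neg (by tauto)]
  · rw [if_neg hP, map_zero]
    symm
    apply Finset.sum_eq_zero
    intro d' _
    rw [if_neg (by tauto)]

theorem FE_eq (ℓ : ℕ) (i j : ZMod ℓ) (lam : Partition') (D : Finset ℤ)
    (hD : ∀ e, g lam e ≠ 0 → e ∈ D)
    (hD2 : ∀ d', g lam d' = -1 → ∀ e, g (remAt lam d') e ≠ 0 → e ∈ D) :
    FqOp ℓ j (EqOp ℓ i (Finsupp.single lam 1))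
      = ∑ d' ∈ D, ∑ d ∈ D,
          (if (g lam d' = -1 ∧ ((d' : ZMod ℓ) = i) ∧ g (remAt lam d') d = 1 ∧ ((d : ZMod ℓ) = j))
          then (qv ^ (-(Nr ℓ i (remAt lam d') d')) * qv ^ (Na ℓ j (remAt lam d') d))
            • Finsupp.single (addAt (remAt lam d') d) (1:K) else 0) := by
  rw [EqOp_single ℓ i lam D hD, map_sum]
  apply Finset.sum_congr rfl
  intro d' _
  by_cases hP : g lam d' = -1 ∧ ((d' : ZMod ℓ) = i)
  · rw [if_pos hP, map_smul, FqOp_single ℓ j (remAt lam d') D (hD2 d' hP.1), Finset.smul_sum]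
    apply Finset.sum_congr rfl
    intro d _
    by_cases hQ : g (remAt lam d') d = 1 ∧ ((d : ZMod ℓ) = j)
    · rw [if_pos hQ, if_pos ⟨hP.1, hP.2, hQ.1, hQ.2⟩, smul_smul]
    · rw [if_neg hQ, smul_zero, if_neg (by tauto)]
  · rw [if_neg hP, map_zero]
    symm
    apply Finset.sum_eq_zero
    intro d _
    rw [if_neg (by tauto)]

end MM
namespace MM

open Classical

noncomputable def DI (lam : Partition') : Finset ℤ :=
  Finset.Icc (-(NB lam : ℤ) - 3) ((lam.part 0 : ℤ) + 2)

theorem hD_std (lam : Partition') : ∀ e, g lam e ≠ 0 → e ∈ DI lam := by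
  intro e he
  have := g_supp lam he
  rw [DI, Finset.mem_Icc]
  omega

theorem hD2a_std (lam : Partition') :
    ∀ d, g lam d = 1 → ∀ e, g (addAt lam d) e ≠ 0 → e ∈ DI lam := by
  intro d hd e he
  have hdb := g_supp lam (by omega : g lam d ≠ 0)
  rcases g_supp_addAt ((addable_iff_g lam d).mpr hd) he with h | h | h | h
  · exact hD_std lam e h
  all_goals rw [DI, Finset.mem_Icc]; omega

theorem hD2r_std (lam : Partition') :
    ∀ d, g lam d = -1 → ∀ e, g (remAt lam d) e ≠ 0 → e ∈ DI lam := by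
  intro d hd e he
  have hdb := g_supp lam (by omega : g lam d ≠ 0)
  rcases g_supp_remAt ((removable_iff_g lam d).mpr hd) he with h | h | h | h
  · exact hD_std lam e h
  all_goals rw [DI, Finset.mem_Icc]; omega

theorem offdiag (ℓ : ℕ) (i j : ZMod ℓ) (lam : Partition') {d d' : ℤ} (hne : d ≠ d') :
    (if (g lam d = 1 ∧ ((d : ZMod ℓ) = j) ∧ g (addAt lam d) d' = -1 ∧ ((d' : ZMod ℓ) = i))
      then (qv ^ (Na ℓ j lam d) * qv ^ (-(Nr ℓ i (remAt (addAt lam d) d') d')))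
        • Finsupp.single (remAt (addAt lam d) d') (1:K) else 0)
    = (if (g lam d' = -1 ∧ ((d' : ZMod ℓ) = i) ∧ g (remAt lam d') d = 1 ∧ ((d : ZMod ℓ) = j))
      then (qv ^ (-(Nr ℓ i (remAt lam d') d')) * qv ^ (Na ℓ j (remAt lam d') d))
        • Finsupp.single (addAt (remAt lam d') d) (1:K) else 0) := by
  by_cases hC : (g lam d = 1 ∧ g lam d' = -1 ∧ ((d : ZMod ℓ) = j) ∧ ((d' : ZMod ℓ) = i)
      ∧ d' ≠ d - 1 ∧ d' ≠ d + 1)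
  · obtain ⟨h1, h2, h3, h4, h5, h6⟩ := hC
    have hdb := g_supp lam (by omega : g lam d ≠ 0)
    have hdb' := g_supp lam (by omega : g lam d' ≠ 0)
    have hm1 : d - 1 ∈ DI lam := by rw [DI, Finset.mem_Icc]; omega
    have hp1 : d + 1 ∈ DI lam := by rw [DI, Finset.mem_Icc]; omega
    have hm1' : d' - 1 ∈ DI lam := by rw [DI, Finset.mem_Icc]; omega
    have hp1' : d' + 1 ∈ DI lam := by rw [DI, Finset.mem_Icc]; omega
    have hexpo := expo_eq ℓ i j lam (DI lam) (hD_std lam) (hD2r_std lam d' h2)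
      h1 h2 h3 h4 hm1 hp1 hm1' hp1' h5 (Ne.symm hne) h6
    have hpart := commute_boxes h1 h2 h5 (Ne.symm hne) h6
    rw [if_pos ((condEF_iff ℓ i j lam hne).mpr ⟨h1, h2, h3, h4, h5, h6⟩),
      if_pos ((condFE_iff ℓ i j lam hne).mpr ⟨h1, h2, h3, h4, h5, h6⟩), zp, zp]
    rw [hpart] at hexpo ⊢
    rw [show Na ℓ j lam d + -(Nr ℓ i (addAt (remAt lam d') d) d')
        = -(Nr ℓ i (remAt lam d') d') + Na ℓ j (remAt lam d') d from by linarith [hexpo]]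
  · rw [if_neg (fun h => hC ((condEF_iff ℓ i j lam hne).mp h)),
      if_neg (fun h => hC ((condFE_iff ℓ i j lam hne).mp h))]

theorem one_ne_zero_zmod {ℓ : ℕ} (hℓ : 2 ≤ ℓ) : (1 : ZMod ℓ) ≠ 0 := by
  intro h
  have hne : NeZero ℓ := ⟨by omega⟩
  have h1 : ((1 : ℕ) : ZMod ℓ) = 0 := by exact_mod_cast h
  rw [ZMod.natCast_eq_zero_iff] at h1
  exact absurd (Nat.le_of_dvd one_pos h1) (by omega)

theorem NaNr_remAt_self (ℓ : ℕ) (hℓ : 2 ≤ ℓ) (i : ZMod ℓ) (lam : Partition') {d : ℤ}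
    (hg : g lam d = -1) (hci : (d : ZMod ℓ) = i) :
    Na ℓ i (remAt lam d) d = Na ℓ i lam d ∧ Nr ℓ i (remAt lam d) d = Nr ℓ i lam d := by
  have hrem : RemovableDiag lam d := (removable_iff_g lam d).mpr hg
  have hone := one_ne_zero_zmod hℓ
  have hnm : ∀ e : ℤ, (e : ZMod ℓ) = i → e ≠ d - 1 ∧ e ≠ d + 1 := by
    intro e hce
    constructor
    · intro hc
      subst hc
      push_cast at hce
      rw [hci] at hce
      exact hone (by linear_combination - hce)
    · intro hc
      subst hc
      push_cast at hce
      rw [hci] at hce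
      exact hone (by linear_combination hce)
  have hptA : ∀ e ∈ DI lam, (if ((e : ZMod ℓ) = i ∧ d < e) then g (remAt lam d) e else 0)
      = (if ((e : ZMod ℓ) = i ∧ d < e) then g lam e else 0) := by
    intro e _
    by_cases hc : ((e : ZMod ℓ) = i ∧ d < e)
    · rw [if_pos hc, if_pos hc, g_remAt hrem e, if_neg (hnm e hc.1).1,
        if_neg (by omega : ¬ e = d), if_neg (hnm e hc.1).2]
      ring
    · rw [if_neg hc, if_neg hc]
  have hptR : ∀ e ∈ DI lam, (if ((e : ZMod ℓ) = i ∧ e < d) then g (remAt lam d) e else 0)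
      = (if ((e : ZMod ℓ) = i ∧ e < d) then g lam e else 0) := by
    intro e _
    by_cases hc : ((e : ZMod ℓ) = i ∧ e < d)
    · rw [if_pos hc, if_pos hc, g_remAt hrem e, if_neg (hnm e hc.1).1,
        if_neg (by omega : ¬ e = d), if_neg (hnm e hc.1).2]
      ring
    · rw [if_neg hc, if_neg hc]
  constructor
  · rw [Na_eq_sum ℓ i (remAt lam d) d (DI lam) (hD2r_std lam d hg),
      Na_eq_sum ℓ i lam d (DI lam) (hD_std lam), Finset.sum_congr rfl hptA]
  · rw [Nr_eq_sum ℓ i (remAt lam d) d (DI lam) (hD2r_std lam d hg),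
      Nr_eq_sum ℓ i lam d (DI lam) (hD_std lam), Finset.sum_congr rfl hptR]

theorem diag_term (ℓ : ℕ) (hℓ : 2 ≤ ℓ) (i : ZMod ℓ) (lam : Partition') (d : ℤ) :
    (if (g lam d = 1 ∧ ((d : ZMod ℓ) = i) ∧ g (addAt lam d) d = -1 ∧ ((d : ZMod ℓ) = i))
      then (qv ^ (Na ℓ i lam d) * qv ^ (-(Nr ℓ i (remAt (addAt lam d) d) d)))
        • Finsupp.single (remAt (addAt lam d) d) (1:K) else 0)
    - (if (g lam d = -1 ∧ ((d : ZMod ℓ) = i) ∧ g (remAt lam d) d = 1 ∧ ((d : ZMod ℓ) = i))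
      then (qv ^ (-(Nr ℓ i (remAt lam d) d)) * qv ^ (Na ℓ i (remAt lam d) d))
        • Finsupp.single (addAt (remAt lam d) d) (1:K) else 0)
    = ((if (g lam d = 1 ∧ ((d : ZMod ℓ) = i)) then qv ^ (Na ℓ i lam d + -(Nr ℓ i lam d)) else 0)
        - (if (g lam d = -1 ∧ ((d : ZMod ℓ) = i)) then qv ^ (-(Nr ℓ i lam d) + Na ℓ i lam d) else 0))
      • Finsupp.single lam (1:K) := by
  have hiff1 : (g lam d = 1 ∧ ((d : ZMod ℓ) = i) ∧ g (addAt lam d) d = -1 ∧ ((d : ZMod ℓ) = i))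
      ↔ (g lam d = 1 ∧ ((d : ZMod ℓ) = i)) := by
    constructor
    · rintro ⟨a, b, -, -⟩; exact ⟨a, b⟩
    · rintro ⟨a, b⟩
      refine ⟨a, b, ?_, b⟩
      rw [g_addAt ((addable_iff_g lam d).mpr a) d, if_neg (by omega : ¬ d = d - 1), if_pos rfl,
        if_neg (by omega : ¬ d = d + 1)]
      omega
  have hiff2 : (g lam d = -1 ∧ ((d : ZMod ℓ) = i) ∧ g (remAt lam d) d = 1 ∧ ((d : ZMod ℓ) = i))
      ↔ (g lam d = -1 ∧ ((d : ZMod ℓ) = i)) := by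
    constructor
    · rintro ⟨a, b, -, -⟩; exact ⟨a, b⟩
    · rintro ⟨a, b⟩
      refine ⟨a, b, ?_, b⟩
      rw [g_remAt ((removable_iff_g lam d).mpr a) d, if_neg (by omega : ¬ d = d - 1), if_pos rfl,
        if_neg (by omega : ¬ d = d + 1)]
      omega
  rw [if_congr hiff1 rfl rfl, if_congr hiff2 rfl rfl, sub_smul]
  congr 1
  · by_cases hc : (g lam d = 1 ∧ ((d : ZMod ℓ) = i))
    · rw [if_pos hc, if_pos hc, remAt_addAt ((addable_iff_g lam d).mpr hc.1), zp]
    · rw [if_neg hc, if_neg hc, zero_smul]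
  · by_cases hc : (g lam d = -1 ∧ ((d : ZMod ℓ) = i))
    · rw [if_pos hc, if_pos hc, addAt_remAt ((removable_iff_g lam d).mpr hc.1),
        (NaNr_remAt_self ℓ hℓ i lam hc.1 hc.2).1, (NaNr_remAt_self ℓ hℓ i lam hc.1 hc.2).2, zp]
    · rw [if_neg hc, if_neg hc, zero_smul]

end MM
namespace MM

open Classical

theorem scalar_sum (ℓ : ℕ) (i : ZMod ℓ) (lam : Partition') (L H : ℤ)
    (hD : ∀ e, g lam e ≠ 0 → e ∈ Finset.Icc L H) (hLH : L ≤ H + 1) :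
    (∑ d ∈ Finset.Icc L H,
      ((if (g lam d = 1 ∧ ((d : ZMod ℓ) = i)) then qv ^ (Na ℓ i lam d + -(Nr ℓ i lam d)) else 0)
        - (if (g lam d = -1 ∧ ((d : ZMod ℓ) = i)) then qv ^ (-(Nr ℓ i lam d) + Na ℓ i lam d) else 0)))
    = (qv - qv⁻¹)⁻¹ * (qv ^ ((ai ℓ i lam : ℤ) - (ri ℓ i lam : ℤ))
        - qv ^ ((ri ℓ i lam : ℤ) - (ai ℓ i lam : ℤ))) := by
  set T : ℤ → ℤ :=
    fun t => ∑ e ∈ Finset.Icc L H, if ((e : ZMod ℓ) = i ∧ t ≤ e) then g lam e else 0 with hT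
  have hm : (ai ℓ i lam : ℤ) - (ri ℓ i lam : ℤ) = T L := by
    rw [airi_eq_sum ℓ i lam (Finset.Icc L H) hD, hT]
    apply Finset.sum_congr rfl
    intro e he
    rw [Finset.mem_Icc] at he
    exact if_congr (and_iff_left (by omega)).symm rfl rfl
  have hNa : ∀ d : ℤ, Na ℓ i lam d = T (d + 1) := by
    intro d
    rw [Na_eq_sum ℓ i lam d (Finset.Icc L H) hD, hT]
    apply Finset.sum_congr rfl
    intro e _
    exact if_congr (by constructor <;> exact fun h => ⟨h.1, by omega⟩) rfl rfl
  have hNr : ∀ d : ℤ, Nr ℓ i lam d = T L - T d := by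
    intro d
    rw [Nr_eq_sum ℓ i lam d (Finset.Icc L H) hD, hT, ← Finset.sum_sub_distrib]
    apply Finset.sum_congr rfl
    intro e he
    rw [Finset.mem_Icc] at he
    by_cases hcol : (e : ZMod ℓ) = i
    · simp only [hcol, eq_self_iff_true, true_and]
      split_ifs <;> omega
    · simp only [hcol, false_and, if_false]
      ring
  have hstep : ∀ d ∈ Finset.Icc L H,
      T d = T (d + 1) + (if ((d : ZMod ℓ) = i) then g lam d else 0) := by
    intro d hd
    have h1 : T d - T (d + 1)
        = ∑ e ∈ Finset.Icc L H,
            (if ((e : ZMod ℓ) = i) then (if e = d then g lam d else 0) else 0) := by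
      rw [hT, ← Finset.sum_sub_distrib]
      apply Finset.sum_congr rfl
      intro e _
      by_cases hcol : (e : ZMod ℓ) = i
      · simp only [hcol, eq_self_iff_true, true_and]
        by_cases hed : e = d
        · subst hed
          split_ifs <;> omega
        · split_ifs <;> omega
      · simp only [hcol, false_and, if_false]
        ring
    rw [sum_delta (Finset.Icc L H) (fun e => (e : ZMod ℓ) = i) d (g lam d)] at h1
    have h2 : (if (d ∈ Finset.Icc L H ∧ (d : ZMod ℓ) = i) then g lam d else 0)
        = (if ((d : ZMod ℓ) = i) then g lam d else 0) :=
      if_congr (and_iff_right hd) rfl rfl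
    omega
  have hTH : T (H + 1) = 0 := by
    apply Finset.sum_eq_zero
    intro e he
    rw [Finset.mem_Icc] at he
    rw [if_neg]
    rintro ⟨-, h⟩
    omega
  have hfac : (qv - qv⁻¹) * qv ^ ((ai ℓ i lam : ℤ) - (ri ℓ i lam : ℤ)) ≠ 0 :=
    mul_ne_zero qsub_ne_zero (zpow_ne_zero _ qv_ne_zero)
  set m := (ai ℓ i lam : ℤ) - (ri ℓ i lam : ℤ) with hmdef
  have e1 : (qv - qv⁻¹) * qv ^ m = qv ^ (m + 1) - qv ^ (m - 1) := by
    rw [sub_mul, zpow_add_one₀ qv_ne_zero, zpow_sub_one₀ qv_ne_zero]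
    ring
  have per : ∀ d ∈ Finset.Icc L H,
      ((if (g lam d = 1 ∧ ((d : ZMod ℓ) = i)) then qv ^ (Na ℓ i lam d + -(Nr ℓ i lam d)) else 0)
        - (if (g lam d = -1 ∧ ((d : ZMod ℓ) = i)) then qv ^ (-(Nr ℓ i lam d) + Na ℓ i lam d) else 0))
        * ((qv - qv⁻¹) * qv ^ m)
      = qv ^ (2 * T d) - qv ^ (2 * T (d + 1)) := by
    intro d hd
    have hstepd := hstep d hd
    by_cases hcol : (d : ZMod ℓ) = i
    · rw [if_pos hcol] at hstepd
      rcases g_mem lam d with hg | hg | hg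
      · rw [hg] at hstepd
        rw [if_neg (by rintro ⟨h, -⟩; omega), if_pos ⟨hg, hcol⟩, hNa d, hNr d, e1, zero_sub,
          neg_mul, mul_sub, zp, zp,
          show -(T L - T d) + T (d + 1) + (m + 1) = 2 * T (d + 1) from by omega,
          show -(T L - T d) + T (d + 1) + (m - 1) = 2 * T d from by omega]
        ring
      · rw [hg] at hstepd
        rw [if_neg (by rintro ⟨h, -⟩; omega), if_neg (by rintro ⟨h, -⟩; omega),
          show 2 * T d = 2 * T (d + 1) from by omega]
        ring
      · rw [hg] at hstepd
        rw [if_pos ⟨hg, hcol⟩, if_neg (by rintro ⟨h, -⟩; omega), hNa d, hNr d, e1, sub_zero,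
          mul_sub, zp, zp,
          show T (d + 1) + -(T L - T d) + (m + 1) = 2 * T d from by omega,
          show T (d + 1) + -(T L - T d) + (m - 1) = 2 * T (d + 1) from by omega]
    · rw [if_neg hcol] at hstepd
      rw [if_neg (by tauto), if_neg (by tauto),
        show 2 * T d = 2 * T (d + 1) from by omega]
      ring
  rw [show (ri ℓ i lam : ℤ) - (ai ℓ i lam : ℤ) = -m from by omega]
  apply mul_right_cancel₀ hfac
  rw [Finset.sum_mul, Finset.sum_congr rfl per,
    sum_tele (fun t => qv ^ (2 * T t)) L H hLH, hTH, ← hm,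
    show (2 : ℤ) * 0 = 0 from by ring, zpow_zero,
    show (qv - qv⁻¹)⁻¹ * (qv ^ m - qv ^ (-m)) * ((qv - qv⁻¹) * qv ^ m)
      = ((qv - qv⁻¹)⁻¹ * (qv - qv⁻¹)) * ((qv ^ m - qv ^ (-m)) * qv ^ m) from by ring,
    inv_mul_cancel₀ qsub_ne_zero, one_mul, sub_mul, zp, zp,
    show m + m = 2 * m from by ring, show -m + m = (0 : ℤ) from by ring, zpow_zero]

theorem K_single (ℓ : ℕ) (i : ZMod ℓ) (lam : Partition') :
    KqOp ℓ i (Finsupp.single lam 1)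
      = (qv ^ ((ai ℓ i lam : ℤ) - (ri ℓ i lam : ℤ))) • Finsupp.single lam (1:K) := by
  rw [KqOp, Finsupp.lift_apply, Finsupp.sum_single_index, one_smul]
  exact zero_smul K _

theorem KInv_single (ℓ : ℕ) (i : ZMod ℓ) (lam : Partition') :
    KqInvOp ℓ i (Finsupp.single lam 1)
      = (qv ^ ((ri ℓ i lam : ℤ) - (ai ℓ i lam : ℤ))) • Finsupp.single lam (1:K) := by
  rw [KqInvOp, Finsupp.lift_apply, Finsupp.sum_single_index, one_smul]
  exact zero_smul K _

theorem key1 (ℓ : ℕ) (hℓ : 2 ≤ ℓ) (i : ZMod ℓ) (lam : Partition') :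
    EqOp ℓ i (FqOp ℓ i (Finsupp.single lam 1)) - FqOp ℓ i (EqOp ℓ i (Finsupp.single lam 1))
      = ((qv - qv⁻¹)⁻¹ * (qv ^ ((ai ℓ i lam : ℤ) - (ri ℓ i lam : ℤ))
          - qv ^ ((ri ℓ i lam : ℤ) - (ai ℓ i lam : ℤ)))) • Finsupp.single lam (1:K) := by
  rw [EF_eq ℓ i i lam (DI lam) (hD_std lam) (hD2a_std lam),
    FE_eq ℓ i i lam (DI lam) (hD_std lam) (hD2r_std lam), Finset.sum_comm,
    ← Finset.sum_sub_distrib,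
    ← scalar_sum ℓ i lam (-(NB lam : ℤ) - 3) ((lam.part 0 : ℤ) + 2)
      (fun e he => by have := hD_std lam e he; rwa [DI] at this) (by omega)]
  have hDI : DI lam = Finset.Icc (-(NB lam : ℤ) - 3) ((lam.part 0 : ℤ) + 2) := rfl
  rw [← hDI, Finset.sum_smul]
  apply Finset.sum_congr rfl
  intro d hd
  rw [← Finset.sum_sub_distrib]
  rw [Finset.sum_eq_single d]
  · exact diag_term ℓ hℓ i lam d
  · intro y _ hy
    rw [offdiag ℓ i i lam hy, sub_self]
  · intro hcon
    exact absurd hd hcon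

theorem key2 (ℓ : ℕ) (hℓ : 2 ≤ ℓ) (i j : ZMod ℓ) (hij : i ≠ j) (lam : Partition') :
    EqOp ℓ i (FqOp ℓ j (Finsupp.single lam 1))
      = FqOp ℓ j (EqOp ℓ i (Finsupp.single lam 1)) := by
  rw [EF_eq ℓ i j lam (DI lam) (hD_std lam) (hD2a_std lam),
    FE_eq ℓ i j lam (DI lam) (hD_std lam) (hD2r_std lam), Finset.sum_comm]
  apply Finset.sum_congr rfl
  intro d _
  apply Finset.sum_congr rfl
  intro d' _
  by_cases hne : d' = d
  · subst hne
    rw [if_neg, if_neg]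
    · rintro ⟨-, h2, -, h4⟩
      exact hij (h2.symm.trans h4)
    · rintro ⟨-, h2, -, h4⟩
      exact hij (h4.symm.trans h2)
  · exact offdiag ℓ i j lam hne

end MM
theorem stmt18 (ℓ : ℕ) (hℓ : 2 ≤ ℓ) :
    (∀ i : ZMod ℓ,
      EqOp ℓ i ∘ₗ FqOp ℓ i - FqOp ℓ i ∘ₗ EqOp ℓ i
        = ((qv - qv⁻¹)⁻¹ : K) • (KqOp ℓ i - KqInvOp ℓ i)) ∧
    (∀ i j : ZMod ℓ, i ≠ j → EqOp ℓ i ∘ₗ FqOp ℓ j = FqOp ℓ j ∘ₗ EqOp ℓ i) := by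
  constructor
  · intro i
    apply Finsupp.lhom_ext
    intro lam b
    have hb : (Finsupp.single lam b : Fq) = b • Finsupp.single lam 1 := by
      rw [Finsupp.smul_single, smul_eq_mul, mul_one]
    rw [hb]
    simp only [LinearMap.sub_apply, LinearMap.comp_apply, LinearMap.smul_apply, map_smul]
    rw [MM.key1 ℓ hℓ i lam, MM.K_single, MM.KInv_single, ← sub_smul,
      smul_smul, smul_smul, smul_smul]
    congr 1
    ring
  · intro i j hij
    apply Finsupp.lhom_ext
    intro lam b
    have hb : (Finsupp.single lam b : Fq) = b • Finsupp.single lam 1 := by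
      rw [Finsupp.smul_single, smul_eq_mul, mul_one]
    rw [hb]
    simp only [LinearMap.comp_apply, map_smul]
    rw [MM.key2 ℓ hℓ i j hij lam]
end
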